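/- arXiv:2406.10077 — 9 statements merged into one kernel-verified Lean document; each statement's English description precedes it below -/
import Mathlib

section
/- Let L be an n-dimensional Lie algebra over a field F whose derived subalgebra L² = [L,L] has dimension 1. Then L is isomorphic either to the direct sum H(m) ⊕ A(n-2m-1) for some m ≥ 1, or to the direct sum of the two-dimensional non-abelian Lie algebra ⟨x, y | [x,y] = x⟩ with A(n-2). -/
/-- Product of two Lie rings. -/
instance prodLieRing (L M : Type*) [LieRing L] [LieRing M] : LieRing (L × M) where
  bracket a b := (⁅a.1, b.1⁆, ⁅a.2, b.2⁆)
  add_lie x y z := by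
    show (⁅x.1 + y.1, z.1⁆, ⁅x.2 + y.2, z.2⁆) = (⁅x.1, z.1⁆ + ⁅y.1, z.1⁆, ⁅x.2, z.2⁆ + ⁅y.2, z.2⁆)
    simp [add_lie]
  lie_add x y z := by
    show (⁅x.1, y.1 + z.1⁆, ⁅x.2, y.2 + z.2⁆) = (⁅x.1, y.1⁆ + ⁅x.1, z.1⁆, ⁅x.2, y.2⁆ + ⁅x.2, z.2⁆)
    simp [lie_add]
  lie_self x := by
    show (⁅x.1, x.1⁆, ⁅x.2, x.2⁆) = (0, 0)
    simp [lie_smul]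
  leibniz_lie x y z := by
    show (⁅x.1, ⁅y.1, z.1⁆⁆, ⁅x.2, ⁅y.2, z.2⁆⁆) =
      (⁅⁅x.1, y.1⁆, z.1⁆, ⁅⁅x.2, y.2⁆, z.2⁆) + (⁅y.1, ⁅x.1, z.1⁆⁆, ⁅y.2, ⁅x.2, z.2⁆⁆)
    simp [lie_smul]

instance prodLieAlgebra (R L M : Type*) [CommRing R] [LieRing L] [LieRing M]
    [LieAlgebra R L] [LieAlgebra R M] : LieAlgebra R (L × M) where
  lie_smul t x y := by
    show (⁅x.1, t • y.1⁆, ⁅x.2, t • y.2⁆) = (t • ⁅x.1, y.1⁆, t • ⁅x.2, y.2⁆)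
    simp only [Prod.mk.injEq]
    constructor <;> apply lie_smul

/-! ### The abelian Lie algebra `A(k)` -/

/-- The abelian Lie algebra of dimension `k` over `F`. -/
def AbelianLie (F : Type*) (k : ℕ) : Type _ := Fin k → F

namespace AbelianLie
variable {F : Type*} [Field F] {k : ℕ}

instance : AddCommGroup (AbelianLie F k) := inferInstanceAs (AddCommGroup (Fin k → F))
instance : Module F (AbelianLie F k) := inferInstanceAs (Module F (Fin k → F))

instance : LieRing (AbelianLie F k) where
  bracket _ _ := 0
  add_lie _ _ _ := by simp
  lie_add _ _ _ := by simp
  lie_self _ := rfl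
  leibniz_lie _ _ _ := by simp

instance : LieAlgebra F (AbelianLie F k) :=
  { (inferInstanceAs (Module F (AbelianLie F k)) : Module F (AbelianLie F k)) with
    lie_smul := fun t x y => by show (0 : AbelianLie F k) = t • (0 : AbelianLie F k); simp }

instance [Fintype F] : Fintype (AbelianLie F k) := inferInstanceAs (Fintype (Fin k → F))

end AbelianLie

/-! ### The Heisenberg Lie algebra `H(m)` of dimension `2m+1` -/

/-- The Heisenberg Lie algebra of dimension `2m+1`: carrier `(Fin m → F) × (Fin m → F) × F`,
with basis `x_1, …, x_m, y_1, …, y_m, z` and the only nonzero brackets `⁅x_i, y_i⁆ = z`. -/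
def Heisenberg (F : Type*) (m : ℕ) : Type _ := (Fin m → F) × (Fin m → F) × F

namespace Heisenberg
variable {F : Type*} [Field F] {m : ℕ}

instance : AddCommGroup (Heisenberg F m) :=
  inferInstanceAs (AddCommGroup ((Fin m → F) × (Fin m → F) × F))
instance : Module F (Heisenberg F m) :=
  inferInstanceAs (Module F ((Fin m → F) × (Fin m → F) × F))

/-- The Lie bracket on the Heisenberg algebra:
`⁅(x, y, z), (x', y', z')⁆ = (0, 0, ∑ i, (x i * y' i - x' i * y i))`. -/
def br (a b : Heisenberg F m) : Heisenberg F m :=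
  (0, 0, ∑ i, (a.1 i * b.2.1 i - b.1 i * a.2.1 i))

instance : LieRing (Heisenberg F m) where
  bracket := br
  add_lie x y z := by
    show ((0, 0, ∑ i, ((x.1 i + y.1 i) * z.2.1 i - z.1 i * (x.2.1 i + y.2.1 i))) :
        (Fin m → F) × (Fin m → F) × F) =
      (0 + 0, 0 + 0, (∑ i, (x.1 i * z.2.1 i - z.1 i * x.2.1 i)) +
        ∑ i, (y.1 i * z.2.1 i - z.1 i * y.2.1 i))
    rw [← Finset.sum_add_distrib]
    refine Prod.ext (by simp) (Prod.ext (by simp) ?_)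
    dsimp only
    exact Finset.sum_congr rfl fun i _ => by ring
  lie_add x y z := by
    show ((0, 0, ∑ i, (x.1 i * (y.2.1 i + z.2.1 i) - (y.1 i + z.1 i) * x.2.1 i)) :
        (Fin m → F) × (Fin m → F) × F) =
      (0 + 0, 0 + 0, (∑ i, (x.1 i * y.2.1 i - y.1 i * x.2.1 i)) +
        ∑ i, (x.1 i * z.2.1 i - z.1 i * x.2.1 i))
    rw [← Finset.sum_add_distrib]
    refine Prod.ext (by simp) (Prod.ext (by simp) ?_)
    dsimp only
    exact Finset.sum_congr rfl fun i _ => by ring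
  lie_self x := by
    show ((0, 0, ∑ i, (x.1 i * x.2.1 i - x.1 i * x.2.1 i)) :
        (Fin m → F) × (Fin m → F) × F) = (0, 0, 0)
    simp
  leibniz_lie x y z := by
    show br x (br y z) = br (br x y) z + br y (br x z)
    unfold br
    refine Prod.ext (by exact (add_zero (0 : Fin m → F)).symm)
      (Prod.ext (by exact (add_zero (0 : Fin m → F)).symm) ?_)
    show _ = (_ : F) + _
    simp

instance : LieAlgebra F (Heisenberg F m) :=
  { (inferInstanceAs (Module F (Heisenberg F m)) : Module F (Heisenberg F m)) with
    lie_smul := fun t x y => by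
      show ((0, 0, ∑ i, (x.1 i * (t • y.2.1) i - (t • y.1) i * x.2.1 i)) :
          (Fin m → F) × (Fin m → F) × F) =
        (t • (0 : Fin m → F), t • (0 : Fin m → F), t • ∑ i, (x.1 i * y.2.1 i - y.1 i * x.2.1 i))
      refine Prod.ext (by simp) (Prod.ext (by simp) ?_)
      dsimp only
      rw [Finset.smul_sum]
      refine Finset.sum_congr rfl fun i _ => ?_
      show x.1 i * (t * y.2.1 i) - t * y.1 i * x.2.1 i = t * (x.1 i * y.2.1 i - y.1 i * x.2.1 i)
      ring }

instance [Fintype F] : Fintype (Heisenberg F m) :=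
  inferInstanceAs (Fintype ((Fin m → F) × (Fin m → F) × F))

end Heisenberg

/-! ### The two-dimensional non-abelian Lie algebra `⟨x, y ∣ ⁅x, y⁆ = x⟩` -/

/-- The two-dimensional non-abelian Lie algebra over `F`, with basis `x = (1,0)`, `y = (0,1)`
and bracket `⁅x, y⁆ = x`. -/
def TwoDimNonAbelian (F : Type*) : Type _ := F × F

namespace TwoDimNonAbelian
variable {F : Type*} [Field F]

instance : AddCommGroup (TwoDimNonAbelian F) := inferInstanceAs (AddCommGroup (F × F))
instance : Module F (TwoDimNonAbelian F) := inferInstanceAs (Module F (F × F))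

/-- The bracket: `⁅(a₁, a₂), (b₁, b₂)⁆ = (a₁ b₂ - a₂ b₁) • (1, 0)`. -/
def br (a b : TwoDimNonAbelian F) : TwoDimNonAbelian F := (a.1 * b.2 - a.2 * b.1, 0)

instance : LieRing (TwoDimNonAbelian F) where
  bracket := br
  add_lie x y z := by
    show (((x.1 + y.1) * z.2 - (x.2 + y.2) * z.1, 0) : F × F) =
      (x.1 * z.2 - x.2 * z.1 + (y.1 * z.2 - y.2 * z.1), 0 + 0)
    exact Prod.ext (by ring) (by simp)
  lie_add x y z := by
    show ((x.1 * (y.2 + z.2) - x.2 * (y.1 + z.1), 0) : F × F) =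
      (x.1 * y.2 - x.2 * y.1 + (x.1 * z.2 - x.2 * z.1), 0 + 0)
    exact Prod.ext (by ring) (by simp)
  lie_self x := by
    show ((x.1 * x.2 - x.2 * x.1, 0) : F × F) = (0, 0)
    exact Prod.ext (by ring) rfl
  leibniz_lie x y z := by
    show ((x.1 * (0 : F) - x.2 * (y.1 * z.2 - y.2 * z.1), 0) : F × F) =
      ((x.1 * y.2 - x.2 * y.1) * z.2 - (0 : F) * z.1 + (y.1 * (0 : F) - y.2 * (x.1 * z.2 - x.2 * z.1)),
       0 + 0)
    exact Prod.ext (by ring) (by simp)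

instance : LieAlgebra F (TwoDimNonAbelian F) :=
  { (inferInstanceAs (Module F (TwoDimNonAbelian F)) : Module F (TwoDimNonAbelian F)) with
    lie_smul := fun t x y => by
      show ((x.1 * (t * y.2) - x.2 * (t * y.1), 0) : F × F) =
        (t * (x.1 * y.2 - x.2 * y.1), t * 0)
      exact Prod.ext (by ring) (by simp) }

instance [Fintype F] : Fintype (TwoDimNonAbelian F) := inferInstanceAs (Fintype (F × F))

end TwoDimNonAbelian


section Helpers

open Module LinearMap

variable {F : Type*} [Field F]


/-- Prepend a coordinate: linear version of `Fin.cons`. -/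
def finConsLinearEquiv (F : Type*) [Field F] (m : ℕ) :
    (F × (Fin m → F)) ≃ₗ[F] (Fin (m + 1) → F) where
  toFun p := Fin.cons p.1 p.2
  map_add' p q := by
    funext i
    refine Fin.cases ?_ ?_ i <;> simp
  map_smul' c p := by
    funext i
    refine Fin.cases ?_ ?_ i <;> simp
  invFun h := (h 0, Fin.tail h)
  left_inv p := by simp [Fin.tail]
  right_inv h := by simp [Fin.cons_self_tail]

lemma exists_equiv_single {V : Type*} [AddCommGroup V] [Module F V] [FiniteDimensional F V]
    {k : ℕ} (hk : finrank F V = k + 1) {r : V} (hr : r ≠ 0) :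
    ∃ e : V ≃ₗ[F] F × (Fin k → F), e r = (1, 0) := by
  set U := Submodule.span F {r} with hU
  obtain ⟨U', hc⟩ := Submodule.exists_isCompl U
  have hU1 : finrank F U = 1 := finrank_span_singleton hr
  have hU' : finrank F U' = k := by
    have := Submodule.finrank_add_eq_of_isCompl hc
    omega
  let e1 : (U × U') ≃ₗ[F] V := Submodule.prodEquivOfIsCompl U U' hc
  let e2 : U ≃ₗ[F] F := (LinearEquiv.toSpanNonzeroSingleton F V r hr).symm
  let e3 : U' ≃ₗ[F] (Fin k → F) := (Module.finBasisOfFinrankEq F U' hU').equivFun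
  refine ⟨e1.symm.trans (LinearEquiv.prodCongr e2 e3), ?_⟩
  have h1 : e1.symm r = (⟨r, Submodule.mem_span_singleton_self r⟩, 0) := by
    have : (⟨r, Submodule.mem_span_singleton_self r⟩ : U) = (⟨r, Submodule.mem_span_singleton_self r⟩ : U) := rfl
    exact Submodule.prodEquivOfIsCompl_symm_apply_left U U' hc
      ⟨r, Submodule.mem_span_singleton_self r⟩
  simp only [LinearEquiv.trans_apply, h1, LinearEquiv.prodCongr_apply, Prod.map]
  refine Prod.ext ?_ (by simp)
  · show e2 _ = 1
    have := LinearEquiv.toSpanNonzeroSingleton_one F V r hr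
    simp only [e2]
    rw [← this, LinearEquiv.symm_apply_apply]


lemma symplectic_split {V : Type*} [AddCommGroup V] [Module F V]
    (f : V →ₗ[F] V →ₗ[F] F) (halt : ∀ a, f a a = 0) {u v : V} (huv : f u v = 1) :
    ∃ e : V ≃ₗ[F] (F × F) × ↥(LinearMap.ker (f u) ⊓ LinearMap.ker (f v)),
      (∀ a, (e a).1.1 = -(f v a)) ∧ (∀ a, (e a).1.2 = f u a) ∧
      (∀ a, ((e a).2 : V) = a + f v a • u - f u a • v) ∧
      (∀ a b, f a b = (e a).1.1 * (e b).1.2 - (e b).1.1 * (e a).1.2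
        + f ((e a).2 : V) ((e b).2 : V)) := by
  have skew : ∀ a b, f b a = -f a b := by
    intro a b
    have h := halt (a + b)
    simp only [map_add, LinearMap.add_apply, halt] at h
    linear_combination h
  have hvu : f v u = -1 := by rw [skew u v, huv]
  set K := LinearMap.ker (f u) ⊓ LinearMap.ker (f v) with hK
  have hmem : ∀ a, a + f v a • u - f u a • v ∈ K := by
    intro a
    rw [hK, Submodule.mem_inf]
    constructor <;>
    · rw [LinearMap.mem_ker]
      simp only [map_add, map_sub, map_smul, smul_eq_mul, halt, huv, hvu]
      ring
  let Φ : V →ₗ[F] (F × F) × K :=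
    ((-(f v)).prod (f u)).prod
      ((LinearMap.id + (f v).smulRight u - (f u).smulRight v).codRestrict K hmem)
  let Ψ : ((F × F) × K) →ₗ[F] V :=
    ((LinearMap.toSpanSingleton F V u).coprod (LinearMap.toSpanSingleton F V v)).coprod K.subtype
  have hΨ : ∀ p : (F × F) × K, Ψ p = p.1.1 • u + p.1.2 • v + (p.2 : V) := by
    intro p
    simp [Ψ, LinearMap.coprod_apply, LinearMap.toSpanSingleton_apply]
  have pf2 : Ψ.comp Φ = LinearMap.id := by
    apply LinearMap.ext
    intro a
    simp only [LinearMap.comp_apply, LinearMap.id_apply, hΨ, Φ, LinearMap.prod_apply,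
      Function.prod, LinearMap.codRestrict_apply, LinearMap.add_apply, LinearMap.sub_apply,
      LinearMap.id_apply, LinearMap.smulRight_apply, LinearMap.neg_apply, LinearMap.coe_neg,
      Pi.neg_apply]
    show -(f v) a • u + (f u) a • v + (a + f v a • u - f u a • v) = a
    module
  have pf1 : Φ.comp Ψ = LinearMap.id := by
    apply LinearMap.ext
    intro p
    obtain ⟨⟨α, β⟩, w⟩ := p
    obtain ⟨hw1, hw2⟩ := Submodule.mem_inf.mp w.2
    rw [LinearMap.mem_ker] at hw1 hw2
    have h1 : f u (Ψ ((α, β), w)) = β := by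
      rw [hΨ]
      simp only [map_add, map_smul, smul_eq_mul, halt, huv, hw1]
      ring
    have h2 : f v (Ψ ((α, β), w)) = -α := by
      rw [hΨ]
      simp only [map_add, map_smul, smul_eq_mul, halt, huv, hvu, hw2]
      ring
    have : Φ (Ψ ((α, β), w)) = ((α, β), w) := by
      refine Prod.ext (Prod.ext ?_ ?_) (Subtype.ext ?_)
      · show -(f v (Ψ ((α, β), w))) = α
        rw [h2]; ring
      · exact h1
      · show Ψ ((α, β), w) + f v (Ψ ((α, β), w)) • u - f u (Ψ ((α, β), w)) • v = (w : V)
        rw [h1, h2, hΨ]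
        module
    simpa using this
  let e : V ≃ₗ[F] (F × F) × K := LinearEquiv.ofLinear Φ Ψ pf1 pf2
  have he1 : ∀ a, (e a).1.1 = -(f v a) := fun a => rfl
  have he2 : ∀ a, (e a).1.2 = f u a := fun a => rfl
  have he3 : ∀ a, ((e a).2 : V) = a + f v a • u - f u a • v := fun a => rfl
  refine ⟨e, he1, he2, he3, ?_⟩
  intro a b
  have hdecomp : ∀ c : V, c = (e c).1.1 • u + (e c).1.2 • v + ((e c).2 : V) := by
    intro c
    have h' : Ψ (Φ c) = c := by rw [← LinearMap.comp_apply, pf2, LinearMap.id_apply]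
    conv_lhs => rw [← h', hΨ]
    rfl
  obtain ⟨hwa1, hwa2⟩ := Submodule.mem_inf.mp ((e a).2).2
  obtain ⟨hwb1, hwb2⟩ := Submodule.mem_inf.mp ((e b).2).2
  rw [LinearMap.mem_ker] at hwa1 hwa2 hwb1 hwb2
  have hfwu : f ((e a).2 : V) u = 0 := by rw [skew u]; rw [hwa1]; ring
  have hfwv : f ((e a).2 : V) v = 0 := by rw [skew v]; rw [hwa2]; ring
  conv_lhs => rw [hdecomp a, hdecomp b]
  simp only [map_add, map_smul, LinearMap.add_apply, LinearMap.smul_apply, smul_eq_mul,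
    halt, huv, hvu, hwb1, hwb2, hfwu, hfwv]
  ring

lemma darboux (n : ℕ) : ∀ (V : Type*) [AddCommGroup V] [Module F V] [FiniteDimensional F V],
    finrank F V = n → ∀ f : V →ₗ[F] V →ₗ[F] F, (∀ a, f a a = 0) →
    ∃ m k, 2 * m + k = n ∧ ∃ e : V ≃ₗ[F] (Fin m → F) × (Fin m → F) × (Fin k → F),
      ∀ a b, f a b = ∑ i, ((e a).1 i * (e b).2.1 i - (e b).1 i * (e a).2.1 i) := by
  induction n using Nat.strong_induction_on with
  | _ n IH =>
  intro V _ _ _ hdim f halt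
  by_cases hf : ∀ a b, f a b = 0
  · refine ⟨0, n, by omega, ?_⟩
    let e0 : V ≃ₗ[F] (Fin n → F) := (finBasisOfFinrankEq F V hdim).equivFun
    let epad : V ≃ₗ[F] (Fin 0 → F) × (Fin 0 → F) × (Fin n → F) :=
      { toFun := fun a => (0, 0, e0 a)
        invFun := fun p => e0.symm p.2.2
        map_add' := fun a b => by simp [Prod.ext_iff]
        map_smul' := fun c a => by simp [Prod.ext_iff]
        left_inv := fun a => by simp
        right_inv := fun p => by
          refine Prod.ext ?_ (Prod.ext ?_ ?_)
          · funext i; exact i.elim0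
          · funext i; exact i.elim0
          · simp }
    refine ⟨epad, ?_⟩
    intro a b
    simp [hf]
  · push_neg at hf
    obtain ⟨u, b0, hab⟩ := hf
    have huv : f u ((f u b0)⁻¹ • b0) = 1 := by
      rw [map_smul, smul_eq_mul, inv_mul_cancel₀ hab]
    set v := (f u b0)⁻¹ • b0 with hv
    obtain ⟨e1, he1, he2, he3, hform⟩ := symplectic_split f halt huv
    have hfr : n = 2 + finrank F ↥(LinearMap.ker (f u) ⊓ LinearMap.ker (f v)) := by
      rw [← hdim, e1.finrank_eq]
      simp [Module.finrank_prod, Module.finrank_self]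
    let K := LinearMap.ker (f u) ⊓ LinearMap.ker (f v)
    let f' : ↥K →ₗ[F] ↥K →ₗ[F] F := f.compl₁₂ K.subtype K.subtype
    obtain ⟨m', k, hmk, e2, hform'⟩ := IH (n - 2) (by omega) ↥(LinearMap.ker (f u) ⊓ LinearMap.ker (f v)) (by omega) f'
      (fun w => halt w)
    refine ⟨m' + 1, k, by omega, ?_⟩
    let ec := finConsLinearEquiv F m'
    let σ : ((F × F) × ((Fin m' → F) × (Fin m' → F) × (Fin k → F))) ≃ₗ[F]
        (Fin (m' + 1) → F) × (Fin (m' + 1) → F) × (Fin k → F) :=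
      { toFun := fun p => (ec (p.1.1, p.2.1), ec (p.1.2, p.2.2.1), p.2.2.2)
        invFun := fun q =>
          (((ec.symm q.1).1, (ec.symm q.2.1).1), ((ec.symm q.1).2, (ec.symm q.2.1).2, q.2.2))
        map_add' := fun p q => by
          refine Prod.ext ?_ (Prod.ext ?_ ?_)
          · exact map_add ec (p.1.1, p.2.1) (q.1.1, q.2.1)
          · exact map_add ec (p.1.2, p.2.2.1) (q.1.2, q.2.2.1)
          · rfl
        map_smul' := fun c p => by
          refine Prod.ext ?_ (Prod.ext ?_ ?_)
          · exact map_smul ec c (p.1.1, p.2.1)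
          · exact map_smul ec c (p.1.2, p.2.2.1)
          · rfl
        left_inv := fun p => by
          simp only [LinearEquiv.symm_apply_apply]
        right_inv := fun q => by
          refine Prod.ext ?_ (Prod.ext ?_ ?_)
          · show ec ((ec.symm q.1).1, (ec.symm q.1).2) = q.1
            rw [show ((ec.symm q.1).1, (ec.symm q.1).2) = ec.symm q.1 from rfl,
              LinearEquiv.apply_symm_apply]
          · show ec ((ec.symm q.2.1).1, (ec.symm q.2.1).2) = q.2.1
            rw [show ((ec.symm q.2.1).1, (ec.symm q.2.1).2) = ec.symm q.2.1 from rfl,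
              LinearEquiv.apply_symm_apply]
          · rfl }
    let e := (e1.trans ((LinearEquiv.refl F (F × F)).prodCongr e2)).trans σ
    refine ⟨e, ?_⟩
    intro a b
    have c1a : (e a).1 = Fin.cons (e1 a).1.1 ((e2 (e1 a).2).1) := rfl
    have c2a : (e a).2.1 = Fin.cons (e1 a).1.2 ((e2 (e1 a).2).2.1) := rfl
    have c1b : (e b).1 = Fin.cons (e1 b).1.1 ((e2 (e1 b).2).1) := rfl
    have c2b : (e b).2.1 = Fin.cons (e1 b).1.2 ((e2 (e1 b).2).2.1) := rfl
    rw [c1a, c2a, c1b, c2b, Fin.sum_univ_succ]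
    simp only [Fin.cons_zero, Fin.cons_succ]
    have key := hform a b
    have key' : f ((e1 a).2 : V) ((e1 b).2 : V)
        = ∑ i, ((e2 (e1 a).2).1 i * (e2 (e1 b).2).2.1 i
          - (e2 (e1 b).2).1 i * (e2 (e1 a).2).2.1 i) := hform' (e1 a).2 (e1 b).2
    rw [key, key']

end Helpers

set_option maxHeartbeats 2000000 in
open Module in
/-- An `n`-dimensional Lie algebra over a field `F` whose derived subalgebra
has dimension `1` is isomorphic to `H(m) ⊕ A(n - 2m - 1)` for some `m ≥ 1`, or to the direct
sum of the two-dimensional non-abelian Lie algebra `⟨x, y ∣ ⁅x, y⁆ = x⟩` with `A(n - 2)`. -/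
theorem stmt0 (F : Type*) [Field F] (L : Type*) [LieRing L] [LieAlgebra F L]
    [Module.Finite F L] (n : ℕ) (hdim : Module.finrank F L = n)
    (hder : Module.finrank F (LieAlgebra.derivedSeries F L 1) = 1) :
    (∃ m : ℕ, 1 ≤ m ∧ 2 * m + 1 ≤ n ∧
      Nonempty (L ≃ₗ⁅F⁆ Heisenberg F m × AbelianLie F (n - 2 * m - 1))) ∨
    (2 ≤ n ∧ Nonempty (L ≃ₗ⁅F⁆ TwoDimNonAbelian F × AbelianLie F (n - 2))) := by
  classical
  have hmem : ∀ a b : L, ⁅a, b⁆ ∈ LieAlgebra.derivedSeries F L 1 := by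
    intro a b
    rw [show (1 : ℕ) = 0 + 1 from rfl, LieAlgebra.derivedSeries_def,
      LieAlgebra.derivedSeriesOfIdeal_succ, LieAlgebra.derivedSeriesOfIdeal_zero]
    exact LieSubmodule.lie_mem_lie (LieSubmodule.mem_top _) (LieSubmodule.mem_top _)
  have hFD : FiniteDimensional F ↥(LieAlgebra.derivedSeries F L 1) :=
    inferInstanceAs (FiniteDimensional F
      ↥(LieSubmodule.toSubmodule (LieAlgebra.derivedSeries F L 1)))
  let ψ : ↥(LieAlgebra.derivedSeries F L 1) ≃ₗ[F] F :=
    (finBasisOfFinrankEq F _ hder).equivFun.trans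
      (LinearEquiv.funUnique (Fin 1) F F)
  set z₀ : ↥(LieAlgebra.derivedSeries F L 1) := ψ.symm 1 with hz₀
  set z : L := (z₀ : L) with hzdef
  have hz0 : z ≠ 0 := by
    intro h
    have : z₀ = 0 := by
      apply Subtype.ext
      simpa [hzdef] using h
    have h1 : (1 : F) = 0 := by
      have := congrArg ψ this
      simpa [hz₀] using this
    exact one_ne_zero h1
  let fb : L →ₗ[F] L →ₗ[F] F := LinearMap.mk₂ F (fun a b => ψ ⟨⁅a, b⁆, hmem a b⟩)
    (fun a a' b => by
      show ψ ⟨⁅a + a', b⁆, hmem _ _⟩ = ψ ⟨⁅a, b⁆, hmem a b⟩ + ψ ⟨⁅a', b⁆, hmem a' b⟩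
      have h : (⟨⁅a + a', b⁆, hmem _ _⟩ : ↥(LieAlgebra.derivedSeries F L 1))
          = ⟨⁅a, b⁆, hmem a b⟩ + ⟨⁅a', b⁆, hmem a' b⟩ := Subtype.ext (add_lie a a' b)
      rw [h, map_add])
    (fun c a b => by
      show ψ ⟨⁅c • a, b⁆, hmem _ _⟩ = c • ψ ⟨⁅a, b⁆, hmem a b⟩
      have h : (⟨⁅c • a, b⁆, hmem _ _⟩ : ↥(LieAlgebra.derivedSeries F L 1))
          = c • ⟨⁅a, b⁆, hmem a b⟩ := Subtype.ext (smul_lie c a b)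
      rw [h, map_smul])
    (fun a b b' => by
      show ψ ⟨⁅a, b + b'⁆, hmem _ _⟩ = ψ ⟨⁅a, b⁆, hmem a b⟩ + ψ ⟨⁅a, b'⁆, hmem a b'⟩
      have h : (⟨⁅a, b + b'⁆, hmem _ _⟩ : ↥(LieAlgebra.derivedSeries F L 1))
          = ⟨⁅a, b⁆, hmem a b⟩ + ⟨⁅a, b'⁆, hmem a b'⟩ := Subtype.ext (lie_add a b b')
      rw [h, map_add])
    (fun c a b => by
      show ψ ⟨⁅a, c • b⁆, hmem _ _⟩ = c • ψ ⟨⁅a, b⁆, hmem a b⟩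
      have h : (⟨⁅a, c • b⁆, hmem _ _⟩ : ↥(LieAlgebra.derivedSeries F L 1))
          = c • ⟨⁅a, b⁆, hmem a b⟩ := Subtype.ext (lie_smul c a b)
      rw [h, map_smul])
  have fbdef : ∀ a b : L, fb a b = ψ ⟨⁅a, b⁆, hmem a b⟩ := fun a b => rfl
  have key : ∀ a b : L, ⁅a, b⁆ = fb a b • z := by
    intro a b
    have h1 : ψ.symm (fb a b) = fb a b • z₀ := by
      rw [hz₀, ← map_smul, smul_eq_mul, mul_one]
    have h2 : (⟨⁅a, b⁆, hmem a b⟩ : ↥(LieAlgebra.derivedSeries F L 1)) = fb a b • z₀ := by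
      rw [← h1, fbdef, LinearEquiv.symm_apply_apply]
    have := congrArg Subtype.val h2
    simpa [hzdef] using this
  have halt : ∀ a : L, fb a a = 0 := by
    intro a
    rw [fbdef]
    have : (⟨⁅a, a⁆, hmem a a⟩ : ↥(LieAlgebra.derivedSeries F L 1)) = 0 :=
      Subtype.ext (lie_self a)
    rw [this, map_zero]
  have skew : ∀ a b : L, fb b a = -fb a b := by
    intro a b
    have h := halt (a + b)
    simp only [map_add, LinearMap.add_apply, halt] at h
    linear_combination h
  have smulz : ∀ c : F, c • z = 0 → c = 0 := by
    intro c h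
    rcases smul_eq_zero.mp h with h | h
    · exact h
    · exact absurd h hz0
  have cocycle : ∀ a b c : L, fb a b * fb z c + fb b c * fb z a + fb c a * fb z b = 0 := by
    intro a b c
    have hJ := leibniz_lie a b c
    rw [key b c, lie_smul, key a z, key a b, smul_lie, key z c, key a c, lie_smul, key b z,
      smul_smul, smul_smul, smul_smul] at hJ
    have h2 := smulz (fb b c * fb a z - fb a b * fb z c - fb a c * fb b z)
      (by rw [sub_smul, sub_smul, hJ]; abel)
    rw [skew z a, skew z b, skew c a] at h2
    linear_combination -h2
  by_cases hzc : ∀ c : L, fb z c = 0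
  · -- z is central : Heisenberg case
    left
    obtain ⟨m, k, hmk, e1, hform⟩ := darboux n L hdim fb halt
    have hm : 1 ≤ m := by
      by_contra hcon
      have hm0 : m = 0 := by omega
      have hfb0 : ∀ a b : L, fb a b = 0 := by
        intro a b
        rw [hform a b]
        subst hm0
        simp
      have hbr : ∀ a b : L, ⁅a, b⁆ = 0 := fun a b => by rw [key, hfb0, zero_smul]
      have hDbot : (LieSubmodule.toSubmodule (LieAlgebra.derivedSeries F L 1)) ≤ ⊥ := by
        rw [show LieAlgebra.derivedSeries F L 1
            = ⁅(⊤ : LieIdeal F L), (⊤ : LieIdeal F L)⁆ from by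
          rw [show (1 : ℕ) = 0 + 1 from rfl, LieAlgebra.derivedSeries_def,
            LieAlgebra.derivedSeriesOfIdeal_succ, LieAlgebra.derivedSeriesOfIdeal_zero]]
        rw [LieSubmodule.lieIdeal_oper_eq_linear_span']
        rw [Submodule.span_le]
        rintro x ⟨a, -, b, -, rfl⟩
        simp [hbr a b]
      apply hz0
      have := hDbot z₀.2
      simpa [hzdef] using this
    have hx : (e1 z).1 = 0 := by
      funext i
      have hb := hform z (e1.symm (0, Pi.single i 1, 0))
      rw [hzc _, LinearEquiv.apply_symm_apply] at hb
      simp [Pi.single_apply, mul_ite] at hb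
      simpa using hb.symm
    have hy : (e1 z).2.1 = 0 := by
      funext i
      have hb := hform z (e1.symm (Pi.single i 1, 0, 0))
      rw [hzc _, LinearEquiv.apply_symm_apply] at hb
      simp [Pi.single_apply, ite_mul] at hb
      simpa using hb
    have hr0 : (e1 z).2.2 ≠ 0 := by
      intro h
      apply hz0
      have he : e1 z = 0 := by
        refine Prod.ext hx (Prod.ext hy h)
      simpa using e1.map_eq_zero_iff.mp he
    have hk : 1 ≤ k := by
      by_contra hcon
      have hk0 : k = 0 := by omega
      apply hr0
      subst hk0
      funext i
      exact i.elim0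
    have hfk : Module.finrank F (Fin k → F) = (k - 1) + 1 := by
      rw [Module.finrank_fin_fun]
      omega
    obtain ⟨e4, he4⟩ := exists_equiv_single hfk hr0
    let τ : ((Fin m → F) × (Fin m → F) × (Fin k → F)) ≃ₗ[F]
        ((Fin m → F) × (Fin m → F) × F) × (Fin (k - 1) → F) :=
      { toFun := fun q => ((q.1, q.2.1, (e4 q.2.2).1), (e4 q.2.2).2)
        invFun := fun q => (q.1.1, q.1.2.1, e4.symm (q.1.2.2, q.2))
        map_add' := fun p q => by
          refine Prod.ext (Prod.ext rfl (Prod.ext rfl ?_)) ?_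
          · show (e4 ((p + q).2.2)).1 = (e4 p.2.2).1 + (e4 q.2.2).1
            rw [show (p + q).2.2 = p.2.2 + q.2.2 from rfl, map_add]
            rfl
          · show (e4 ((p + q).2.2)).2 = (e4 p.2.2).2 + (e4 q.2.2).2
            rw [show (p + q).2.2 = p.2.2 + q.2.2 from rfl, map_add]
            rfl
        map_smul' := fun c p => by
          refine Prod.ext (Prod.ext rfl (Prod.ext rfl ?_)) ?_
          · show (e4 ((c • p).2.2)).1 = c • (e4 p.2.2).1
            rw [show (c • p).2.2 = c • p.2.2 from rfl, map_smul]
            rfl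
          · show (e4 ((c • p).2.2)).2 = c • (e4 p.2.2).2
            rw [show (c • p).2.2 = c • p.2.2 from rfl, map_smul]
            rfl
        left_inv := fun q => by
          refine Prod.ext rfl (Prod.ext rfl ?_)
          show e4.symm ((e4 q.2.2).1, (e4 q.2.2).2) = q.2.2
          rw [show ((e4 q.2.2).1, (e4 q.2.2).2) = e4 q.2.2 from rfl, e4.symm_apply_apply]
        right_inv := fun q => by
          refine Prod.ext (Prod.ext rfl (Prod.ext rfl ?_)) ?_
          · show (e4 (e4.symm (q.1.2.2, q.2))).1 = q.1.2.2
            rw [e4.apply_symm_apply]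
          · show (e4 (e4.symm (q.1.2.2, q.2))).2 = q.2
            rw [e4.apply_symm_apply] }
    refine ⟨m, hm, by omega, ?_⟩
    have hnk : n - 2 * m - 1 = k - 1 := by omega
    rw [hnk]
    let eL : L ≃ₗ[F] Heisenberg F m × AbelianLie F (k - 1) := e1.trans τ
    refine ⟨{ eL with map_smul' := fun c x => by exact eL.map_smul c x, map_lie' := ?_ }⟩
    intro x y
    show eL ⁅x, y⁆ = ⁅eL x, eL y⁆
    have hez : eL z = ((0, 0, 1), 0) := by
      show τ (e1 z) = _
      have hzp : e1 z = (0, 0, (e1 z).2.2) := Prod.ext hx (Prod.ext hy rfl)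
      rw [hzp]
      show ((0, 0, (e4 (e1 z).2.2).1), (e4 (e1 z).2.2).2) = ((0, 0, 1), 0)
      rw [he4]
    rw [key x y, map_smul, hez]
    show (fb x y • (((0, 0, 1), 0) : Heisenberg F m × AbelianLie F (k - 1)))
      = (Heisenberg.br (eL x).1 (eL y).1, 0)
    refine Prod.ext ?_ ?_
    · show ((fb x y • (0 : Fin m → F), fb x y • (0 : Fin m → F), fb x y * 1) :
        (Fin m → F) × (Fin m → F) × F)
        = (0, 0, ∑ i, ((eL x).1.1 i * (eL y).1.2.1 i - (eL y).1.1 i * (eL x).1.2.1 i))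
      have h1 : (eL x).1.1 = (e1 x).1 := rfl
      have h2 : (eL x).1.2.1 = (e1 x).2.1 := rfl
      have h3 : (eL y).1.1 = (e1 y).1 := rfl
      have h4 : (eL y).1.2.1 = (e1 y).2.1 := rfl
      rw [h1, h2, h3, h4, ← hform x y]
      refine Prod.ext (by simp) (Prod.ext (by simp) (by simp))
    · show fb x y • (0 : AbelianLie F (k - 1)) = (0 : AbelianLie F (k - 1))
      exact smul_zero _
  · -- z not central : two-dimensional non-abelian case
    right
    push_neg at hzc
    obtain ⟨y₀, hy₀⟩ := hzc
    set v := (fb z y₀)⁻¹ • y₀ with hv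
    have huv : fb z v = 1 := by
      rw [hv, map_smul, smul_eq_mul, inv_mul_cancel₀ hy₀]
    obtain ⟨e1, he1, he2, he3, hform⟩ := symplectic_split fb halt huv
    have hfr : n = 2 + Module.finrank F ↥(LinearMap.ker (fb z) ⊓ LinearMap.ker (fb v)) := by
      rw [← hdim, e1.finrank_eq]
      simp [Module.finrank_prod, Module.finrank_self]
    have hn2 : 2 ≤ n := by omega
    have hKr : Module.finrank F ↥(LinearMap.ker (fb z) ⊓ LinearMap.ker (fb v)) = n - 2 := by
      omega
    let e3 := (finBasisOfFinrankEq F _ hKr).equivFun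
    let eL : L ≃ₗ[F] TwoDimNonAbelian F × AbelianLie F (n - 2) :=
      e1.trans ((LinearEquiv.refl F (F × F)).prodCongr e3)
    refine ⟨hn2, ⟨{ eL with map_smul' := fun c x => by exact eL.map_smul c x, map_lie' := ?_ }⟩⟩
    intro x y
    show eL ⁅x, y⁆ = ⁅eL x, eL y⁆
    have hez : eL z = ((1, 0), 0) := by
      have h1 : (e1 z).1.1 = 1 := by rw [he1, skew z v, huv]; ring
      have h2 : (e1 z).1.2 = 0 := by rw [he2, halt]
      have h3 : (e1 z).2 = 0 := by
        apply Subtype.ext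
        rw [ZeroMemClass.coe_zero, he3, halt, skew z v, huv]
        module
      show (((e1 z).1.1, (e1 z).1.2), e3 (e1 z).2) = ((1, 0), 0)
      rw [h1, h2, h3, map_zero]
    rw [key x y, map_smul, hez]
    have hwab : fb ((e1 x).2 : L) ((e1 y).2 : L) = 0 := by
      obtain ⟨hwa1, hwa2⟩ := Submodule.mem_inf.mp ((e1 x).2).2
      obtain ⟨hwb1, hwb2⟩ := Submodule.mem_inf.mp ((e1 y).2).2
      rw [LinearMap.mem_ker] at hwa1 hwb1
      have := cocycle ((e1 x).2 : L) ((e1 y).2 : L) v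
      rw [huv, hwa1, hwb1] at this
      linear_combination this
    show (fb x y • (((1, 0), 0) : TwoDimNonAbelian F × AbelianLie F (n - 2)))
      = (TwoDimNonAbelian.br (eL x).1 (eL y).1, 0)
    refine Prod.ext ?_ (smul_zero _)
    show ((fb x y * 1, fb x y * 0) : F × F)
      = ((eL x).1.1 * (eL y).1.2 - (eL x).1.2 * (eL y).1.1, 0)
    have h1 : (eL x).1.1 = (e1 x).1.1 := rfl
    have h2 : (eL x).1.2 = (e1 x).1.2 := rfl
    have h3 : (eL y).1.1 = (e1 y).1.1 := rfl
    have h4 : (eL y).1.2 = (e1 y).1.2 := rfl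
    rw [h1, h2, h3, h4]
    refine Prod.ext ?_ (by simp)
    show fb x y * 1 = _
    rw [hform x y, hwab]
    ring
end

section
/- Let L be a finite-dimensional Lie algebra over the finite field F_q (q ≥ 2) whose derived subalgebra L² has dimension at least 2. Then d(L) < 1/q. -/
open Module LinearMap Finset

section aux

variable {F : Type*} [Field F] {L : Type*} [AddCommGroup L] [Module F L]
  [FiniteDimensional F L]

lemma aux_rank_two (C : L →ₗ[F] L →ₗ[F] F) (halt : ∀ x, C x x = 0)
    {x0 y0 : L} (hne : C x0 y0 ≠ 0) :
    Module.finrank F (LinearMap.ker C) + 2 ≤ Module.finrank F L := by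
  have hskew : ∀ x y : L, C y x = - C x y := by
    intro x y
    have h := halt (x + y)
    simp only [map_add, LinearMap.add_apply, halt x, halt y] at h
    linear_combination h
  have hy0 : C y0 ≠ 0 := by
    intro h
    apply hne
    have := hskew y0 x0
    rw [h] at this
    simpa using this
  have hx0 : C x0 ≠ 0 := by
    intro h; apply hne; rw [h]; rfl
  have hrank : 2 ≤ Module.finrank F (LinearMap.range C) := by
    by_contra hlt
    push_neg at hlt
    have hle : Module.finrank F (LinearMap.range C) ≤ 1 := by omega
    have hspan : (Submodule.span F {C x0} : Submodule F (L →ₗ[F] F)) ≤ LinearMap.range C := by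
      rw [Submodule.span_singleton_le_iff_mem]
      exact ⟨x0, rfl⟩
    have hfr : Module.finrank F (Submodule.span F {C x0}) = 1 :=
      finrank_span_singleton hx0
    have heq : (Submodule.span F {C x0} : Submodule F (L →ₗ[F] F)) = LinearMap.range C := by
      apply Submodule.eq_of_le_of_finrank_le hspan
      rw [hfr]; exact hle
    have hmem : C y0 ∈ Submodule.span F ({C x0} : Set (L →ₗ[F] F)) := by
      rw [heq]; exact ⟨y0, rfl⟩
    obtain ⟨c, hc⟩ := Submodule.mem_span_singleton.mp hmem
    have : C y0 x0 = 0 := by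
      rw [← hc]
      simp [halt x0]
    rw [hskew x0 y0] at this
    simp only [neg_eq_zero] at this
    exact hne this
  have := LinearMap.finrank_range_add_finrank_ker C
  omega

lemma aux_dual (g : Fin 2 → L) (hg : LinearIndependent F g) :
    ∃ φ1 φ2 : L →ₗ[F] F, φ1 (g 0) = 1 ∧ φ1 (g 1) = 0 ∧ φ2 (g 0) = 0 ∧ φ2 (g 1) = 1 := by
  let j : (Fin 2 → F) →ₗ[F] L :=
    { toFun := fun c => c 0 • g 0 + c 1 • g 1
      map_add' := by
        intro a b
        simp only [Pi.add_apply, add_smul]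
        abel
      map_smul' := by
        intro a b
        simp only [Pi.smul_apply, smul_eq_mul, RingHom.id_apply, smul_add, smul_smul] }
  have hinj : Function.Injective j := by
    rw [← LinearMap.ker_eq_bot]
    rw [Submodule.eq_bot_iff]
    intro c hc
    have h0 := Fintype.linearIndependent_iff.mp hg c
    have : ∑ i, c i • g i = 0 := by
      rw [Fin.sum_univ_two]; exact hc
    funext i
    exact h0 this i
  have hsurj := LinearMap.dualMap_surjective_of_injective hinj
  obtain ⟨φ1, h1⟩ := hsurj (LinearMap.proj 0)
  obtain ⟨φ2, h2⟩ := hsurj (LinearMap.proj 1)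
  have e0 : j ![1, 0] = g 0 := by
    show (1 : F) • g 0 + (0 : F) • g 1 = g 0
    simp
  have e1 : j ![0, 1] = g 1 := by
    show (0 : F) • g 0 + (1 : F) • g 1 = g 1
    simp
  refine ⟨φ1, φ2, ?_, ?_, ?_, ?_⟩
  · have := LinearMap.congr_fun h1 ![1, 0]
    simpa [LinearMap.dualMap_apply', e0] using this
  · have := LinearMap.congr_fun h1 ![0, 1]
    simpa [LinearMap.dualMap_apply', e1] using this
  · have := LinearMap.congr_fun h2 ![1, 0]
    simpa [LinearMap.dualMap_apply', e0] using this
  · have := LinearMap.congr_fun h2 ![0, 1]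
    simpa [LinearMap.dualMap_apply', e1] using this

end aux

lemma aux_arith (q A r u t S : ℕ) (hq : 2 ≤ q) (hA : 1 ≤ A)
    (hsum : r + u + t = q ^ 2 * A) (hu : u + (q + 1) * r ≤ (q + 1) * A)
    (hS : S ≤ r * (q ^ 2 * A) + u * (q * A) + t * A) : q * S < (q ^ 2 * A) ^ 2 := by
  zify at *
  have h0 : (0:ℤ) ≤ (q:ℤ) * A * ((q:ℤ) - 1) := by nlinarith
  have h1 := mul_le_mul_of_nonneg_left hu h0
  have h2 := mul_le_mul_of_nonneg_left hS (by positivity : (0:ℤ) ≤ (q:ℤ))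
  have h4 : 2 * (q:ℤ)^2 ≤ (q:ℤ)^3 := by nlinarith
  have h3 : (0:ℤ) < ((q:ℤ) * A * A) * ((q:ℤ)^3 - 2*(q:ℤ)^2 + 1) := by
    apply mul_pos (by positivity) (by linarith)
  have h5 : ((q:ℤ) * A) * ((r:ℤ) + u + t) = ((q:ℤ) * A) * ((q:ℤ)^2 * A) := by rw [hsum]
  nlinarith [h1, h2, h3, h5]

/-- Commutativity degree of a (finite) Lie ring. -/
noncomputable def commDeg (L : Type*) [LieRing L] : ℚ :=
  (Nat.card {p : L × L // ⁅p.1, p.2⁆ = 0} : ℚ) / (Nat.card L : ℚ) ^ 2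

/-- A finite-dimensional Lie algebra over the finite field `F_q` (`q ≥ 2`)
whose derived subalgebra has dimension at least `2` has commutativity degree `< 1/q`. -/
theorem stmt1 (q : ℕ) (hq : 2 ≤ q) (F : Type*) [Field F] [Fintype F]
    (hF : Fintype.card F = q) (L : Type*) [LieRing L] [LieAlgebra F L] [Fintype L]
    (hder : 2 ≤ Module.finrank F (LieAlgebra.derivedSeries F L 1)) :
    commDeg L < 1 / (q : ℚ) := by
  classical
  set n := Module.finrank F L with hn
  -- independent pair in the derived subalgebra
  set W : Submodule F L := LieSubmodule.toSubmodule (LieAlgebra.derivedSeries F L 1) with hW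
  have hder' : 2 ≤ Module.finrank F W := hder
  obtain ⟨g0, hg0⟩ := exists_linearIndependent_of_le_finrank hder'
  set g : Fin 2 → L := fun i => ((g0 i : W) : L) with hgdef
  have hg : LinearIndependent F g := hg0.map' W.subtype (Submodule.ker_subtype W)
  obtain ⟨φ1, φ2, hφ10, hφ11, hφ20, hφ21⟩ := aux_dual g hg
  -- the derived subalgebra is the span of brackets
  have hWspan : W = Submodule.span F {m : L | ∃ x y : L, ⁅x, y⁆ = m} := by
    have h1 : LieAlgebra.derivedSeries F L 1 = ⁅(⊤ : LieIdeal F L), (⊤ : LieIdeal F L)⁆ := by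
      rw [LieAlgebra.derivedSeries_def, LieAlgebra.derivedSeriesOfIdeal_succ,
        LieAlgebra.derivedSeriesOfIdeal_zero]
    rw [hW, h1, LieSubmodule.lieIdeal_oper_eq_linear_span']
    congr 1
    ext m
    simp [LieSubmodule.mem_top]
  have hkey : ∀ ψ : L →ₗ[F] F, (ψ (g 0) ≠ 0 ∨ ψ (g 1) ≠ 0) → ∃ x y : L, ψ ⁅x, y⁆ ≠ 0 := by
    intro ψ hne
    by_contra h
    push_neg at h
    have hWle : W ≤ LinearMap.ker ψ := by
      rw [hWspan, Submodule.span_le]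
      rintro m ⟨x, y, rfl⟩
      exact h x y
    have h0 : ∀ i, ψ (g i) = 0 := fun i => hWle (g0 i).2
    rcases hne with hne | hne
    · exact hne (h0 0)
    · exact hne (h0 1)
  -- the two bilinear forms
  let Bb : (L →ₗ[F] F) → L →ₗ[F] L →ₗ[F] F := fun ψ =>
    LinearMap.mk₂ F (fun x y => ψ ⁅x, y⁆)
      (fun x x' y => by rw [add_lie, map_add])
      (fun c x y => by rw [smul_lie, map_smul, smul_eq_mul])
      (fun x y y' => by rw [lie_add, map_add])
      (fun c x y => by rw [lie_smul, map_smul, smul_eq_mul])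
  set B1 : L →ₗ[F] L →ₗ[F] F := Bb φ1 with hB1
  set B2 : L →ₗ[F] L →ₗ[F] F := Bb φ2 with hB2
  have hB1app : ∀ x y : L, B1 x y = φ1 ⁅x, y⁆ := fun x y => rfl
  have hB2app : ∀ x y : L, B2 x y = φ2 ⁅x, y⁆ := fun x y => rfl
  -- predicates
  set P0 : L → Prop := fun x => B1 x = 0 ∧ B2 x = 0 with hP0
  set Pd : L → Prop := fun x => B2 x = 0 ∨ ∃ b : F, B1 x + b • B2 x = 0 with hPd
  have hP0d : ∀ x, P0 x → Pd x := fun x hx => Or.inl hx.2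
  -- per-element counts
  set c' : L → ℕ := fun x => Nat.card {y : L // ⁅x, y⁆ = 0} with hc'
  -- cardinality of submodules
  have hcard_sub : ∀ p : Submodule F L, Nat.card p = q ^ Module.finrank F p := by
    intro p
    haveI : Fintype p := Fintype.ofFinite p
    rw [Nat.card_eq_fintype_card, card_eq_pow_finrank (K := F), hF]
  have hcardL : Fintype.card L = q ^ n := by
    rw [card_eq_pow_finrank (K := F), hF]
  have hn2 : 2 ≤ n := le_trans hder' (Submodule.finrank_le W)
  -- counting commuting pairs
  have hN : Nat.card {p : L × L // ⁅p.1, p.2⁆ = 0} = ∑ x : L, c' x := by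
    rw [Nat.card_congr (Equiv.subtypeProdEquivSigmaSubtype (fun (x y : L) => ⁅x, y⁆ = 0))]
    rw [Nat.card_eq_fintype_card, Fintype.card_sigma]
    exact Finset.sum_congr rfl fun x _ => (Nat.card_eq_fintype_card).symm
  -- the map controlling each centralizer
  set gm : L → (L →ₗ[F] F × F) := fun x => (B1 x).prod (B2 x) with hgm
  have hgm_apply : ∀ x y, gm x y = (φ1 ⁅x, y⁆, φ2 ⁅x, y⁆) := fun x y => rfl
  have hc'ker : ∀ x : L, c' x ≤ Nat.card (LinearMap.ker (gm x)) := by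
    intro x
    apply Nat.card_le_card_of_injective
      (fun y => (⟨y.1, by
        rw [LinearMap.mem_ker, hgm_apply, y.2]
        simp⟩ : LinearMap.ker (gm x)))
    intro a b hab
    simp only [Subtype.mk.injEq] at hab
    exact Subtype.ext hab
  -- bound on R-part
  have hbound0 : ∀ x : L, c' x ≤ q ^ n := by
    intro x
    calc c' x ≤ Nat.card L := Nat.card_le_card_of_injective Subtype.val Subtype.val_injective
    _ = q ^ n := by rw [Nat.card_eq_fintype_card, hcardL]
  -- bound on middle part
  have hbound1 : ∀ x : L, ¬ P0 x → c' x ≤ q ^ (n - 1) := by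
    intro x hx
    have hker : LinearMap.ker (gm x) ≠ ⊤ := by
      intro htop
      apply hx
      have hz : ∀ y, gm x y = 0 := by
        intro y
        have hy : y ∈ LinearMap.ker (gm x) := by rw [htop]; trivial
        exact LinearMap.mem_ker.mp hy
      exact ⟨LinearMap.ext fun y => congrArg Prod.fst (hz y),
             LinearMap.ext fun y => congrArg Prod.snd (hz y)⟩
    have hlt : Module.finrank F (LinearMap.ker (gm x)) < n :=
      Submodule.finrank_lt hker
    calc c' x ≤ Nat.card (LinearMap.ker (gm x)) := hc'ker x
    _ = q ^ Module.finrank F (LinearMap.ker (gm x)) := hcard_sub _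
    _ ≤ q ^ (n - 1) := Nat.pow_le_pow_right (by omega) (by omega)
  -- bound on T-part
  have hbound2 : ∀ x : L, ¬ Pd x → c' x ≤ q ^ (n - 2) := by
    intro x hx
    simp only [hPd, not_or, not_exists] at hx
    obtain ⟨hB2x, hb⟩ := hx
    have hrange : LinearMap.range (gm x) = ⊤ := by
      by_contra hne
      have hlt : Module.finrank F (LinearMap.range (gm x)) < Module.finrank F (F × F) :=
        Submodule.finrank_lt hne
      have hFF : Module.finrank F (F × F) = 2 := by
        simp [Module.finrank_prod]
      obtain ⟨y0, hy0⟩ : ∃ y0, B2 x y0 ≠ 0 := by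
        by_contra h
        push_neg at h
        exact hB2x (LinearMap.ext h)
      have hw0 : gm x y0 ≠ 0 := by
        intro h
        exact hy0 (congrArg Prod.snd h)
      have hspan : (Submodule.span F {gm x y0} : Submodule F (F × F)) ≤
          LinearMap.range (gm x) := by
        rw [Submodule.span_singleton_le_iff_mem]
        exact ⟨y0, rfl⟩
      have heq : (Submodule.span F {gm x y0} : Submodule F (F × F)) =
          LinearMap.range (gm x) := by
        apply Submodule.eq_of_le_of_finrank_le hspan
        rw [finrank_span_singleton hw0]
        omega
      apply hb (-(B1 x y0) / (B2 x y0))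
      ext y
      have hmem : gm x y ∈ Submodule.span F ({gm x y0} : Set (F × F)) := by
        rw [heq]; exact ⟨y, rfl⟩
      obtain ⟨c, hc⟩ := Submodule.mem_span_singleton.mp hmem
      have hc1 : c * B1 x y0 = B1 x y := congrArg Prod.fst hc
      have hc2 : c * B2 x y0 = B2 x y := congrArg Prod.snd hc
      simp only [LinearMap.add_apply, LinearMap.smul_apply, LinearMap.zero_apply, smul_eq_mul]
      rw [← hc1, ← hc2]
      field_simp
      ring
    have hrk := LinearMap.finrank_range_add_finrank_ker (gm x)
    rw [hrange] at hrk
    have hFF : Module.finrank F (F × F) = 2 := by simp [Module.finrank_prod]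
    rw [finrank_top, hFF] at hrk
    calc c' x ≤ Nat.card (LinearMap.ker (gm x)) := hc'ker x
    _ = q ^ Module.finrank F (LinearMap.ker (gm x)) := hcard_sub _
    _ ≤ q ^ (n - 2) := Nat.pow_le_pow_right (by omega) (by omega)
  -- the covering subspaces
  set K : Option F → Submodule F L := fun i =>
    LinearMap.ker (Option.elim i B2 (fun b => B1 + b • B2)) with hK
  have hKrank : ∀ i, Module.finrank F (K i) + 2 ≤ n := by
    intro i
    rcases i with _ | b
    · -- K none = ker B2
      obtain ⟨x, y, hxy⟩ := hkey φ2 (Or.inr (by rw [hφ21]; exact one_ne_zero))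
      exact aux_rank_two B2 (fun z => by rw [hB2app, lie_self, map_zero]) hxy
    · obtain ⟨x, y, hxy⟩ := hkey (φ1 + b • φ2) (Or.inl (by
        simp only [LinearMap.add_apply, LinearMap.smul_apply, hφ10, hφ20, smul_eq_mul,
          mul_zero, add_zero]
        exact one_ne_zero))
      apply aux_rank_two (B1 + b • B2)
      · intro z
        simp only [LinearMap.add_apply, LinearMap.smul_apply, hB1app, hB2app, lie_self,
          map_zero, smul_eq_mul, mul_zero, add_zero]
      · show (B1 + b • B2) x y ≠ 0
        simp only [LinearMap.add_apply, LinearMap.smul_apply, hB1app, hB2app, smul_eq_mul]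
        simpa using hxy
  have hRsubK : ∀ i, ∀ x : L, P0 x → x ∈ K i := by
    intro i x hx
    rcases i with _ | b
    · exact hx.2
    · show B1 x + b • B2 x = 0
      rw [hx.1, hx.2]
      simp
  have hcover : ∀ x : L, Pd x → ∃ i, x ∈ K i := by
    intro x hx
    rcases hx with hx | ⟨b, hb⟩
    · exact ⟨none, hx⟩
    · exact ⟨some b, hb⟩
  have hKcard : ∀ i, (Finset.univ.filter (· ∈ K i)).card ≤ q ^ (n - 2) := by
    intro i
    rw [← Fintype.card_subtype]
    rw [← Nat.card_eq_fintype_card, hcard_sub]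
    exact Nat.pow_le_pow_right (by omega) (by have := hKrank i; omega)
  -- the three finsets
  set Rf := Finset.univ.filter P0 with hRf
  set Uf := Finset.univ.filter (fun x => Pd x ∧ ¬ P0 x) with hUf
  set Tf := Finset.univ.filter (fun x => ¬ Pd x) with hTf
  -- partition identity
  have hpart : Rf.card + Uf.card + Tf.card = q ^ n := by
    have h1 : (Finset.univ.filter Pd).card + Tf.card = Fintype.card L := by
      rw [hTf]
      rw [Finset.card_filter_add_card_filter_not]
      exact Finset.card_univ
    have h2 : Rf.card + Uf.card = (Finset.univ.filter Pd).card := by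
      have h3 := Finset.card_filter_add_card_filter_not
        (s := Finset.univ.filter Pd) (p := P0)
      rw [Finset.filter_filter, Finset.filter_filter] at h3
      have e1 : Finset.univ.filter (fun x => Pd x ∧ P0 x) = Rf := by
        rw [hRf]
        apply Finset.filter_congr
        intro x _
        constructor
        · rintro ⟨_, h⟩; exact h
        · intro h; exact ⟨hP0d x h, h⟩
      have e2 : Finset.univ.filter (fun x => Pd x ∧ ¬ P0 x) = Uf := rfl
      rw [e1, e2] at h3
      exact h3.symm ▸ rfl
    omega
  -- cover bound
  have hUbound : Uf.card + (q + 1) * Rf.card ≤ (q + 1) * q ^ (n - 2) := by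
    have hsub : Uf ⊆ (Finset.univ : Finset (Option F)).biUnion
        (fun i => Finset.univ.filter (fun x => x ∈ K i ∧ ¬ P0 x)) := by
      intro x hx
      rw [hUf, Finset.mem_filter] at hx
      obtain ⟨-, hPdx, hP0x⟩ := hx
      obtain ⟨i, hi⟩ := hcover x hPdx
      rw [Finset.mem_biUnion]
      exact ⟨i, Finset.mem_univ i, by
        rw [Finset.mem_filter]; exact ⟨Finset.mem_univ x, hi, hP0x⟩⟩
    have hUle : Uf.card ≤
        ∑ i : Option F, (Finset.univ.filter (fun x => x ∈ K i ∧ ¬ P0 x)).card :=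
      le_trans (Finset.card_le_card hsub) (Finset.card_biUnion_le)
    have hDle : ∀ i, (Finset.univ.filter (fun x => x ∈ K i ∧ ¬ P0 x)).card + Rf.card
        ≤ q ^ (n - 2) := by
      intro i
      have h3 := Finset.card_filter_add_card_filter_not
        (s := Finset.univ.filter (· ∈ K i)) (p := P0)
      rw [Finset.filter_filter, Finset.filter_filter] at h3
      have e1 : Finset.univ.filter (fun x => x ∈ K i ∧ P0 x) = Rf := by
        rw [hRf]
        apply Finset.filter_congr
        intro x _
        constructor
        · rintro ⟨_, h⟩; exact h
        · intro h; exact ⟨hRsubK i x h, h⟩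
      rw [e1] at h3
      have h4 := hKcard i
      omega
    have hcount : (Finset.univ : Finset (Option F)).card = q + 1 := by
      rw [Finset.card_univ, Fintype.card_option, hF]
    calc Uf.card + (q + 1) * Rf.card
        ≤ (∑ i : Option F, (Finset.univ.filter (fun x => x ∈ K i ∧ ¬ P0 x)).card)
          + (q + 1) * Rf.card := Nat.add_le_add_right hUle _
    _ = ∑ i : Option F,
          ((Finset.univ.filter (fun x => x ∈ K i ∧ ¬ P0 x)).card + Rf.card) := by
          rw [Finset.sum_add_distrib, Finset.sum_const, hcount, smul_eq_mul]
    _ ≤ ∑ i : Option F, q ^ (n - 2) := Finset.sum_le_sum (fun i _ => hDle i)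
    _ = (q + 1) * q ^ (n - 2) := by rw [Finset.sum_const, hcount, smul_eq_mul]
  -- sum bound
  have hsum_bound : ∑ x : L, c' x ≤
      Rf.card * q ^ n + Uf.card * q ^ (n - 1) + Tf.card * q ^ (n - 2) := by
    have hsplit1 : ∑ x : L, c' x =
        ∑ x ∈ Finset.univ.filter Pd, c' x + ∑ x ∈ Tf, c' x := by
      rw [hTf, Finset.sum_filter_add_sum_filter_not]
    have hsplit2 : ∑ x ∈ Finset.univ.filter Pd, c' x =
        ∑ x ∈ Rf, c' x + ∑ x ∈ Uf, c' x := by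
      have h3 := Finset.sum_filter_add_sum_filter_not (Finset.univ.filter Pd) P0 c'
      rw [Finset.filter_filter, Finset.filter_filter] at h3
      have e1 : Finset.univ.filter (fun x => Pd x ∧ P0 x) = Rf := by
        rw [hRf]
        apply Finset.filter_congr
        intro x _
        constructor
        · rintro ⟨_, h⟩; exact h
        · intro h; exact ⟨hP0d x h, h⟩
      rw [e1] at h3
      exact h3.symm
    rw [hsplit1, hsplit2]
    have b1 : ∑ x ∈ Rf, c' x ≤ Rf.card * q ^ n := by
      calc ∑ x ∈ Rf, c' x ≤ Rf.card • (q ^ n) :=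
            Finset.sum_le_card_nsmul _ _ _ (fun x _ => hbound0 x)
      _ = Rf.card * q ^ n := by rw [smul_eq_mul]
    have b2 : ∑ x ∈ Uf, c' x ≤ Uf.card * q ^ (n - 1) := by
      calc ∑ x ∈ Uf, c' x ≤ Uf.card • (q ^ (n - 1)) := by
            apply Finset.sum_le_card_nsmul
            intro x hx
            rw [hUf, Finset.mem_filter] at hx
            exact hbound1 x hx.2.2
      _ = Uf.card * q ^ (n - 1) := by rw [smul_eq_mul]
    have b3 : ∑ x ∈ Tf, c' x ≤ Tf.card * q ^ (n - 2) := by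
      calc ∑ x ∈ Tf, c' x ≤ Tf.card • (q ^ (n - 2)) := by
            apply Finset.sum_le_card_nsmul
            intro x hx
            rw [hTf, Finset.mem_filter] at hx
            exact hbound2 x hx.2
      _ = Tf.card * q ^ (n - 2) := by rw [smul_eq_mul]
    omega
  -- final arithmetic
  have hqn : q ^ n = q ^ 2 * q ^ (n - 2) := by
    rw [← pow_add]
    congr 1
    omega
  have hqn1 : q ^ (n - 1) = q * q ^ (n - 2) := by
    rw [← pow_succ']
    congr 1
    omega
  have hfinal : q * (∑ x : L, c' x) < (q ^ n) ^ 2 := by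
    rw [hqn]
    apply aux_arith q (q ^ (n - 2)) Rf.card Uf.card Tf.card _ hq
      (Nat.one_le_pow _ _ (by omega))
      (by rw [← hqn]; exact hpart) hUbound
    rw [← hqn, ← hqn1]
    exact hsum_bound
  -- translate to ℚ
  have hcardLQ : (Nat.card L : ℚ) = (q : ℚ) ^ n := by
    rw [Nat.card_eq_fintype_card, hcardL]
    push_cast
    ring
  rw [commDeg, hN, hcardLQ]
  rw [div_lt_div_iff₀ (by positivity) (by positivity : (0:ℚ) < (q:ℚ))]
  rw [one_mul]
  have h := (Nat.cast_lt (α := ℚ)).mpr hfinal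
  push_cast at h
  rw [mul_comm]
  push_cast
  exact h
end

section
/- For finite-dimensional Lie algebras over the finite field F_q (q ≥ 2), the set of values {d(L) : L a finite-dimensional Lie algebra over F_q with dim L² = 1} equals {(q^{2n}+q-1)/q^{2n+1} : n ∈ ℕ, n ≥ 1}. -/
/-- A bundled finite Lie algebra over the field `F`. -/
structure FinLieAlgBundle (F : Type) [Field F] : Type 1 where
  /-- the underlying type -/
  carrier : Type
  [lieRing : LieRing carrier]
  [lieAlgebra : LieAlgebra F carrier]
  [fintype : Fintype carrier]

attribute [instance] FinLieAlgBundle.lieRing FinLieAlgBundle.lieAlgebra FinLieAlgBundle.fintype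


open Module Finset

variable {F : Type} [Field F] [Fintype F] {V : Type} [AddCommGroup V] [Module F V] [Finite V]

lemma card_pow_finrank (W : Type*) [AddCommGroup W] [Module F W] [Finite W] :
    Nat.card W = Fintype.card F ^ finrank F W := by
  cases nonempty_fintype W
  rw [Nat.card_eq_fintype_card, card_eq_pow_finrank (K := F)]

lemma count_eq (β : LinearMap.BilinForm F V) :
    (Nat.card {p : V × V // β p.1 p.2 = 0} : ℚ) * (Fintype.card F : ℚ) =
      (Fintype.card F : ℚ) ^ (finrank F (LinearMap.ker β) + finrank F V + 1)
      + (Fintype.card F : ℚ) ^ (2 * finrank F V)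
      - (Fintype.card F : ℚ) ^ (finrank F (LinearMap.ker β) + finrank F V) := by
  classical
  cases nonempty_fintype V
  set q : ℚ := (Fintype.card F : ℚ) with hq
  set d := finrank F V with hd
  have hq0 : q ≠ 0 := by
    simp [hq, Fintype.card_ne_zero]
  -- card of each fiber
  have fiber : ∀ x : V, (Nat.card {y : V // β x y = 0} : ℚ) * q
      = q ^ d + (if β x = 0 then q ^ (d + 1) - q ^ d else 0) := by
    intro x
    have hker : Nat.card {y : V // β x y = 0} = Nat.card (LinearMap.ker (β x)) :=
      Nat.card_congr (Equiv.subtypeEquivRight fun y => (LinearMap.mem_ker).symm)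
    rw [hker, card_pow_finrank (F := F)]
    by_cases h : β x = 0
    · have : LinearMap.ker (β x) = ⊤ := by simp [h]
      rw [this]
      simp only [h, if_pos]
      rw [finrank_top]
      push_cast
      ring
    · -- range is ⊤
      have hsurj : LinearMap.range (β x) = ⊤ := by
        obtain ⟨y, hy⟩ : ∃ y, β x y ≠ 0 := by
          by_contra hc
          push_neg at hc
          exact h (LinearMap.ext hc)
        rw [eq_top_iff]
        intro c _
        exact ⟨(c / β x y) • y, by simp [div_mul_cancel₀, hy]⟩
      have hrk : finrank F (LinearMap.range (β x)) = 1 := by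
        rw [hsurj]; simp [finrank_top]
      have hnull := LinearMap.finrank_range_add_finrank_ker (β x)
      rw [hrk] at hnull
      have hd1 : 1 ≤ d := by omega
      have : finrank F (LinearMap.ker (β x)) = d - 1 := by omega
      rw [this]
      simp only [h, if_neg, not_false_iff, add_zero]
      push_cast
      rw [← pow_succ]
      congr 1
      omega
  -- main count
  have hsig : Nat.card {p : V × V // β p.1 p.2 = 0}
      = ∑ x : V, Nat.card {y : V // β x y = 0} := by
    rw [Nat.card_congr (Equiv.subtypeProdEquivSigmaSubtype fun a b => β a b = 0),
      Nat.card_eq_fintype_card, Fintype.card_sigma]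
    simp [Nat.card_eq_fintype_card]
  rw [hsig]
  push_cast
  rw [Finset.sum_mul]
  calc (∑ x : V, (Nat.card {y : V // β x y = 0} : ℚ) * q)
      = ∑ x : V, (q ^ d + (if β x = 0 then q ^ (d + 1) - q ^ d else 0)) := by
        exact Finset.sum_congr rfl fun x _ => fiber x
    _ = (Fintype.card V : ℚ) * q ^ d
        + (Fintype.card {x : V // β x = 0} : ℚ) * (q ^ (d + 1) - q ^ d) := by
        rw [Finset.sum_add_distrib, Finset.sum_const, ← Finset.sum_filter,
          Finset.sum_const, Fintype.card_subtype, Finset.card_univ]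
        push_cast
        ring
    _ = _ := by
        have h1 : (Fintype.card V : ℚ) = q ^ d := by
          rw [card_eq_pow_finrank (K := F) (V := V)]
          push_cast
          rfl
        have h2 : (Fintype.card {x : V // β x = 0} : ℚ)
            = q ^ (finrank F (LinearMap.ker β)) := by
          rw [← Nat.card_eq_fintype_card,
            Nat.card_congr (Equiv.subtypeEquivRight fun y => (LinearMap.mem_ker).symm),
            card_pow_finrank (F := F)]
          push_cast
          rfl
        rw [h1, h2]
        rw [pow_add, pow_add, pow_add, two_mul, pow_add]
        ring


open Module LinearMap LinearMap.BilinForm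

lemma even_finrank_of_alt_nondeg {K : Type*} [Field K] :
    ∀ (n : ℕ) (V : Type) (_ : AddCommGroup V), ∀ (_ : Module K V) (_ : FiniteDimensional K V)
    (_ : finrank K V = n) (B : LinearMap.BilinForm K V),
    B.IsAlt → B.Nondegenerate → Even n := by
  intro n
  induction n using Nat.strong_induction_on with
  | _ n ih =>
    intro V _ _ _ hn B halt hnd
    rcases Nat.eq_zero_or_pos n with h0 | hpos
    · simp [h0]
    · have : 0 < finrank K V := hn ▸ hpos
      obtain ⟨x, hx⟩ := Module.finrank_pos_iff_exists_ne_zero.mp this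
      obtain ⟨y, hy⟩ : ∃ y, B x y ≠ 0 := by
        by_contra hc
        push_neg at hc
        exact hx (hnd.1 x hc)
      have hyx : B y x = - B x y := (LinearMap.IsAlt.neg halt x y).symm
      have hyx0 : B y x ≠ 0 := by rw [hyx]; exact neg_ne_zero.mpr hy
      have hxy : LinearIndependent K ![x, y] := by
        rw [LinearIndependent.pair_iff]
        intro s t hst
        have h1 : t * B x y = 0 := by
          simpa [halt x] using congrArg (fun w => B x w) hst
        have h2 : s * B y x = 0 := by
          simpa [halt y] using congrArg (fun w => B y w) hst
        exact ⟨(mul_eq_zero.mp h2).resolve_right hyx0,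
               (mul_eq_zero.mp h1).resolve_right hy⟩
      set W : Submodule K V := Submodule.span K {x, y} with hW
      have hrange : Set.range ![x, y] = {x, y} := by
        simp [Matrix.range_cons, Matrix.range_empty, Set.pair_comm]
      have hWrank : finrank K W = 2 := by
        rw [hW, ← hrange, finrank_span_eq_card hxy]
        simp
      have hxW : x ∈ W := Submodule.subset_span (by simp)
      have hyW : y ∈ W := Submodule.subset_span (by simp)
      have hres : (B.restrict W).Nondegenerate := by
        refine (LinearMap.IsRefl.nondegenerate_iff_separatingLeft
          (LinearMap.BilinForm.IsAlt.isRefl (B₁ := B.restrict W) (fun w => halt w))).mpr ?_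
        rintro ⟨w, hw⟩ hw0
        obtain ⟨a, b, rfl⟩ := Submodule.mem_span_pair.mp hw
        have e1 := hw0 ⟨y, hyW⟩
        have e2 := hw0 ⟨x, hxW⟩
        simp only [LinearMap.BilinForm.restrict_apply, LinearMap.domRestrict_apply,
          map_add, map_smul, LinearMap.add_apply, LinearMap.smul_apply, smul_eq_mul,
          halt x, halt y, mul_zero, add_zero, zero_add] at e1 e2
        have ha : a = 0 := (mul_eq_zero.mp e1).resolve_right hy
        have hb : b = 0 := (mul_eq_zero.mp e2).resolve_right hyx0
        ext
        simp [ha, hb]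
      have hcompl : IsCompl W (B.orthogonal W) :=
        isCompl_orthogonal_of_restrict_nondegenerate halt.isRefl hres
      have hWle : finrank K W ≤ finrank K V := Submodule.finrank_le W
      have hn2 : 2 ≤ n := by omega
      set W' := B.orthogonal W with hW'
      have hrank' : finrank K W' = n - 2 := by
        rw [hW', finrank_orthogonal hnd W, hWrank, hn]
      have hres' : (B.restrict W').Nondegenerate := by
        apply nondegenerate_restrict_of_disjoint_orthogonal B halt.isRefl
        rw [hW', orthogonal_orthogonal hnd halt.isRefl]
        exact hcompl.disjoint.symm
      have halt' : (B.restrict W').IsAlt := fun w => halt w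
      obtain ⟨k, hk⟩ := ih (n - 2) (by omega) W' inferInstance inferInstance inferInstance
        hrank' (B.restrict W') halt' hres'
      exact ⟨k + 1, by omega⟩


open Module Finset

variable {F : Type} [Field F] [Fintype F] {V : Type} [AddCommGroup V] [Module F V]

lemma even_rank_of_alt [FiniteDimensional F V] (β : LinearMap.BilinForm F V)
    (halt : β.IsAlt) :
    Even (finrank F V - finrank F (LinearMap.ker β)) := by
  classical
  set K := LinearMap.ker β with hK
  have hkerle : ∀ x : V, K ≤ LinearMap.ker (β x) := by
    intro x y hy
    have h0 : β y = 0 := hy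
    have : β y x = 0 := by rw [h0]; rfl
    exact halt.isRefl y x this
  -- lift to quotient
  let l : V →ₗ[F] (V ⧸ K →ₗ[F] F) :=
    { toFun := fun x => Submodule.liftQ K (β x) (hkerle x)
      map_add' := fun x z => by
        refine Submodule.linearMap_qext K ?_
        ext v
        simp
      map_smul' := fun c x => by
        refine Submodule.linearMap_qext K ?_
        ext v
        simp }
  have hKl : K ≤ LinearMap.ker l := by
    intro x hx
    rw [LinearMap.mem_ker]
    refine Submodule.linearMap_qext K ?_
    ext v
    have h0 : β x = 0 := hx
    simp [l, h0]
  let Bq : LinearMap.BilinForm F (V ⧸ K) := Submodule.liftQ K l hKl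
  have hBq : ∀ x y : V, Bq (Submodule.Quotient.mk x) (Submodule.Quotient.mk y) = β x y := by
    intro x y
    simp [Bq, l]
  have haltq : Bq.IsAlt := by
    intro z
    obtain ⟨x, rfl⟩ := Submodule.Quotient.mk_surjective K z
    rw [hBq]
    exact halt x
  have hndq : Bq.Nondegenerate := by
    refine (LinearMap.IsRefl.nondegenerate_iff_separatingLeft haltq.isRefl).mpr ?_
    intro z hz
    obtain ⟨x, rfl⟩ := Submodule.Quotient.mk_surjective K z
    rw [Submodule.Quotient.mk_eq_zero]
    show x ∈ K
    rw [hK, LinearMap.mem_ker]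
    ext y
    simpa [hBq] using hz (Submodule.Quotient.mk y)
  have hfr : finrank F (V ⧸ K) = finrank F V - finrank F K := by
    have := Submodule.finrank_quotient_add_finrank K
    omega
  exact even_finrank_of_alt_nondeg _ (V ⧸ K) inferInstance inferInstance inferInstance
    hfr Bq haltq hndq


lemma key_exact [Finite V] (β : LinearMap.BilinForm F V) {n r : ℕ}
    (hr : finrank F (LinearMap.ker β) = r) (hd : finrank F V = r + 2 * n) :
    (Nat.card {p : V × V // β p.1 p.2 = 0} : ℚ) / (Nat.card V : ℚ) ^ 2 =
      ((Fintype.card F : ℚ) ^ (2 * n) + (Fintype.card F : ℚ) - 1) /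
        (Fintype.card F : ℚ) ^ (2 * n + 1) := by
  classical
  cases nonempty_fintype V
  have : FiniteDimensional F V := Module.Finite.of_finite (R := F)
  set q : ℚ := (Fintype.card F : ℚ) with hqdef
  have hq0 : q ≠ 0 := by simp [hqdef, Fintype.card_ne_zero]
  have hc := count_eq β
  rw [hr, hd, ← hqdef] at hc
  have hcardV : (Nat.card V : ℚ) = q ^ (r + 2 * n) := by
    rw [card_pow_finrank (F := F) V, hd]
    push_cast [hqdef]
    rfl
  rw [hcardV, div_eq_div_iff (by positivity) (by positivity)]
  calc (Nat.card {p : V × V // β p.1 p.2 = 0} : ℚ) * q ^ (2 * n + 1)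
      = ((Nat.card {p : V × V // β p.1 p.2 = 0} : ℚ) * q) * q ^ (2 * n) := by ring
    _ = (q ^ (r + (r + 2 * n) + 1) + q ^ (2 * (r + 2 * n)) - q ^ (r + (r + 2 * n))) *
          q ^ (2 * n) := by rw [hc]
    _ = (q ^ (2 * n) + q - 1) * (q ^ (r + 2 * n)) ^ 2 := by ring

lemma key_lemma [Finite V] (β : LinearMap.BilinForm F V) (halt : β.IsAlt) (hne : β ≠ 0) :
    ∃ n : ℕ, 1 ≤ n ∧
      (Nat.card {p : V × V // β p.1 p.2 = 0} : ℚ) / (Nat.card V : ℚ) ^ 2 =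
        ((Fintype.card F : ℚ) ^ (2 * n) + (Fintype.card F : ℚ) - 1) /
          (Fintype.card F : ℚ) ^ (2 * n + 1) := by
  classical
  cases nonempty_fintype V
  have : FiniteDimensional F V := Module.Finite.of_finite (R := F)
  set r := finrank F (LinearMap.ker β) with hr
  set d := finrank F V with hd
  have hrd : r ≤ d := Submodule.finrank_le _
  have hlt : r < d := by
    rcases lt_or_eq_of_le hrd with h | h
    · exact h
    · exfalso
      have : LinearMap.ker β = ⊤ := Submodule.eq_top_of_finrank_eq h
      apply hne
      ext x y
      have : x ∈ LinearMap.ker β := this ▸ Submodule.mem_top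
      rw [LinearMap.mem_ker] at this
      simp [this]
  obtain ⟨n, hn⟩ := even_rank_of_alt β halt
  exact ⟨n, by omega, key_exact β hr.symm (by omega)⟩

lemma forward (L : Type) [LieRing L] [LieAlgebra F L] [Fintype L]
    (h : finrank F (LieAlgebra.derivedSeries F L 1) = 1) :
    ∃ n : ℕ, 1 ≤ n ∧ commDeg L =
      ((Fintype.card F : ℚ) ^ (2 * n) + (Fintype.card F : ℚ) - 1) /
        (Fintype.card F : ℚ) ^ (2 * n + 1) := by
  classical
  set D := LieAlgebra.derivedSeries F L 1 with hD
  have hmem : ∀ x y : L, ⁅x, y⁆ ∈ D := by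
    intro x y
    rw [hD, LieAlgebra.derivedSeries_def, LieAlgebra.derivedSeriesOfIdeal_succ,
      LieAlgebra.derivedSeriesOfIdeal_zero]
    exact LieSubmodule.lie_mem_lie (LieSubmodule.mem_top x) (LieSubmodule.mem_top y)
  haveI : Finite D := Subtype.finite
  haveI : FiniteDimensional F D := Module.Finite.of_finite (R := F)
  have hDF : finrank F D = finrank F F := by rw [h, finrank_self]
  let φ : D ≃ₗ[F] F := LinearEquiv.ofFinrankEq _ _ hDF
  let β : LinearMap.BilinForm F L := LinearMap.mk₂ F
    (fun x y => φ ⟨⁅x, y⁆, hmem x y⟩)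
    (fun x z y => by rw [← map_add]; exact congrArg φ (Subtype.ext (add_lie x z y)))
    (fun c x y => by rw [← map_smul]; exact congrArg φ (Subtype.ext (smul_lie c x y)))
    (fun x y z => by rw [← map_add]; exact congrArg φ (Subtype.ext (lie_add x y z)))
    (fun c x y => by rw [← map_smul]; exact congrArg φ (Subtype.ext (lie_smul c x y)))
  have hb : ∀ x y : L, (β x y = 0 ↔ ⁅x, y⁆ = 0) := by
    intro x y
    rw [show β x y = φ ⟨⁅x, y⁆, hmem x y⟩ from rfl, LinearEquiv.map_eq_zero_iff,
      Submodule.mk_eq_zero]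
  have halt : β.IsAlt := by
    intro x
    rw [hb]
    exact lie_self x
  have hne : β ≠ 0 := by
    intro hb0
    have hbr : ∀ x y : L, ⁅x, y⁆ = 0 := by
      intro x y
      rw [← hb x y, hb0]
      rfl
    have hbot : D = ⊥ := by
      rw [hD, LieAlgebra.derivedSeries_def, LieAlgebra.derivedSeriesOfIdeal_succ,
        LieAlgebra.derivedSeriesOfIdeal_zero, LieSubmodule.lie_eq_bot_iff]
      intro x _ m _
      exact hbr x m
    rw [hbot] at h
    have hs : Subsingleton (⊥ : LieIdeal F L) := by
      constructor
      rintro ⟨a, ha⟩ ⟨b, hb⟩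
      rw [LieSubmodule.mem_bot] at ha hb
      simp [ha, hb]
    rw [finrank_zero_of_subsingleton] at h
    exact one_ne_zero h.symm
  have hcount : Nat.card {p : L × L // ⁅p.1, p.2⁆ = 0}
      = Nat.card {p : L × L // β p.1 p.2 = 0} :=
    Nat.card_congr (Equiv.subtypeEquivRight fun p => (hb p.1 p.2).symm)
  obtain ⟨n, hn1, hn2⟩ := key_lemma β halt hne
  exact ⟨n, hn1, by rw [commDeg, hcount, hn2]⟩


abbrev HV (F : Type) [Field F] (n : ℕ) : Type := (Fin n → F) × (Fin n → F)

def sp (F : Type) [Field F] (n : ℕ) : LinearMap.BilinForm F (HV F n) :=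
  LinearMap.mk₂ F (fun x y => ∑ i, x.1 i * y.2 i - ∑ i, x.2 i * y.1 i)
    (fun m₁ m₂ m => by
      simp only [Prod.fst_add, Prod.snd_add, Pi.add_apply, add_mul,
        Finset.sum_add_distrib]
      ring)
    (fun c m₁ m₂ => by
      simp only [Prod.smul_fst, Prod.smul_snd, Pi.smul_apply, smul_eq_mul]
      rw [mul_sub, Finset.mul_sum, Finset.mul_sum]
      congr 1 <;> exact Finset.sum_congr rfl fun i _ => by ring)
    (fun m m₁ m₂ => by
      simp only [Prod.fst_add, Prod.snd_add, Pi.add_apply, mul_add,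
        Finset.sum_add_distrib]
      ring)
    (fun c m m₁ => by
      simp only [Prod.smul_fst, Prod.smul_snd, Pi.smul_apply, smul_eq_mul]
      rw [mul_sub, Finset.mul_sum, Finset.mul_sum]
      congr 1 <;> exact Finset.sum_congr rfl fun i _ => by ring)

lemma sp_apply (F : Type) [Field F] (n : ℕ) (x y : HV F n) :
    sp F n x y = ∑ i, x.1 i * y.2 i - ∑ i, x.2 i * y.1 i := rfl

lemma sp_self (F : Type) [Field F] (n : ℕ) (x : HV F n) : sp F n x x = 0 := by
  rw [sp_apply, sub_eq_zero]
  exact Finset.sum_congr rfl fun i _ => mul_comm _ _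

def Heis (F : Type) [Field F] (n : ℕ) : Type := HV F n × F

instance (F : Type) [Field F] (n : ℕ) : AddCommGroup (Heis F n) :=
  inferInstanceAs (AddCommGroup (HV F n × F))
instance (F : Type) [Field F] (n : ℕ) : Module F (Heis F n) :=
  inferInstanceAs (Module F (HV F n × F))
instance (F : Type) [Field F] [Fintype F] (n : ℕ) : Fintype (Heis F n) :=
  inferInstanceAs (Fintype (HV F n × F))

instance (F : Type) [Field F] (n : ℕ) : LieRing (Heis F n) where
  bracket x y := ((0 : HV F n), sp F n x.1 y.1)
  add_lie x y z := by
    show ((0 : HV F n), sp F n (x.1 + y.1) z.1)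
      = ((0 : HV F n), sp F n x.1 z.1) + ((0 : HV F n), sp F n y.1 z.1)
    rw [map_add, LinearMap.add_apply, Prod.mk_add_mk, add_zero]
  lie_add x y z := by
    show ((0 : HV F n), sp F n x.1 (y.1 + z.1))
      = ((0 : HV F n), sp F n x.1 y.1) + ((0 : HV F n), sp F n x.1 z.1)
    rw [map_add, Prod.mk_add_mk, add_zero]
  lie_self x := by
    show ((0 : HV F n), sp F n x.1 x.1) = ((0 : HV F n), (0 : F))
    rw [sp_self]
  leibniz_lie x y z := by
    show ((0 : HV F n), sp F n x.1 (0 : HV F n))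
      = ((0 : HV F n), sp F n (0 : HV F n) z.1) + ((0 : HV F n), sp F n y.1 (0 : HV F n))
    rw [map_zero, LinearMap.map_zero₂, map_zero, Prod.mk_add_mk, add_zero, add_zero]

instance (F : Type) [Field F] (n : ℕ) : LieAlgebra F (Heis F n) where
  lie_smul t x y := by
    show ((0 : HV F n), sp F n x.1 (t • y.1))
      = t • (((0 : HV F n), sp F n x.1 y.1) : HV F n × F)
    rw [map_smul, Prod.smul_mk, smul_zero]

lemma heis_bracket (F : Type) [Field F] (n : ℕ) (x y : Heis F n) :
    ⁅x, y⁆ = ((0 : HV F n), sp F n x.1 y.1) := rfl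

lemma sp_ker (F : Type) [Field F] (n : ℕ) : LinearMap.ker (sp F n) = ⊥ := by
  rw [eq_bot_iff]
  rintro ⟨a, b⟩ hv
  rw [LinearMap.mem_ker] at hv
  have h1 : ∀ j, a j = 0 := by
    intro j
    have h := congrArg (fun f : (HV F n) →ₗ[F] F => f ((0 : Fin n → F), Pi.single j 1)) hv
    simpa [sp_apply, Pi.single_apply, mul_ite, Finset.sum_ite_eq'] using h
  have h2 : ∀ j, b j = 0 := by
    intro j
    have h := congrArg (fun f : (HV F n) →ₗ[F] F => f (Pi.single j 1, (0 : Fin n → F))) hv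
    simpa [sp_apply, Pi.single_apply, mul_ite, Finset.sum_ite_eq'] using h
  rw [Submodule.mem_bot, Prod.mk_eq_zero]
  exact ⟨funext h1, funext h2⟩

lemma hv_finrank (F : Type) [Field F] (n : ℕ) : finrank F (HV F n) = 0 + 2 * n := by
  rw [Module.finrank_prod, Module.finrank_pi, Fintype.card_fin]
  omega

lemma mem_inr (F : Type) [Field F] (n : ℕ) (m : Heis F n) :
    m ∈ LinearMap.range (LinearMap.inr F (HV F n) F) ↔ m.1 = 0 := by
  constructor
  · rintro ⟨c, rfl⟩
    rfl
  · intro h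
    exact ⟨m.2, Prod.ext h.symm rfl⟩

lemma heis_derived (F : Type) [Field F] (n : ℕ) (hn : 1 ≤ n) :
    LieAlgebra.derivedSeries F (Heis F n) 1 =
      ({ toSubmodule := LinearMap.range (LinearMap.inr F (HV F n) F),
         lie_mem := fun {x m} _ => (mem_inr F n _).mpr rfl } : LieIdeal F (Heis F n)) := by
  set J : LieIdeal F (Heis F n) :=
    { toSubmodule := LinearMap.range (LinearMap.inr F (HV F n) F),
      lie_mem := fun {x m} _ => (mem_inr F n _).mpr rfl } with hJ
  apply le_antisymm
  · rw [LieAlgebra.derivedSeries_def, LieAlgebra.derivedSeriesOfIdeal_succ,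
      LieAlgebra.derivedSeriesOfIdeal_zero]
    rw [LieSubmodule.lie_le_iff]
    intro x _ m _
    show ⁅x, m⁆ ∈ J
    exact (mem_inr F n _).mpr rfl
  · intro m hm
    have hm1 : m.1 = 0 := (mem_inr F n m).mp hm
    set j : Fin n := ⟨0, hn⟩ with hj
    set e : Heis F n := ((Pi.single j 1, 0), 0) with he
    set f : Heis F n := ((0, Pi.single j 1), 0) with hf
    have hef : ⁅e, f⁆ = (((0 : Fin n → F), (0 : Fin n → F)), (1 : F)) := by
      rw [heis_bracket]
      congr 1
      rw [he, hf]
      show sp F n (Pi.single j 1, 0) (0, Pi.single j 1) = 1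
      simp [sp_apply, Pi.single_apply, mul_ite, Finset.sum_ite_eq']
    have hmem : ⁅e, f⁆ ∈ LieAlgebra.derivedSeries F (Heis F n) 1 := by
      rw [LieAlgebra.derivedSeries_def, LieAlgebra.derivedSeriesOfIdeal_succ,
        LieAlgebra.derivedSeriesOfIdeal_zero]
      exact LieSubmodule.lie_mem_lie (LieSubmodule.mem_top e) (LieSubmodule.mem_top f)
    have hmsmul : m = m.2 • ⁅e, f⁆ := by
      rw [hef]
      show m = (m.2 • ((0 : Fin n → F), (0 : Fin n → F)), m.2 • (1 : F))
      have h00 : ((0 : Fin n → F), (0 : Fin n → F)) = (0 : HV F n) := rfl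
      rw [h00, smul_zero, smul_eq_mul, mul_one]
      exact Prod.ext hm1 rfl
    rw [hmsmul]
    exact (LieAlgebra.derivedSeries F (Heis F n) 1).smul_mem m.2 hmem

lemma heis_derived_finrank (F : Type) [Field F] (n : ℕ) (hn : 1 ≤ n) :
    finrank F (LieAlgebra.derivedSeries F (Heis F n) 1) = 1 := by
  rw [heis_derived F n hn]
  show finrank F (LinearMap.range (LinearMap.inr F (HV F n) F)) = 1
  rw [LinearMap.finrank_range_of_inj (LinearMap.inr_injective), finrank_self]

set_option maxHeartbeats 1000000 in
lemma heis_commDeg (F : Type) [Field F] [Fintype F] (n : ℕ) :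
    commDeg (Heis F n) =
      ((Fintype.card F : ℚ) ^ (2 * n) + (Fintype.card F : ℚ) - 1) /
        (Fintype.card F : ℚ) ^ (2 * n + 1) := by
  classical
  have hNV := key_exact (sp F n) (r := 0) (n := n)
    (by rw [sp_ker]; exact finrank_bot F _) (hv_finrank F n)
  let e : {p : Heis F n × Heis F n // ⁅p.1, p.2⁆ = 0} ≃
      ({p : HV F n × HV F n // sp F n p.1 p.2 = 0} × (F × F)) :=
    { toFun := fun s => (⟨(s.1.1.1, s.1.2.1), congrArg Prod.snd s.2⟩,
        (s.1.1.2, s.1.2.2))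
      invFun := fun t => ⟨((t.1.1.1, t.2.1), (t.1.1.2, t.2.2)),
        Prod.ext rfl t.1.2⟩
      left_inv := fun s => rfl
      right_inv := fun t => rfl }
  have hcount : Nat.card {p : Heis F n × Heis F n // ⁅p.1, p.2⁆ = 0}
      = Nat.card {p : HV F n × HV F n // sp F n p.1 p.2 = 0}
        * (Fintype.card F * Fintype.card F) := by
    rw [Nat.card_congr e, Nat.card_prod, Nat.card_prod]
    simp [Nat.card_eq_fintype_card]
  have hcardH : Nat.card (Heis F n) = Nat.card (HV F n) * Fintype.card F := by
    rw [show Nat.card (Heis F n) = Nat.card (HV F n × F) from rfl, Nat.card_prod]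
    simp [Nat.card_eq_fintype_card]
  have hq0 : (Fintype.card F : ℚ) ≠ 0 := by simp [Fintype.card_ne_zero]
  have hHV0 : (Nat.card (HV F n) : ℚ) ≠ 0 := by
    have : 0 < Nat.card (HV F n) := Nat.card_pos
    positivity
  rw [commDeg, hcount, hcardH, ← hNV]
  push_cast
  field_simp

/-- Over the finite field `F_q` (`q ≥ 2`), the set of commutativity degrees
of finite-dimensional Lie algebras whose derived subalgebra has dimension `1` is exactly
`{(q^(2n) + q - 1)/q^(2n+1) : n ≥ 1}`. -/
theorem stmt5 (q : ℕ) (hq : 2 ≤ q) (F : Type) [Field F] [Fintype F]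
    (hF : Fintype.card F = q) :
    {r : ℚ | ∃ M : FinLieAlgBundle F,
        Module.finrank F (LieAlgebra.derivedSeries F M.carrier 1) = 1 ∧
        commDeg M.carrier = r} =
      {r : ℚ | ∃ n : ℕ, 1 ≤ n ∧
        r = ((q : ℚ) ^ (2 * n) + q - 1) / (q : ℚ) ^ (2 * n + 1)} := by
  subst hF
  ext r
  simp only [Set.mem_setOf_eq]
  constructor
  · rintro ⟨M, hM, rfl⟩
    obtain ⟨n, hn1, hn2⟩ := forward M.carrier hM
    exact ⟨n, hn1, hn2⟩
  · rintro ⟨n, hn1, rfl⟩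
    exact ⟨⟨Heis F n⟩, heis_derived_finrank F n hn1, heis_commDeg F n⟩
end

section
/- Let L be a finite-dimensional non-abelian Lie algebra over the two-element field F_2 such that d(L) lies in the interval [1/2, 5/8]. Then d(L) = (2^{2n}+1)/2^{2n+1} for some positive integer n. -/
open Module Finset

open Module Finset

universe u

section counting

variable {F : Type*} [Field F] [Fintype F]

private lemma card_pair_sum {α β : Type*} [Fintype α] [Finite β] (P : α → β → Prop) :
    Nat.card {p : α × β // P p.1 p.2} = ∑ a : α, Nat.card {b : β // P a b} := by
  classical
  haveI := Fintype.ofFinite β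
  rw [Nat.card_eq_fintype_card,
    Fintype.card_congr (Equiv.subtypeProdEquivSigmaSubtype P), Fintype.card_sigma]
  simp [Nat.card_eq_fintype_card]

private lemma card_pair_sum' {α β : Type*} [Finite α] [Fintype β] (P : α → β → Prop) :
    Nat.card {p : α × β // P p.1 p.2} = ∑ b : β, Nat.card {a : α // P a b} := by
  classical
  haveI := Fintype.ofFinite α
  rw [← card_pair_sum (fun b a => P a b)]
  exact Nat.card_congr
    ⟨fun x => ⟨(x.1.2, x.1.1), x.2⟩, fun x => ⟨(x.1.2, x.1.1), x.2⟩,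
      fun _ => rfl, fun _ => rfl⟩

private lemma card_ker_fun {M : Type*} [AddCommGroup M] [Module F M] [Finite M]
    (ψ : M →ₗ[F] F) (h : ψ ≠ 0) :
    Nat.card {y : M // ψ y = 0} = Fintype.card F ^ (finrank F M - 1) := by
  classical
  haveI := Fintype.ofFinite M
  have h1 : Nat.card {y : M // ψ y = 0} = Nat.card (LinearMap.ker ψ) :=
    Nat.card_congr (Equiv.subtypeEquivRight (fun y => by simp [LinearMap.mem_ker]))
  have hle : finrank F (LinearMap.range ψ) ≤ 1 := by
    simpa [Module.finrank_self] using (LinearMap.range ψ).finrank_le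
  have hne : LinearMap.range ψ ≠ ⊥ := by rwa [ne_eq, LinearMap.range_eq_bot]
  have hpos : finrank F (LinearMap.range ψ) ≠ 0 := by
    rw [ne_eq, Submodule.finrank_eq_zero]
    exact hne
  have hrn := LinearMap.finrank_range_add_finrank_ker ψ
  have h2 : finrank F (LinearMap.ker ψ) = finrank F M - 1 := by omega
  haveI := Fintype.ofFinite (LinearMap.ker ψ)
  rw [h1, Nat.card_eq_fintype_card, card_eq_pow_finrank (K := F), h2]

private lemma card_submodule {M : Type*} [AddCommGroup M] [Module F M] [Finite M]
    (p : Submodule F M) : Nat.card p = Fintype.card F ^ finrank F p := by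
  haveI := Fintype.ofFinite p
  rw [Nat.card_eq_fintype_card]
  exact card_eq_pow_finrank (K := F)

private lemma sum_card {α : Type*} [Fintype α] (P : α → Prop) [DecidablePred P] (c : ℕ) :
    ∑ a : α, (if P a then 2 * c else c) = Fintype.card α * c + Nat.card {a // P a} * c := by
  classical
  have h : ∀ a, (if P a then 2 * c else c) = c + (if P a then c else 0) := by
    intro a; split <;> ring
  simp_rw [h]
  rw [Finset.sum_add_distrib, Finset.sum_const, ← Finset.sum_filter, Finset.sum_const]
  simp [Nat.card_eq_fintype_card, Fintype.card_subtype, mul_comm]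

end counting

private lemma alt_even {F : Type*} [Field F] :
    ∀ (n : ℕ) (V : Type u) [AddCommGroup V] [Module F V] [FiniteDimensional F V]
      (B : V →ₗ[F] V →ₗ[F] F), (∀ v, B v v = 0) → finrank F V = n →
      ∃ k, finrank F V = finrank F (LinearMap.ker B) + 2 * k := by
  intro n
  induction n using Nat.strong_induction_on with
  | _ n ih =>
    intro V _ _ _ B halt hn
    have hskew : ∀ a b : V, B a b = - B b a := by
      intro a b
      have h := halt (a + b)
      simp only [map_add, LinearMap.add_apply, halt a, halt b] at h
      linear_combination h
    by_cases hB : ∀ x y : V, B x y = 0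
    · refine ⟨0, ?_⟩
      have hk : LinearMap.ker B = ⊤ := by
        rw [LinearMap.ker_eq_top]
        ext x y
        simp [hB]
      rw [hk, finrank_top]
      simp
    · push_neg at hB
      obtain ⟨x, y0, hxy0⟩ := hB
      set y : V := (B x y0)⁻¹ • y0 with hy
      have hxy : B x y = 1 := by
        rw [hy, map_smul, smul_eq_mul]
        field_simp
      have hyx : B y x = -1 := by rw [hskew, hxy]
      have hx0 : x ≠ 0 := by
        intro h
        rw [h] at hxy
        simp at hxy
      have hy0' : y ≠ 0 := by
        intro h
        rw [h] at hxy
        simp at hxy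
      set U : Submodule F V := LinearMap.ker (B x) ⊓ LinearMap.ker (B y) with hU
      have memU : ∀ v : V, v ∈ U ↔ B x v = 0 ∧ B y v = 0 := by
        intro v
        simp [hU, Submodule.mem_inf, LinearMap.mem_ker]
      have hdec : ∀ v : V, v - (B x v) • y + (B y v) • x ∈ U := by
        intro v
        rw [memU]
        constructor
        · simp only [map_add, map_sub, map_smul, smul_eq_mul, hxy, halt x]
          ring
        · simp only [map_add, map_sub, map_smul, smul_eq_mul, hyx, halt y]
          ring
      set S : Submodule F V := Submodule.span F {x} ⊔ Submodule.span F {y} with hS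
      have hsupT : U ⊔ S = ⊤ := by
        rw [eq_top_iff]
        intro v _
        have hv : v = (v - (B x v) • y + (B y v) • x) + ((B x v) • y - (B y v) • x) := by
          module
        rw [hv]
        refine Submodule.add_mem _ (Submodule.mem_sup_left (hdec v)) (Submodule.mem_sup_right ?_)
        refine Submodule.sub_mem _ (Submodule.mem_sup_right ?_) (Submodule.mem_sup_left ?_)
        · exact Submodule.smul_mem _ _ (Submodule.mem_span_singleton_self y)
        · exact Submodule.smul_mem _ _ (Submodule.mem_span_singleton_self x)
      have hSrank : finrank F S ≤ 2 := by
        have h1 := Submodule.finrank_sup_add_finrank_inf_eq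
          (Submodule.span F {x}) (Submodule.span F {y})
        rw [finrank_span_singleton hx0, finrank_span_singleton hy0', ← hS] at h1
        omega
      -- upper bound on finrank U
      have hxU : x ∉ U := by
        rw [memU]
        rintro ⟨-, h2⟩
        rw [hyx] at h2
        exact one_ne_zero (neg_eq_zero.mp h2)
      have hyUx : y ∉ U ⊔ Submodule.span F {x} := by
        intro hmem
        obtain ⟨u, hu, w, hw, huw⟩ := Submodule.mem_sup.mp hmem
        obtain ⟨a, rfl⟩ := Submodule.mem_span_singleton.mp hw
        have h1 : B x y = 0 := by
          rw [← huw]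
          simp only [map_add, map_smul, smul_eq_mul, halt x, ((memU u).mp hu).1]
          ring
        rw [hxy] at h1
        exact one_ne_zero h1
      have hlt1 : U < U ⊔ Submodule.span F {x} :=
        lt_of_le_of_ne le_sup_left
          (fun h => hxU (h ▸ Submodule.mem_sup_right (Submodule.mem_span_singleton_self x)))
      have hlt2 : U ⊔ Submodule.span F {x} < ⊤ :=
        lt_top_iff_ne_top.mpr (fun h => hyUx (h ▸ Submodule.mem_top))
      have hub1 := Submodule.finrank_lt_finrank_of_lt hlt1
      have hub2 := Submodule.finrank_lt (K := F) (V := V) hlt2.ne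
      -- lower bound
      have hlb := Submodule.finrank_sup_add_finrank_inf_eq U S
      rw [hsupT, finrank_top] at hlb
      have hUrank : finrank F U = n - 2 ∧ 2 ≤ n := by
        constructor <;> omega
      -- restricted form
      set BU : U →ₗ[F] U →ₗ[F] F := B.domRestrict₁₂ U U with hBU
      have haltU : ∀ u : U, BU u u = 0 := fun u => halt u
      obtain ⟨k, hk⟩ := ih (n - 2) (by omega) U BU haltU (by omega)
      -- kernel comparison
      have hker : (LinearMap.ker BU).map U.subtype = LinearMap.ker B := by
        ext v
        constructor
        · rintro ⟨⟨u, hu⟩, hku, rfl⟩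
          rw [LinearMap.mem_ker]
          ext w
          have hw : w = (w - (B x w) • y + (B y w) • x) + ((B x w) • y - (B y w) • x) := by
            module
          have hux : B u x = 0 := by rw [hskew]; rw [((memU u).mp hu).1]; ring
          have huy : B u y = 0 := by rw [hskew]; rw [((memU u).mp hu).2]; ring
          have hu0 : B u (w - (B x w) • y + (B y w) • x) = 0 := by
            have h0 := LinearMap.congr_fun (LinearMap.mem_ker.mp hku)
              ⟨w - (B x w) • y + (B y w) • x, hdec w⟩
            simpa [hBU, LinearMap.domRestrict₁₂_apply] using h0
          rw [LinearMap.zero_apply]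
          calc B (U.subtype ⟨u, hu⟩) w = B u w := rfl
            _ = B u ((w - (B x w) • y + (B y w) • x) + ((B x w) • y - (B y w) • x)) := by
                rw [← hw]
            _ = 0 := by
                simp only [map_add, map_sub, map_smul, smul_eq_mul, hu0, hux, huy]
                ring
        · intro hv
          have hv' : B v = 0 := LinearMap.mem_ker.mp hv
          have hvU : v ∈ U := by
            rw [memU]
            constructor
            · rw [hskew, hv']; simp
            · rw [hskew, hv']; simp
          refine Submodule.mem_map.mpr ⟨⟨v, hvU⟩, ?_, rfl⟩
          rw [LinearMap.mem_ker]
          ext u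
          rw [LinearMap.domRestrict₁₂_apply, hv']
          simp
      have hkerrank : finrank F (LinearMap.ker B) = finrank F (LinearMap.ker BU) := by
        rw [← hker, Submodule.finrank_map_subtype_eq]
      refine ⟨k + 1, ?_⟩
      rw [hn, hkerrank]
      omega

/-- If a finite-dimensional non-abelian Lie algebra over the two-element
field `F_2` has commutativity degree in `[1/2, 5/8]`, then its commutativity degree is
`(2^(2n) + 1)/2^(2n+1)` for some positive integer `n`. -/
theorem stmt6 (F : Type*) [Field F] [Fintype F] (hF : Fintype.card F = 2)
    (L : Type*) [LieRing L] [LieAlgebra F L] [Fintype L] (hna : ¬ IsLieAbelian L)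
    (h1 : (1 : ℚ) / 2 ≤ commDeg L) (h2 : commDeg L ≤ 5 / 8) :
    ∃ n : ℕ, 1 ≤ n ∧ commDeg L = ((2 : ℚ) ^ (2 * n) + 1) / (2 : ℚ) ^ (2 * n + 1) := by
  classical
  obtain ⟨x0, y0, hxy0⟩ : ∃ x y : L, ⁅x, y⁆ ≠ 0 := by
    by_contra h
    push_neg at h
    exact hna ⟨h⟩
  haveI : Nontrivial L := ⟨x0, 0, fun h => hxy0 (by rw [h]; simp)⟩
  haveI : Finite (Module.Dual F L) :=
    Finite.of_injective (fun (φ : Module.Dual F L) => (φ : L → F)) DFunLike.coe_injective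
  haveI := Fintype.ofFinite (Module.Dual F L)
  set D := finrank F L with hD
  have hD1 : 0 < D := by rw [hD]; exact Module.finrank_pos
  have cardL : Fintype.card L = 2 ^ D := by rw [card_eq_pow_finrank (K := F), hF]
  have cardLnat : Nat.card L = 2 ^ D := by rw [Nat.card_eq_fintype_card, cardL]
  have cardDual : Fintype.card (Module.Dual F L) = 2 ^ D := by
    rw [card_eq_pow_finrank (K := F), hF, Subspace.dual_finrank_eq]
  set N := Nat.card {p : L × L // ⁅p.1, p.2⁆ = 0} with hNdef
  -- the hypothesis `h1` as a counting inequality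
  have hN1 : 2 ^ D * 2 ^ D ≤ 2 * N := by
    unfold commDeg at h1
    rw [← hNdef, cardLnat] at h1
    rw [div_le_div_iff₀ (by norm_num) (by positivity)] at h1
    have hq : ((2 : ℚ) ^ D * 2 ^ D) ≤ 2 * (N : ℚ) := by push_cast at h1 ⊢; nlinarith [h1]
    exact_mod_cast hq
  -- the center as a submodule
  set Z : Submodule F L :=
    { carrier := {x : L | ∀ y : L, ⁅x, y⁆ = 0}
      add_mem' := fun {a b} ha hb y => by rw [add_lie, ha y, hb y, add_zero]
      zero_mem' := fun y => zero_lie y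
      smul_mem' := fun r a ha y => by rw [smul_lie, ha y, smul_zero] } with hZ
  have memZ : ∀ v : L, v ∈ Z ↔ ∀ y : L, ⁅v, y⁆ = 0 := fun v => Iff.rfl
  set z := finrank F Z with hz
  have cardZ : Nat.card Z = 2 ^ z := by rw [card_submodule, hF, hz]
  -- the derived submodule and its annihilator
  set W : Submodule F L := Submodule.span F {v : L | ∃ a b : L, ⁅a, b⁆ = v} with hW
  set A : Submodule F (Module.Dual F L) := W.dualAnnihilator with hA
  have hAmem : ∀ φ : Module.Dual F L, φ ∈ A ↔ ∀ a b : L, φ ⁅a, b⁆ = 0 := by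
    intro φ
    rw [hA, Submodule.mem_dualAnnihilator]
    constructor
    · intro h a b
      exact h _ (Submodule.subset_span ⟨a, b, rfl⟩)
    · intro h w hw
      rw [hW] at hw
      induction hw using Submodule.span_induction with
      | mem v hv => obtain ⟨a, b, rfl⟩ := hv; exact h a b
      | zero => simp
      | add u v _ _ hu hv => rw [map_add, hu, hv, add_zero]
      | smul r v _ hv => rw [map_smul, hv, smul_zero]
  -- the radicals
  set Rsub : Module.Dual F L → Submodule F L := fun φ =>
    { carrier := {x : L | ∀ y : L, φ ⁅x, y⁆ = 0}
      add_mem' := fun {a b} ha hb y => by rw [add_lie, map_add, ha y, hb y, add_zero]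
      zero_mem' := fun y => by rw [zero_lie, map_zero]
      smul_mem' := fun r a ha y => by rw [smul_lie, map_smul, ha y, smul_zero] } with hRsub
  have memR : ∀ (φ : Module.Dual F L) (v : L), v ∈ Rsub φ ↔ ∀ y : L, φ ⁅v, y⁆ = 0 :=
    fun φ v => Iff.rfl
  -- the key identity: N = ∑ over functionals of the cardinality of the radical
  have key : N = ∑ φ : Module.Dual F L, Nat.card {x : L // ∀ y : L, φ ⁅x, y⁆ = 0} := by
    have hT1 : Nat.card {t : (L × L) × Module.Dual F L // t.2 ⁅t.1.1, t.1.2⁆ = 0}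
        = (2 ^ D * 2 ^ D) * 2 ^ (D - 1) + N * 2 ^ (D - 1) := by
      rw [card_pair_sum (fun (p : L × L) (φ : Module.Dual F L) => φ ⁅p.1, p.2⁆ = 0)]
      have step : ∀ p : L × L, Nat.card {φ : Module.Dual F L // φ ⁅p.1, p.2⁆ = 0}
          = if ⁅p.1, p.2⁆ = 0 then 2 * 2 ^ (D - 1) else 2 ^ (D - 1) := by
        intro p
        by_cases hv : ⁅p.1, p.2⁆ = 0
        · rw [if_pos hv]
          have he : Nat.card {φ : Module.Dual F L // φ ⁅p.1, p.2⁆ = 0}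
              = Nat.card (Module.Dual F L) :=
            Nat.card_congr (Equiv.subtypeUnivEquiv (fun φ => by rw [hv, map_zero]))
          rw [he, Nat.card_eq_fintype_card, cardDual, ← pow_succ']
          congr 1
          omega
        · rw [if_neg hv]
          have hψ : Module.Dual.eval F L ⁅p.1, p.2⁆ ≠ 0 := by
            intro h
            apply hv
            rw [← (Module.forall_dual_apply_eq_zero_iff F ⁅p.1, p.2⁆)]
            intro φ
            exact LinearMap.congr_fun h φ
          have hc := card_ker_fun (F := F) (Module.Dual.eval F L ⁅p.1, p.2⁆) hψ
          have he : Nat.card {φ : Module.Dual F L // φ ⁅p.1, p.2⁆ = 0}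
              = Nat.card {φ : Module.Dual F L // (Module.Dual.eval F L ⁅p.1, p.2⁆) φ = 0} :=
            Nat.card_congr (Equiv.subtypeEquivRight (fun φ => by
              simp [Module.Dual.eval_apply]))
          rw [he, hc, hF, Subspace.dual_finrank_eq]
      calc ∑ p : L × L, Nat.card {φ : Module.Dual F L // φ ⁅p.1, p.2⁆ = 0}
          = ∑ p : L × L, (if ⁅p.1, p.2⁆ = 0 then 2 * 2 ^ (D - 1) else 2 ^ (D - 1)) :=
            Finset.sum_congr rfl (fun p _ => step p)
        _ = Fintype.card (L × L) * 2 ^ (D - 1)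
            + Nat.card {p : L × L // ⁅p.1, p.2⁆ = 0} * 2 ^ (D - 1) := sum_card _ _
        _ = (2 ^ D * 2 ^ D) * 2 ^ (D - 1) + N * 2 ^ (D - 1) := by
            rw [Fintype.card_prod, cardL, ← hNdef]
    have hT2 : Nat.card {t : (L × L) × Module.Dual F L // t.2 ⁅t.1.1, t.1.2⁆ = 0}
        = (2 ^ D * 2 ^ D) * 2 ^ (D - 1)
          + (∑ φ : Module.Dual F L, Nat.card {x : L // ∀ y : L, φ ⁅x, y⁆ = 0}) * 2 ^ (D - 1) := by
      rw [card_pair_sum' (fun (p : L × L) (φ : Module.Dual F L) => φ ⁅p.1, p.2⁆ = 0)]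
      have step2 : ∀ φ : Module.Dual F L,
          Nat.card {p : L × L // φ ⁅p.1, p.2⁆ = 0}
            = 2 ^ D * 2 ^ (D - 1) + Nat.card {x : L // ∀ y : L, φ ⁅x, y⁆ = 0} * 2 ^ (D - 1) := by
        intro φ
        rw [card_pair_sum (fun (x : L) (y : L) => φ ⁅x, y⁆ = 0)]
        have step3 : ∀ x : L, Nat.card {y : L // φ ⁅x, y⁆ = 0}
            = if (∀ y : L, φ ⁅x, y⁆ = 0) then 2 * 2 ^ (D - 1) else 2 ^ (D - 1) := by
          intro x
          set ψ : L →ₗ[F] F := φ ∘ₗ (LieAlgebra.ad F L x) with hψdef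
          have hψy : ∀ y, ψ y = φ ⁅x, y⁆ := fun y => by
            rw [hψdef]; simp [LieAlgebra.ad_apply]
          by_cases hx : ∀ y : L, φ ⁅x, y⁆ = 0
          · rw [if_pos hx]
            have he : Nat.card {y : L // φ ⁅x, y⁆ = 0} = Nat.card L :=
              Nat.card_congr (Equiv.subtypeUnivEquiv hx)
            rw [he, cardLnat, ← pow_succ']
            congr 1
            omega
          · rw [if_neg hx]
            have hψ0 : ψ ≠ 0 := by
              intro h
              apply hx
              intro y
              rw [← hψy y, h, LinearMap.zero_apply]
            have hc := card_ker_fun (F := F) ψ hψ0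
            have he : Nat.card {y : L // φ ⁅x, y⁆ = 0} = Nat.card {y : L // ψ y = 0} :=
              Nat.card_congr (Equiv.subtypeEquivRight (fun y => by rw [hψy y]))
            rw [he, hc, hF]
        calc ∑ x : L, Nat.card {y : L // φ ⁅x, y⁆ = 0}
            = ∑ x : L, (if (∀ y : L, φ ⁅x, y⁆ = 0) then 2 * 2 ^ (D - 1) else 2 ^ (D - 1)) :=
              Finset.sum_congr rfl (fun x _ => step3 x)
          _ = Fintype.card L * 2 ^ (D - 1)
              + Nat.card {x : L // ∀ y : L, φ ⁅x, y⁆ = 0} * 2 ^ (D - 1) := sum_card _ _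
          _ = _ := by rw [cardL]
      calc ∑ φ : Module.Dual F L, Nat.card {p : L × L // φ ⁅p.1, p.2⁆ = 0}
          = ∑ φ : Module.Dual F L, (2 ^ D * 2 ^ (D - 1)
              + Nat.card {x : L // ∀ y : L, φ ⁅x, y⁆ = 0} * 2 ^ (D - 1)) :=
            Finset.sum_congr rfl (fun φ _ => step2 φ)
        _ = _ := by
            rw [Finset.sum_add_distrib, Finset.sum_const, ← Finset.sum_mul, Finset.card_univ,
              cardDual, smul_eq_mul]
            ring
    have heq := hT1.symm.trans hT2
    have hc0 : 0 < 2 ^ (D - 1) := Nat.two_pow_pos (D - 1)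
    have heq2 := Nat.add_left_cancel heq
    exact Nat.eq_of_mul_eq_mul_right hc0 heq2
  -- dimension of the annihilator
  have hannih : finrank F A + finrank F W = D := by
    have e1 : finrank F (L ⧸ W) = finrank F W.dualAnnihilator :=
      LinearEquiv.finrank_eq (Subspace.quotEquivAnnihilator W)
    have e2 := Submodule.finrank_quotient_add_finrank W
    rw [hA]
    omega
  have hWbot : W ≠ ⊥ := by
    intro h
    apply hxy0
    have hin : ⁅x0, y0⁆ ∈ W := Submodule.subset_span ⟨x0, y0, rfl⟩
    rw [h, Submodule.mem_bot] at hin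
    exact hin
  have ht1 : 1 ≤ finrank F W := by
    rcases Nat.eq_zero_or_pos (finrank F W) with h | h
    · exact absurd (Submodule.finrank_eq_zero.mp h) hWbot
    · omega
  have htD : finrank F W ≤ D := by
    have := W.finrank_le
    omega
  -- cardinality of the annihilator filter
  have cardA : (Finset.univ.filter (fun φ : Module.Dual F L => φ ∈ A)).card
      = 2 ^ (D - finrank F W) := by
    rw [← Fintype.card_subtype]
    have hcA : Fintype.card {φ : Module.Dual F L // φ ∈ A} = Nat.card A :=
      (Nat.card_eq_fintype_card).symm
    rw [hcA, card_submodule, hF]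
    congr 1
    omega
  have hab : (Finset.univ.filter (fun φ : Module.Dual F L => φ ∈ A)).card
      + (Finset.univ.filter (fun φ : Module.Dual F L => ¬ φ ∈ A)).card = 2 ^ D := by
    rw [Finset.card_filter_add_card_filter_not, Finset.card_univ, cardDual]
  -- value of radical cards on the annihilator
  have hRcA : ∀ φ : Module.Dual F L, φ ∈ A →
      Nat.card {x : L // ∀ y : L, φ ⁅x, y⁆ = 0} = 2 ^ D := by
    intro φ hφ
    have he : Nat.card {x : L // ∀ y : L, φ ⁅x, y⁆ = 0} = Nat.card L :=
      Nat.card_congr (Equiv.subtypeUnivEquiv (fun x y => (hAmem φ).mp hφ x y))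
    rw [he, cardLnat]
  -- bound off the annihilator
  have hRcNA : ∀ φ : Module.Dual F L, ¬ φ ∈ A →
      Nat.card {x : L // ∀ y : L, φ ⁅x, y⁆ = 0} ≤ 2 ^ (D - 2) := by
    intro φ hφ
    obtain ⟨a, b, hab'⟩ : ∃ a b : L, φ ⁅a, b⁆ ≠ 0 := by
      by_contra h
      push_neg at h
      exact hφ ((hAmem φ).mpr h)
    have hcard : Nat.card {x : L // ∀ y : L, φ ⁅x, y⁆ = 0} = Nat.card (Rsub φ) :=
      Nat.card_congr (Equiv.subtypeEquivRight (fun x => (memR φ x).symm))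
    have haR : a ∉ Rsub φ := fun h => hab' (((memR φ a).mp h) b)
    have hbR : b ∉ Rsub φ ⊔ Submodule.span F {a} := by
      intro hmem
      obtain ⟨r, hr, w, hw, hrw⟩ := Submodule.mem_sup.mp hmem
      obtain ⟨cc, rfl⟩ := Submodule.mem_span_singleton.mp hw
      apply hab'
      have hra : φ ⁅a, r⁆ = 0 := by
        have h2 : φ ⁅r, a⁆ = 0 := ((memR φ r).mp hr) a
        rw [← lie_skew, map_neg, h2, neg_zero]
      rw [← hrw, lie_add, lie_smul, lie_self, smul_zero, add_zero, hra]
    have hlt1 : Rsub φ < Rsub φ ⊔ Submodule.span F {a} :=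
      lt_of_le_of_ne le_sup_left
        (fun h => haR (h ▸ Submodule.mem_sup_right (Submodule.mem_span_singleton_self a)))
    have hlt2 : Rsub φ ⊔ Submodule.span F {a} < ⊤ :=
      lt_top_iff_ne_top.mpr (fun h => hbR (h ▸ Submodule.mem_top))
    have hr1 := Submodule.finrank_lt_finrank_of_lt hlt1
    have hr2 := Submodule.finrank_lt (K := F) (V := L) hlt2.ne
    rw [hcard, card_submodule, hF]
    exact Nat.pow_le_pow_right (by norm_num) (by omega)
  -- split the sum
  have hsplit : N = (Finset.univ.filter (fun φ : Module.Dual F L => φ ∈ A)).card * 2 ^ D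
      + ∑ φ ∈ Finset.univ.filter (fun φ : Module.Dual F L => ¬ φ ∈ A),
          Nat.card {x : L // ∀ y : L, φ ⁅x, y⁆ = 0} := by
    rw [key, ← Finset.sum_filter_add_sum_filter_not Finset.univ
      (fun φ : Module.Dual F L => φ ∈ A)]
    congr 1
    rw [Finset.sum_congr rfl (fun φ hφ => hRcA φ (Finset.mem_filter.mp hφ).2),
      Finset.sum_const, smul_eq_mul]
  -- the derived subalgebra is one dimensional
  have htW : finrank F W = 1 := by
    by_contra htW
    have ht2 : 2 ≤ finrank F W := by omega
    have hD2 : 2 ≤ D := by omega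
    set a := (Finset.univ.filter (fun φ : Module.Dual F L => φ ∈ A)).card with ha
    set bb := (Finset.univ.filter (fun φ : Module.Dual F L => ¬ φ ∈ A)).card with hbb
    have hbound : ∑ φ ∈ Finset.univ.filter (fun φ : Module.Dual F L => ¬ φ ∈ A),
        Nat.card {x : L // ∀ y : L, φ ⁅x, y⁆ = 0} ≤ bb * 2 ^ (D - 2) := by
      have := Finset.sum_le_card_nsmul
        (Finset.univ.filter (fun φ : Module.Dual F L => ¬ φ ∈ A))
        (fun φ => Nat.card {x : L // ∀ y : L, φ ⁅x, y⁆ = 0}) (2 ^ (D - 2))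
        (fun φ hφ => hRcNA φ (Finset.mem_filter.mp hφ).2)
      simpa [hbb, smul_eq_mul] using this
    have haa : a ≤ 2 ^ (D - 2) := by
      rw [cardA]
      exact Nat.pow_le_pow_right (by norm_num) (by omega)
    have hNle : N ≤ a * 2 ^ D + bb * 2 ^ (D - 2) := by
      rw [hsplit]
      omega
    have e4 : 4 * 2 ^ (D - 2) = 2 ^ D := by
      calc 4 * 2 ^ (D - 2) = 2 ^ (D - 2) * 2 ^ 2 := by ring
        _ = 2 ^ (D - 2 + 2) := (pow_add 2 _ 2).symm
        _ = 2 ^ D := by congr 1; omega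
    have h4N : 4 * N ≤ (3 * a + 2 ^ D) * 2 ^ D := by
      have hstep : 4 * N ≤ 4 * a * 2 ^ D + bb * (4 * 2 ^ (D - 2)) := by
        calc 4 * N ≤ 4 * (a * 2 ^ D + bb * 2 ^ (D - 2)) := Nat.mul_le_mul (Nat.le_refl 4) hNle
          _ = 4 * a * 2 ^ D + bb * (4 * 2 ^ (D - 2)) := by ring
      rw [e4] at hstep
      have h4a : 4 * a + bb = 3 * a + 2 ^ D := by omega
      calc 4 * N ≤ 4 * a * 2 ^ D + bb * 2 ^ D := hstep
        _ = (4 * a + bb) * 2 ^ D := by ring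
        _ = (3 * a + 2 ^ D) * 2 ^ D := by rw [h4a]
    have hfin : (3 * a + 2 ^ D) * 2 ^ D < 2 * (2 ^ D * 2 ^ D) := by
      have hlt : 3 * a + 2 ^ D < 2 * 2 ^ D := by
        have h3a : 3 * a ≤ 3 * 2 ^ (D - 2) := Nat.mul_le_mul (Nat.le_refl 3) haa
        have hl1 : 0 < 2 ^ (D - 2) := Nat.two_pow_pos _
        calc 3 * a + 2 ^ D ≤ 3 * 2 ^ (D - 2) + 2 ^ D := by omega
          _ < 4 * 2 ^ (D - 2) + 2 ^ D := by omega
          _ = 2 ^ D + 2 ^ D := by rw [e4]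
          _ = 2 * 2 ^ D := by ring
      calc (3 * a + 2 ^ D) * 2 ^ D < (2 * 2 ^ D) * 2 ^ D :=
            (Nat.mul_lt_mul_right (Nat.two_pow_pos D)).mpr hlt
        _ = 2 * (2 ^ D * 2 ^ D) := by ring
    omega
  -- pick a generator of W
  obtain ⟨c, hcW, hc0⟩ := Submodule.exists_mem_ne_zero_of_ne_bot hWbot
  have hWc : W = Submodule.span F {c} := by
    symm
    apply Submodule.eq_of_le_of_finrank_eq
    · rwa [Submodule.span_le, Set.singleton_subset_iff]
    · rw [finrank_span_singleton hc0, htW]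
  have F2 : ∀ r : F, r = 0 ∨ r = 1 := by
    intro r
    have hcard2 : ({0, 1} : Finset F).card = 2 := by
      rw [Finset.card_insert_of_notMem (by simp), Finset.card_singleton]
    have huniv : ({0, 1} : Finset F) = Finset.univ :=
      Finset.eq_univ_of_card _ (by rw [hcard2, hF])
    have hr : r ∈ ({0, 1} : Finset F) := huniv ▸ Finset.mem_univ r
    simpa using hr
  have hbr : ∀ a b : L, ⁅a, b⁆ = 0 ∨ ⁅a, b⁆ = c := by
    intro a b
    have hin : ⁅a, b⁆ ∈ W := Submodule.subset_span ⟨a, b, rfl⟩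
    rw [hWc, Submodule.mem_span_singleton] at hin
    obtain ⟨r, hr⟩ := hin
    rcases F2 r with h | h
    · left; rw [← hr, h, zero_smul]
    · right; rw [← hr, h, one_smul]
  have hAc : ∀ φ : Module.Dual F L, φ ∈ A ↔ φ c = 0 := by
    intro φ
    constructor
    · intro h
      exact (Submodule.mem_dualAnnihilator φ).mp h c hcW
    · intro h
      rw [hAmem φ]
      intro a b
      rcases hbr a b with h0 | hc'
      · rw [h0, map_zero]
      · rw [hc', h]
  -- off the annihilator the radical is the centre
  have hRZ : ∀ φ : Module.Dual F L, ¬ φ ∈ A →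
      Nat.card {x : L // ∀ y : L, φ ⁅x, y⁆ = 0} = 2 ^ z := by
    intro φ hφ
    have hφc : φ c ≠ 0 := fun h => hφ ((hAc φ).mpr h)
    have he : Nat.card {x : L // ∀ y : L, φ ⁅x, y⁆ = 0} = Nat.card Z := by
      apply Nat.card_congr (Equiv.subtypeEquivRight _)
      intro x
      constructor
      · intro h
        rw [memZ x]
        intro y
        rcases hbr x y with h0 | hc'
        · exact h0
        · exfalso; apply hφc; rw [← hc']; exact h y
      · intro h y
        rw [(memZ x).mp h y, map_zero]
    rw [he, cardZ]
  -- the value of N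
  have hNval : 2 * N = 2 ^ D * 2 ^ D + 2 ^ D * 2 ^ z := by
    have haA : (Finset.univ.filter (fun φ : Module.Dual F L => φ ∈ A)).card = 2 ^ (D - 1) := by
      rw [cardA, htW]
    have hbA : (Finset.univ.filter (fun φ : Module.Dual F L => ¬ φ ∈ A)).card = 2 ^ (D - 1) := by
      have h2D : (2:ℕ) ^ D = 2 * 2 ^ (D - 1) := by
        rw [← pow_succ']
        congr 1
        omega
      omega
    have hsum2 : ∑ φ ∈ Finset.univ.filter (fun φ : Module.Dual F L => ¬ φ ∈ A),
        Nat.card {x : L // ∀ y : L, φ ⁅x, y⁆ = 0} = 2 ^ (D - 1) * 2 ^ z := by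
      rw [Finset.sum_congr rfl (fun φ hφ => hRZ φ (Finset.mem_filter.mp hφ).2),
        Finset.sum_const, smul_eq_mul, hbA]
    have h2D : (2:ℕ) ^ D = 2 * 2 ^ (D - 1) := by
      rw [← pow_succ']
      congr 1
      omega
    calc 2 * N = 2 * (2 ^ (D - 1) * 2 ^ D + 2 ^ (D - 1) * 2 ^ z) := by
          rw [hsplit, haA, hsum2]
      _ = (2 * 2 ^ (D - 1)) * 2 ^ D + (2 * 2 ^ (D - 1)) * 2 ^ z := by ring
      _ = 2 ^ D * 2 ^ D + 2 ^ D * 2 ^ z := by rw [← h2D]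
  -- evenness of D - z via the alternating form attached to a functional not killing c
  obtain ⟨φ0, hφ0⟩ : ∃ φ : Module.Dual F L, φ c ≠ 0 := by
    by_contra h
    push_neg at h
    exact hc0 ((Module.forall_dual_apply_eq_zero_iff F c).mp h)
  set Bmap : L →ₗ[F] L →ₗ[F] F :=
    { toFun := fun x => φ0 ∘ₗ (LieAlgebra.ad F L x)
      map_add' := by
        intro uu vv
        ext w
        simp [LieAlgebra.ad_apply, add_lie]
      map_smul' := by
        intro r uu
        ext w
        simp [LieAlgebra.ad_apply, smul_lie] } with hBmap
  have hBapp : ∀ u w : L, Bmap u w = φ0 ⁅u, w⁆ := by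
    intro u w
    rw [hBmap]
    simp [LieAlgebra.ad_apply]
  have haltB : ∀ v : L, Bmap v v = 0 := by
    intro v
    rw [hBapp, lie_self, map_zero]
  obtain ⟨k, hk⟩ := alt_even D L Bmap haltB hD.symm
  have hkerB : LinearMap.ker Bmap = Z := by
    ext v
    rw [LinearMap.mem_ker, memZ v]
    constructor
    · intro h y
      have h2 : Bmap v y = 0 := by rw [h, LinearMap.zero_apply]
      rw [hBapp] at h2
      rcases hbr v y with h0 | hc'
      · exact h0
      · exfalso; apply hφ0; rw [← hc']; exact h2
    · intro h
      ext y
      rw [hBapp, h y, map_zero, LinearMap.zero_apply]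
  rw [hkerB] at hk
  have hZtop : Z ≠ ⊤ := by
    intro h
    apply hxy0
    exact (memZ x0).mp (h ▸ Submodule.mem_top) y0
  have hzD : z < D := by
    have := Submodule.finrank_lt (K := F) (V := L) (lt_top_iff_ne_top.mpr hZtop).ne
    omega
  have hk1 : 1 ≤ k := by omega
  refine ⟨k, hk1, ?_⟩
  have hDzk : D = z + 2 * k := by omega
  have hNat : N * 2 ^ (2 * k + 1) = (2 ^ (2 * k) + 1) * (2 ^ D) ^ 2 := by
    have h2 : 2 * (N * 2 ^ (2 * k + 1)) = 2 * ((2 ^ (2 * k) + 1) * (2 ^ D) ^ 2) := by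
      calc 2 * (N * 2 ^ (2 * k + 1)) = (2 * N) * 2 ^ (2 * k + 1) := by ring
        _ = (2 ^ D * 2 ^ D + 2 ^ D * 2 ^ z) * 2 ^ (2 * k + 1) := by rw [hNval]
        _ = 2 * ((2 ^ (2 * k) + 1) * (2 ^ D) ^ 2) := by
            rw [hDzk]
            simp only [pow_add, pow_mul, pow_succ]
            ring
    exact Nat.eq_of_mul_eq_mul_left (by norm_num) h2
  unfold commDeg
  rw [← hNdef, cardLnat]
  rw [div_eq_div_iff (by positivity) (by positivity)]
  push_cast
  exact_mod_cast congrArg (Nat.cast : ℕ → ℚ) hNat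
end

section
/- Let L be a finite-dimensional Lie algebra over the finite field F_q (q ≥ 2) such that the quotient L/Z(L) by the center has dimension 3. Then d(L) equals either (2q²-1)/q⁴ or (q³+q²-1)/q⁵. -/
namespace Stmt7Aux

open Module

variable (F : Type*) [Field F] {L : Type*} [LieRing L] [LieAlgebra F L]

/-- The centralizer of an element, as a submodule. -/
def cent (x : L) : Submodule F L where
  carrier := {y | ⁅x, y⁆ = 0}
  add_mem' := by
    intro a b ha hb
    simp only [Set.mem_setOf_eq, lie_add] at *
    rw [ha, hb, add_zero]
  zero_mem' := lie_zero x
  smul_mem' := by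
    intro c a ha
    simp only [Set.mem_setOf_eq, lie_smul] at *
    rw [ha, smul_zero]

/-- The center, as a submodule. -/
abbrev Zc (L : Type*) [LieRing L] [LieAlgebra F L] : Submodule F L :=
  (LieAlgebra.center F L).toSubmodule

variable {F}

lemma mem_cent {x y : L} : y ∈ cent F x ↔ ⁅x, y⁆ = 0 := Iff.rfl

lemma self_mem_cent (x : L) : x ∈ cent F x := lie_self x

lemma mem_Zc_iff {x : L} : x ∈ Zc F L ↔ ∀ y : L, ⁅y, x⁆ = 0 := by
  rw [LieSubmodule.mem_toSubmodule]
  exact LieModule.mem_maxTrivSubmodule F L L x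

lemma lie_eq_zero_of_mem_Zc {z : L} (hz : z ∈ Zc F L) (a : L) : ⁅z, a⁆ = 0 := by
  have h := (mem_Zc_iff.mp hz) a
  rw [← neg_eq_zero, lie_skew] at h
  exact h

lemma Zc_le_cent (x : L) : Zc F L ≤ cent F x := by
  intro z hz
  exact (mem_Zc_iff.mp hz) x

lemma cent_eq_top {x : L} (hx : x ∈ Zc F L) : cent F x = ⊤ := by
  refine Submodule.eq_top_iff'.mpr fun y => ?_
  exact lie_eq_zero_of_mem_Zc hx y

lemma cent_ne_top {x : L} (hx : x ∉ Zc F L) : cent F x ≠ ⊤ := by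
  intro h
  apply hx
  rw [mem_Zc_iff]
  intro y
  have hy : y ∈ cent F x := h ▸ Submodule.mem_top
  have : ⁅x, y⁆ = 0 := hy
  rw [← neg_eq_zero, lie_skew]
  exact this

variable [Module.Finite F L]

lemma finrank_cent_le {x : L} (hx : x ∉ Zc F L)
    (htot : finrank F L = finrank F (Zc F L) + 3) :
    finrank F (cent F x) ≤ finrank F (Zc F L) + 2 := by
  have h := Submodule.finrank_lt (K := F) (V := L)
    (cent_ne_top hx)
  omega

lemma le_finrank_cent {x : L} (hx : x ∉ Zc F L) :
    finrank F (Zc F L) + 1 ≤ finrank F (cent F x) := by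
  have h1 : Zc F L < Zc F L ⊔ Submodule.span F {x} :=
    SetLike.lt_iff_le_and_exists.mpr
      ⟨le_sup_left, x, Submodule.mem_sup_right (Submodule.mem_span_singleton_self x), hx⟩
  have h2 : Zc F L ⊔ Submodule.span F {x} ≤ cent F x :=
    sup_le (Zc_le_cent x)
      ((Submodule.span_singleton_le_iff_mem x _).mpr (self_mem_cent x))
  have h3 := Submodule.finrank_lt_finrank_of_lt h1
  have h4 := Submodule.finrank_mono h2
  omega

lemma centA {x y : L} (hx : x ∉ Zc F L)
    (htot : finrank F L = finrank F (Zc F L) + 3)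
    (hdim : finrank F (cent F x) = finrank F (Zc F L) + 2)
    (hyx : y ∈ cent F x) (hy : y ∉ Zc F L) : cent F y = cent F x := by
  have hxy : ⁅x, y⁆ = 0 := hyx
  have hyx0 : ⁅y, x⁆ = 0 := by rw [← neg_eq_zero, lie_skew]; exact hxy
  have hle : cent F x ≤ cent F y := by
    by_cases hcase : y ∈ Zc F L ⊔ Submodule.span F {x}
    · obtain ⟨z, hz, w, hw, hzw⟩ := Submodule.mem_sup.mp hcase
      obtain ⟨c, rfl⟩ := Submodule.mem_span_singleton.mp hw
      intro a ha
      have hxa : ⁅x, a⁆ = 0 := ha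
      show ⁅y, a⁆ = 0
      rw [← hzw, add_lie, lie_eq_zero_of_mem_Zc hz, smul_lie, hxa, smul_zero,
        add_zero]
    · set W := Zc F L ⊔ Submodule.span F {x} ⊔ Submodule.span F {y} with hWdef
      have hWle : W ≤ cent F x := by
        refine sup_le (sup_le (Zc_le_cent x) ?_) ?_
        · exact (Submodule.span_singleton_le_iff_mem x _).mpr (self_mem_cent x)
        · exact (Submodule.span_singleton_le_iff_mem y _).mpr hyx
      have h1 : Zc F L < Zc F L ⊔ Submodule.span F {x} :=
        SetLike.lt_iff_le_and_exists.mpr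
          ⟨le_sup_left, x, Submodule.mem_sup_right (Submodule.mem_span_singleton_self x), hx⟩
      have h2 : Zc F L ⊔ Submodule.span F {x} < W :=
        SetLike.lt_iff_le_and_exists.mpr
          ⟨le_sup_left, y, Submodule.mem_sup_right (Submodule.mem_span_singleton_self y), hcase⟩
      have hr1 := Submodule.finrank_lt_finrank_of_lt h1
      have hr2 := Submodule.finrank_lt_finrank_of_lt h2
      have hWrank : finrank F (cent F x) ≤ finrank F W := by omega
      have hWeq : W = cent F x := Submodule.eq_of_le_of_finrank_le hWle hWrank
      intro a ha
      have haW : a ∈ W := hWeq ▸ ha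
      obtain ⟨b, hb, wy, hwy, hsum⟩ := Submodule.mem_sup.mp haW
      obtain ⟨z, hz, wx, hwx, hzw⟩ := Submodule.mem_sup.mp hb
      obtain ⟨s, rfl⟩ := Submodule.mem_span_singleton.mp hwx
      obtain ⟨t, rfl⟩ := Submodule.mem_span_singleton.mp hwy
      show ⁅y, a⁆ = 0
      have hyz : ⁅y, z⁆ = 0 := (mem_Zc_iff.mp hz) y
      rw [← hsum, ← hzw, lie_add, lie_add, lie_smul, lie_smul, hyz, hyx0,
        lie_self, smul_zero, smul_zero, add_zero, add_zero]
  have := Submodule.eq_of_le_of_finrank_le hle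
    (by rw [hdim]; exact finrank_cent_le hy htot)
  exact this.symm

lemma centB {x w : L} (htot : finrank F L = finrank F (Zc F L) + 3)
    (hx : x ∉ Zc F L) (hw : w ∉ Zc F L)
    (hdx : finrank F (cent F x) = finrank F (Zc F L) + 2)
    (hdw : finrank F (cent F w) = finrank F (Zc F L) + 2) :
    cent F w = cent F x := by
  have hint : ¬ (cent F x ⊓ cent F w ≤ Zc F L) := by
    intro hle
    have h1 := Submodule.finrank_sup_add_finrank_inf_eq (cent F x) (cent F w)
    have h2 : finrank F ↥(cent F x ⊔ cent F w) ≤ finrank F L :=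
      Submodule.finrank_le _
    have h3 := Submodule.finrank_mono hle
    omega
  obtain ⟨u, hu, huZ⟩ := (SetLike.not_le_iff_exists).mp hint
  have h1 : cent F u = cent F x :=
    centA hx htot hdx (Submodule.mem_inf.mp hu).1 huZ
  have h2 : cent F u = cent F w :=
    centA hw htot hdw (Submodule.mem_inf.mp hu).2 huZ
  rw [← h2, h1]

lemma helper_sum {α : Type*} [Fintype α] (p : α → Prop) [DecidablePred p] (B : ℚ) :
    ∑ x : α, (if p x then B else 0) = (Nat.card {x // p x} : ℚ) * B := by
  rw [← Finset.sum_filter, Finset.sum_const, ← Fintype.card_subtype,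
    Nat.card_eq_fintype_card, nsmul_eq_mul]

end Stmt7Aux

open Stmt7Aux Module

/-- A finite-dimensional Lie algebra over the finite field `F_q` (`q ≥ 2`)
with `dim L/Z(L) = 3` has commutativity degree `(2q² - 1)/q⁴` or `(q³ + q² - 1)/q⁵`. -/
theorem stmt7 (q : ℕ) (hq : 2 ≤ q) (F : Type*) [Field F] [Fintype F]
    (hF : Fintype.card F = q) (L : Type*) [LieRing L] [LieAlgebra F L] [Fintype L]
    (hZ : Module.finrank F (L ⧸ LieAlgebra.center F L) = 3) :
    commDeg L = (2 * (q : ℚ) ^ 2 - 1) / (q : ℚ) ^ 4 ∨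
      commDeg L = ((q : ℚ) ^ 3 + (q : ℚ) ^ 2 - 1) / (q : ℚ) ^ 5 := by
  classical
  set m := finrank F (Zc F L) with hm
  set c : ℚ := (q : ℚ) with hc
  have hc0 : c ≠ 0 := by
    rw [hc]
    exact Nat.cast_ne_zero.mpr (by omega)
  -- total dimension
  have hquot : finrank F (L ⧸ (Zc F L)) = 3 := hZ
  have htot : finrank F L = m + 3 := by
    have h := Submodule.finrank_quotient_add_finrank (R := F) (M := L) (Zc F L)
    rw [hquot] at h
    omega
  -- cardinality of submodules
  have cardSub : ∀ p : Submodule F L, (Nat.card p : ℚ) = c ^ finrank F p := by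
    intro p
    have : Fintype p := Fintype.ofFinite _
    rw [Nat.card_eq_fintype_card]
    rw [card_eq_pow_finrank (K := F) (V := p), hF]
    push_cast
    rfl
  have cardL : (Nat.card L : ℚ) = c ^ (m + 3) := by
    rw [Nat.card_eq_fintype_card, card_eq_pow_finrank (K := F) (V := L), hF, htot]
    push_cast
    rfl
  -- the numerator as a sum over x of centralizer sizes
  have hN : (Nat.card {p : L × L // ⁅p.1, p.2⁆ = 0} : ℚ) =
      ∑ x : L, (Nat.card {y : L // ⁅x, y⁆ = 0} : ℚ) := by
    rw [Nat.card_eq_fintype_card,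
      Fintype.card_congr (Equiv.subtypeProdEquivSigmaSubtype fun (a b : L) => ⁅a, b⁆ = 0),
      Fintype.card_sigma]
    push_cast
    refine Finset.sum_congr rfl fun x _ => ?_
    rw [Nat.card_eq_fintype_card]
  have hcent : ∀ x : L, (Nat.card {y : L // ⁅x, y⁆ = 0} : ℚ) = c ^ finrank F (cent F x) := by
    intro x
    rw [Nat.card_congr (Equiv.subtypeEquivRight (fun y => (mem_cent (F := F)).symm))]
    exact cardSub (cent F x)
  have cardZc : (Nat.card {x : L // x ∈ Zc F L} : ℚ) = c ^ m := by
    rw [Nat.card_congr (Equiv.subtypeEquivRight (fun y => Iff.rfl) :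
      {x : L // x ∈ Zc F L} ≃ (Zc F L : Submodule F L))]
    exact cardSub _
  -- central elements have full centralizer
  have hZfull : ∀ x : L, x ∈ Zc F L → finrank F (cent F x) = m + 3 := by
    intro x hx
    rw [cent_eq_top hx, finrank_top, htot]
  by_cases hS : ∃ x : L, x ∉ Zc F L ∧ finrank F (cent F x) = m + 2
  · -- case: some noncentral element has large centralizer
    left
    obtain ⟨x₀, hx₀Z, hd₀⟩ := hS
    have key : ∀ x : L, (Nat.card {y : L // ⁅x, y⁆ = 0} : ℚ) =
        c ^ (m + 1) + (if x ∈ cent F x₀ then c ^ (m + 2) - c ^ (m + 1) else 0)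
          + (if x ∈ Zc F L then c ^ (m + 3) - c ^ (m + 2) else 0) := by
      intro x
      rw [hcent x]
      by_cases hxZ : x ∈ Zc F L
      · rw [if_pos hxZ, if_pos (Zc_le_cent x₀ hxZ), hZfull x hxZ]
        ring
      · rw [if_neg hxZ]
        by_cases hxc : x ∈ cent F x₀
        · rw [if_pos hxc]
          have hdx : finrank F (cent F x) = m + 2 := by
            rw [centA hx₀Z htot hd₀ hxc hxZ]; exact hd₀
          rw [hdx]; ring
        · rw [if_neg hxc]
          have h1 := le_finrank_cent (F := F) hxZ
          have h2 := finrank_cent_le (F := F) hxZ htot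
          have h3 : finrank F (cent F x) ≠ m + 2 := by
            intro hd
            apply hxc
            have := centB htot hx₀Z hxZ hd₀ hd
            rw [← this]
            exact self_mem_cent x
          have hdx : finrank F (cent F x) = m + 1 := by omega
          rw [hdx]; ring
    have cardC0 : (Nat.card {x : L // x ∈ cent F x₀} : ℚ) = c ^ (m + 2) := by
      rw [Nat.card_congr (Equiv.subtypeEquivRight (fun y => Iff.rfl) :
        {x : L // x ∈ cent F x₀} ≃ (cent F x₀ : Submodule F L))]
      rw [cardSub (cent F x₀), hd₀]
    have hsum : (Nat.card {p : L × L // ⁅p.1, p.2⁆ = 0} : ℚ) =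
        c ^ (m + 3) * c ^ (m + 1) + c ^ (m + 2) * (c ^ (m + 2) - c ^ (m + 1))
          + c ^ m * (c ^ (m + 3) - c ^ (m + 2)) := by
      rw [hN, Finset.sum_congr rfl fun x _ => key x]
      rw [Finset.sum_add_distrib, Finset.sum_add_distrib, Finset.sum_const,
        helper_sum (fun x : L => x ∈ cent F x₀), helper_sum (fun x : L => x ∈ Zc F L),
        cardC0, cardZc]
      have : ((Finset.univ (α := L)).card : ℚ) = c ^ (m + 3) := by
        rw [Finset.card_univ, ← Nat.card_eq_fintype_card]
        exact cardL
      rw [nsmul_eq_mul, this]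
    rw [commDeg, hsum, cardL]
    rw [div_eq_div_iff (by positivity) (by positivity)]
    ring
  · -- case: all noncentral elements have small centralizer
    right
    push_neg at hS
    have key : ∀ x : L, (Nat.card {y : L // ⁅x, y⁆ = 0} : ℚ) =
        c ^ (m + 1) + (if x ∈ Zc F L then c ^ (m + 3) - c ^ (m + 1) else 0) := by
      intro x
      rw [hcent x]
      by_cases hxZ : x ∈ Zc F L
      · rw [if_pos hxZ, hZfull x hxZ]; ring
      · rw [if_neg hxZ]
        have h1 := le_finrank_cent (F := F) hxZ
        have h2 := finrank_cent_le (F := F) hxZ htot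
        have h3 := hS x hxZ
        have hdx : finrank F (cent F x) = m + 1 := by omega
        rw [hdx]; ring
    have hsum : (Nat.card {p : L × L // ⁅p.1, p.2⁆ = 0} : ℚ) =
        c ^ (m + 3) * c ^ (m + 1) + c ^ m * (c ^ (m + 3) - c ^ (m + 1)) := by
      rw [hN, Finset.sum_congr rfl fun x _ => key x]
      rw [Finset.sum_add_distrib, Finset.sum_const,
        helper_sum (fun x : L => x ∈ Zc F L), cardZc]
      have : ((Finset.univ (α := L)).card : ℚ) = c ^ (m + 3) := by
        rw [Finset.card_univ, ← Nat.card_eq_fintype_card]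
        exact cardL
      rw [nsmul_eq_mul, this]
    rw [commDeg, hsum, cardL]
    rw [div_eq_div_iff (by positivity) (by positivity)]
    ring
end

section
/- Let L be a finite-dimensional Lie algebra over the finite field F_q (q ≥ 2) such that dim L/Z(L) = 3. Then the derived subalgebra L² has dimension 2 or 3. -/
open Module



/-- A finite-dimensional Lie algebra over the finite field `F_q` (`q ≥ 2`)
with `dim L/Z(L) = 3` has derived subalgebra of dimension `2` or `3`. -/
theorem stmt8 (q : ℕ) (hq : 2 ≤ q) (F : Type*) [Field F] [Fintype F]
    (hF : Fintype.card F = q) (L : Type*) [LieRing L] [LieAlgebra F L]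
    [Module.Finite F L]
    (hZ : Module.finrank F (L ⧸ LieAlgebra.center F L) = 3) :
    Module.finrank F (LieAlgebra.derivedSeries F L 1) = 2 ∨
      Module.finrank F (LieAlgebra.derivedSeries F L 1) = 3 := by
  classical
  set Zs : Submodule F L := (LieAlgebra.center F L).toSubmodule with hZsdef
  set Ds : Submodule F L := (LieAlgebra.derivedSeries F L 1).toSubmodule with hDsdef
  have hfr : Module.finrank F (LieAlgebra.derivedSeries F L 1) = Module.finrank F Ds := rfl
  have hZq : Module.finrank F (L ⧸ Zs) = 3 := hZ
  have hmemZ : ∀ m : L, m ∈ Zs ↔ ∀ t : L, ⁅t, m⁆ = 0 := fun m =>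
    (LieSubmodule.mem_toSubmodule _).trans (LieModule.mem_maxTrivSubmodule F L L m)
  have hDtop : LieAlgebra.derivedSeries F L 1 = ⁅(⊤ : LieIdeal F L), (⊤ : LieIdeal F L)⁆ := by
    rw [LieAlgebra.derivedSeries_def, LieAlgebra.derivedSeriesOfIdeal_succ,
      LieAlgebra.derivedSeriesOfIdeal_zero]
  have hmemD : ∀ a b : L, ⁅a, b⁆ ∈ Ds := by
    intro a b
    rw [hDsdef, LieSubmodule.mem_toSubmodule, hDtop]
    exact LieSubmodule.lie_mem_lie (LieSubmodule.mem_top _) (LieSubmodule.mem_top _)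
  -- basis of the quotient, lifted
  obtain ⟨e, he⟩ : ∃ e : Fin 3 → L, ∀ i,
      Zs.mkQ (e i) = (Module.finBasisOfFinrankEq F (L ⧸ Zs) hZq) i := by
    choose e he using fun i => Zs.mkQ_surjective ((Module.finBasisOfFinrankEq F (L ⧸ Zs) hZq) i)
    exact ⟨e, he⟩
  set b := Module.finBasisOfFinrankEq F (L ⧸ Zs) hZq with hb
  -- decomposition
  have hdec : ∀ a : L, ∃ (α : Fin 3 → F) (z : L), z ∈ Zs ∧ a = (∑ i, α i • e i) + z := by
    intro a
    refine ⟨fun i => b.repr (Zs.mkQ a) i, a - ∑ i, b.repr (Zs.mkQ a) i • e i, ?_, by abel⟩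
    rw [← Submodule.Quotient.mk_eq_zero, ← Submodule.mkQ_apply]
    have : Zs.mkQ (a - ∑ i, b.repr (Zs.mkQ a) i • e i)
        = Zs.mkQ a - ∑ i, b.repr (Zs.mkQ a) i • Zs.mkQ (e i) := by
      rw [map_sub, map_sum]; simp only [map_smul]
    rw [this]
    simp only [he]
    rw [b.sum_repr (Zs.mkQ a)]
    exact sub_self _
  -- the span of the three basic brackets
  set T : Submodule F L := Submodule.span F {⁅e 0, e 1⁆, ⁅e 0, e 2⁆, ⁅e 1, e 2⁆} with hTdef
  have hTij : ∀ i j : Fin 3, ⁅e i, e j⁆ ∈ T := by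
    have h01 : ⁅e 0, e 1⁆ ∈ T := Submodule.subset_span (by simp)
    have h02 : ⁅e 0, e 2⁆ ∈ T := Submodule.subset_span (by simp)
    have h12 : ⁅e 1, e 2⁆ ∈ T := Submodule.subset_span (by simp)
    intro i j
    fin_cases i <;> fin_cases j <;>
      first
        | (simp only [lie_self]; exact T.zero_mem)
        | assumption
        | (rw [← lie_skew]; exact T.neg_mem (by assumption))
  have lie_sum' : ∀ (x : L) (f : Fin 3 → L), ⁅x, ∑ i, f i⁆ = ∑ i, ⁅x, f i⁆ := by
    intro x f
    have := map_sum (LieAlgebra.ad F L x) f Finset.univ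
    simp only [LieAlgebra.ad_apply] at this
    exact this
  have sum_lie' : ∀ (f : Fin 3 → L) (c : L), ⁅∑ i, f i, c⁆ = ∑ i, ⁅f i, c⁆ := by
    intro f c
    rw [← lie_skew, lie_sum' c f, ← Finset.sum_neg_distrib]
    exact Finset.sum_congr rfl fun i _ => lie_skew _ _
  have hmem1 : ∀ (c : L) (i : Fin 3), ⁅e i, c⁆ ∈ T := by
    intro c i
    obtain ⟨β, w, hw, rfl⟩ := hdec c
    rw [lie_add, (hmemZ w).1 hw (e i), add_zero, lie_sum']
    exact T.sum_mem fun j _ => by rw [lie_smul]; exact T.smul_mem _ (hTij i j)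
  have key : ∀ a c : L, ⁅a, c⁆ ∈ T := by
    intro a c
    obtain ⟨α, z, hz, rfl⟩ := hdec a
    have hzc : ⁅z, c⁆ = 0 := by rw [← lie_skew, (hmemZ z).1 hz c, neg_zero]
    rw [add_lie, hzc, add_zero, sum_lie']
    exact T.sum_mem fun i _ => by rw [smul_lie]; exact T.smul_mem _ (hmem1 c i)
  have hDT : Ds ≤ T := by
    rw [hDsdef, hDtop, LieSubmodule.lieIdeal_oper_eq_linear_span']
    refine Submodule.span_le.2 ?_
    rintro m ⟨x, -, n, -, rfl⟩
    exact key x n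
  have hT3 : Module.finrank F T ≤ 3 := by
    refine le_trans (finrank_span_le_card (R := F)
      ({⁅e 0, e 1⁆, ⁅e 0, e 2⁆, ⁅e 1, e 2⁆} : Set L)) ?_
    rw [Set.toFinset_insert, Set.toFinset_insert, Set.toFinset_singleton]
    refine (Finset.card_insert_le _ _).trans (Nat.succ_le_succ ?_)
    exact (Finset.card_insert_le _ _).trans (Nat.succ_le_succ (by simp))
  have hD3 : Module.finrank F Ds ≤ 3 := le_trans (Submodule.finrank_mono hDT) hT3
  -- the derived algebra is not trivial
  have hD0 : Module.finrank F Ds ≠ 0 := by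
    intro h0
    have hbot : Ds = ⊥ := Submodule.finrank_eq_zero.mp h0
    have hzt : Zs = ⊤ := by
      rw [eq_top_iff]
      intro a _
      rw [hmemZ]
      intro t
      have h := hmemD t a
      rw [hbot] at h
      simpa using h
    have e1 := Submodule.finrank_quotient_add_finrank Zs
    have e2 : Module.finrank F Zs = Module.finrank F L := by rw [hzt]; exact finrank_top F L
    have e3 : Module.finrank F (⊤ : Submodule F L) = Module.finrank F L := finrank_top F L
    omega
  -- the derived algebra is not one-dimensional
  have hD1 : Module.finrank F Ds ≠ 1 := by
    intro h1
    obtain ⟨x, hxspan⟩ : ∃ x : L, Ds = Submodule.span F {x} := by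
      have hp : Ds.IsPrincipal := (Submodule.finrank_le_one_iff_isPrincipal Ds).mp (by omega)
      obtain ⟨x, hx⟩ := hp
      exact ⟨x, hx⟩
    have hx0 : x ≠ 0 := by
      rintro rfl
      rw [Submodule.span_zero_singleton] at hxspan
      rw [hxspan, finrank_bot] at h1
      exact one_ne_zero h1.symm
    by_cases hxZ : x ∈ Zs
    · -- `x` is central : contradiction via the degenerate alternating form
      have hc : ∀ i j : Fin 3, ∃ c : F, ⁅e i, e j⁆ = c • x := by
        intro i j
        have h := hmemD (e i) (e j)
        rw [hxspan, Submodule.mem_span_singleton] at h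
        obtain ⟨cij, hcij⟩ := h
        exact ⟨cij, hcij.symm⟩
      choose c hcc using hc
      have hdiag : ∀ i, c i i = 0 := by
        intro i
        have h := (hcc i i).symm
        rw [lie_self] at h
        rcases smul_eq_zero.mp h with h | h
        · exact h
        · exact absurd h hx0
      have hskew : ∀ i j, c j i = - c i j := by
        intro i j
        refine smul_left_injective F hx0 ?_
        show c j i • x = (- c i j) • x
        rw [← hcc j i, ← lie_skew, hcc i j, neg_smul]
      set a : L := c 1 2 • e 0 - c 0 2 • e 1 + c 0 1 • e 2 with hadef
      have haj : ∀ j : Fin 3, ⁅a, e j⁆ = 0 := by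
        intro j
        rw [hadef, add_lie, sub_lie, smul_lie, smul_lie, smul_lie, hcc 0 j, hcc 1 j,
          hcc 2 j, smul_smul, smul_smul, smul_smul, ← sub_smul, ← add_smul]
        have hz : c 1 2 * c 0 j - c 0 2 * c 1 j + c 0 1 * c 2 j = 0 := by
          fin_cases j
          · show c 1 2 * c 0 0 - c 0 2 * c 1 0 + c 0 1 * c 2 0 = 0
            rw [hdiag 0, hskew 0 1, hskew 0 2]; ring
          · show c 1 2 * c 0 1 - c 0 2 * c 1 1 + c 0 1 * c 2 1 = 0
            rw [hdiag 1, hskew 1 2]; ring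
          · show c 1 2 * c 0 2 - c 0 2 * c 1 2 + c 0 1 * c 2 2 = 0
            rw [hdiag 2]; ring
        rw [hz, zero_smul]
      have hat : ∀ t : L, ⁅a, t⁆ = 0 := by
        intro t
        obtain ⟨β, w, hw, rfl⟩ := hdec t
        rw [lie_add, (hmemZ w).1 hw a, add_zero, lie_sum']
        refine Finset.sum_eq_zero fun j _ => ?_
        rw [lie_smul, haj j, smul_zero]
      have haZ : a ∈ Zs := by
        rw [hmemZ]
        intro t
        rw [← lie_skew, hat t, neg_zero]
      have hcomb : c 1 2 • b 0 - c 0 2 • b 1 + c 0 1 • b 2 = 0 := by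
        have h := (Submodule.Quotient.mk_eq_zero Zs).mpr haZ
        rw [← Submodule.mkQ_apply, hadef] at h
        rw [← he 0, ← he 1, ← he 2]
        rw [map_add, map_sub, map_smul, map_smul, map_smul] at h
        exact h
      have hcz : c 1 2 = 0 ∧ c 0 2 = 0 ∧ c 0 1 = 0 := by
        have hli := Fintype.linearIndependent_iff.mp b.linearIndependent
          ![c 1 2, -(c 0 2), c 0 1] ?_
        · exact ⟨hli 0, by simpa using (neg_eq_zero.mp (hli 1)), hli 2⟩
        · rw [Fin.sum_univ_three]
          simpa [neg_smul, sub_eq_add_neg] using hcomb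
      have hb01 : ⁅e 0, e 1⁆ = 0 := by rw [hcc 0 1, hcz.2.2, zero_smul]
      have hb02 : ⁅e 0, e 2⁆ = 0 := by rw [hcc 0 2, hcz.2.1, zero_smul]
      have hb12 : ⁅e 1, e 2⁆ = 0 := by rw [hcc 1 2, hcz.1, zero_smul]
      have hxmem : x ∈ T := hDT (by rw [hxspan]; exact Submodule.mem_span_singleton_self x)
      rw [hTdef, hb01, hb02, hb12] at hxmem
      simp only [Submodule.span_insert_zero, Submodule.span_zero_singleton,
        Submodule.mem_bot] at hxmem
      exact hx0 hxmem
    · -- `x` is not central : the centre has codimension at most two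
      have hnc : ¬ ∀ t : L, ⁅t, x⁆ = 0 := fun h => hxZ ((hmemZ x).2 h)
      push_neg at hnc
      obtain ⟨t, ht⟩ := hnc
      obtain ⟨lam, hlam⟩ := Submodule.mem_span_singleton.mp
        (show ⁅x, t⁆ ∈ Submodule.span F {x} by rw [← hxspan]; exact hmemD x t)
      have hlam0 : lam ≠ 0 := by
        rintro rfl
        rw [zero_smul] at hlam
        exact ht (by rw [← lie_skew, ← hlam, neg_zero])
      set y : L := lam⁻¹ • t with hydef
      have hxy : ⁅x, y⁆ = x := by
        rw [hydef, lie_smul, ← hlam, smul_smul, inv_mul_cancel₀ hlam0, one_smul]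
      have hsp : ∀ u v : L, ∃ cc : F, cc • x = ⁅u, v⁆ := fun u v =>
        Submodule.mem_span_singleton.mp (hxspan ▸ hmemD u v)
      have hadx : ∀ a : L, ⁅x, a⁆ ∈ Submodule.span F {x} := fun a => hxspan ▸ hmemD x a
      have hady : ∀ a : L, ⁅y, a⁆ ∈ Submodule.span F {x} := fun a => hxspan ▸ hmemD y a
      set S : Submodule F L := Submodule.span F {x} with hSdef
      set f : L →ₗ[F] S := (LieAlgebra.ad F L x).codRestrict S
        (fun a => by simpa using hadx a) with hfdef
      set g : L →ₗ[F] S := (LieAlgebra.ad F L y).codRestrict S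
        (fun a => by simpa using hady a) with hgdef
      set θ : L →ₗ[F] S × S := f.prod g with hθdef
      have hker : LinearMap.ker θ ≤ Zs := by
        intro a ha
        rw [LinearMap.mem_ker, hθdef, LinearMap.prod_apply] at ha
        have h1 : f a = 0 := (Prod.ext_iff.mp ha).1
        have h2 : g a = 0 := (Prod.ext_iff.mp ha).2
        have hxa : ⁅x, a⁆ = 0 := by
          have := congrArg Subtype.val h1
          simpa [hfdef, LieAlgebra.ad_apply] using this
        have hya : ⁅y, a⁆ = 0 := by
          have := congrArg Subtype.val h2
          simpa [hgdef, LieAlgebra.ad_apply] using this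
        rw [hmemZ]
        intro t'
        rw [← lie_skew, neg_eq_zero]
        obtain ⟨cc, hccc⟩ := hsp a t'
        obtain ⟨d, hd⟩ := hsp y t'
        have hLHS : ⁅y, ⁅a, t'⁆⁆ = -(cc • x) := by
          rw [← hccc, lie_smul, show ⁅y, x⁆ = -x from by rw [← lie_skew, hxy], smul_neg]
        have hRHS : ⁅y, ⁅a, t'⁆⁆ = 0 := by
          rw [leibniz_lie, hya, zero_lie, zero_add, ← hd, lie_smul,
            show ⁅a, x⁆ = 0 from by rw [← lie_skew, hxa, neg_zero], smul_zero]
        have hcc0 : cc = 0 := by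
          have hcx : cc • x = 0 := by
            have := hLHS.symm.trans hRHS
            rwa [neg_eq_zero] at this
          rcases smul_eq_zero.mp hcx with h | h
          · exact h
          · exact absurd h hx0
        rw [← hccc, hcc0, zero_smul]
      have hq2 : Module.finrank F (L ⧸ LinearMap.ker θ) ≤ 2 := by
        have h1 : Module.finrank F (L ⧸ LinearMap.ker θ)
            = Module.finrank F (LinearMap.range θ) :=
          LinearEquiv.finrank_eq (LinearMap.quotKerEquivRange θ)
        have h2 : Module.finrank F (LinearMap.range θ) ≤ Module.finrank F (S × S) :=
          (LinearMap.range θ).finrank_le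
        have h3 : Module.finrank F (S × S) = 2 := by
          rw [Module.finrank_prod, hSdef, finrank_span_singleton hx0]
        omega
      have hmono : Module.finrank F (L ⧸ Zs) ≤ Module.finrank F (L ⧸ LinearMap.ker θ) := by
        have e1 := Submodule.finrank_quotient_add_finrank Zs
        have e2 := Submodule.finrank_quotient_add_finrank (LinearMap.ker θ)
        have e3 : Module.finrank F (LinearMap.ker θ) ≤ Module.finrank F Zs :=
          Submodule.finrank_mono hker
        omega
      omega
  rw [hfr]
  omega
end

section
/- Let L be a finite-dimensional Lie algebra over the finite field F_q (q ≥ 2) such that dim L/Z(L) = 3 and dim L² = 3. Then d(L) = (q³+q²-1)/q⁵. -/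
open Module

section Aux

variable {F : Type*} [Field F] {L : Type*} [LieRing L] [LieAlgebra F L]

attribute [local instance] LieRing.ofAssociativeRing

lemma aux_rank_ad [FiniteDimensional F L]
    (hZ : Module.finrank F (L ⧸ LieAlgebra.center F L) = 3)
    (hder : Module.finrank F (LieAlgebra.derivedSeries F L 1) = 3)
    {x : L} (hx : x ∉ LieAlgebra.center F L) :
    finrank F (LinearMap.range (LieAlgebra.ad F L x : L →ₗ[F] L)) = 2 := by
  classical
  set Z : Submodule F L := (LieAlgebra.center F L).toSubmodule with hZdef
  have hmemZ : ∀ z, z ∈ Z ↔ ∀ y : L, ⁅y, z⁆ = 0 := by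
    intro z
    rw [hZdef, LieSubmodule.mem_toSubmodule]
    exact LieModule.mem_maxTrivSubmodule F L L z
  have h₁ : Z ≤ LinearMap.ker (LieAlgebra.ad F L).toLinearMap := by
    intro z hz
    rw [LinearMap.mem_ker]
    ext y
    have h0 : ⁅y, z⁆ = 0 := (hmemZ z).mp hz y
    have : ⁅z, y⁆ = 0 := by rw [← lie_skew, h0, neg_zero]
    simpa [LieAlgebra.ad_apply] using this
  set β₁ : (L ⧸ Z) →ₗ[F] L →ₗ[F] L := Z.liftQ (LieAlgebra.ad F L).toLinearMap h₁ with hβ₁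
  have h₂ : Z ≤ LinearMap.ker β₁.flip := by
    intro z hz
    rw [LinearMap.mem_ker]
    apply LinearMap.ext
    intro u
    obtain ⟨a, rfl⟩ := Submodule.Quotient.mk_surjective Z u
    have : ⁅a, z⁆ = 0 := (hmemZ z).mp hz a
    simpa [hβ₁, LieAlgebra.ad_apply] using this
  set β : (L ⧸ Z) →ₗ[F] (L ⧸ Z) →ₗ[F] L := (Z.liftQ β₁.flip h₂).flip with hβdef
  have hβ : ∀ a b : L,
      β (Submodule.Quotient.mk a) (Submodule.Quotient.mk b) = ⁅a, b⁆ := by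
    intro a b
    simp [hβdef, hβ₁, LieAlgebra.ad_apply]
  have halt : ∀ u, β u u = 0 := by
    intro u
    obtain ⟨a, rfl⟩ := Submodule.Quotient.mk_surjective Z u
    rw [hβ]; exact lie_self a
  have hskew : ∀ u v, β u v = - β v u := by
    intro u v
    have h : β v u + β u v = 0 := by
      have h' := halt (u + v)
      simp only [map_add, LinearMap.add_apply, halt, zero_add, add_zero] at h'
      exact h'
    exact eq_neg_of_add_eq_zero_right h
  set g : (L ⧸ Z) →ₗ[F] L := β (Submodule.Quotient.mk x) with hg
  have hrange : LinearMap.range (LieAlgebra.ad F L x : L →ₗ[F] L) = LinearMap.range g := by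
    have hc : (LieAlgebra.ad F L x : L →ₗ[F] L) = g ∘ₗ Z.mkQ := by
      ext y
      simp [hg, hβ, LieAlgebra.ad_apply]
    rw [hc, LinearMap.range_comp, Submodule.range_mkQ, Submodule.map_top]
  have hV : finrank F (L ⧸ Z) = 3 := hZ
  have hrn : finrank F (LinearMap.range g) + finrank F (LinearMap.ker g) = 3 := by
    rw [← hV]; exact LinearMap.finrank_range_add_finrank_ker g
  have hxK : (Submodule.Quotient.mk x : L ⧸ Z) ∈ LinearMap.ker g := by
    rw [LinearMap.mem_ker, hg, hβ]; exact lie_self x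
  have hxne : (Submodule.Quotient.mk x : L ⧸ Z) ≠ 0 := by
    rw [Ne, Submodule.Quotient.mk_eq_zero]
    intro hmem
    exact hx ((LieSubmodule.mem_toSubmodule _).mp hmem)
  have hspan_le : (F ∙ (Submodule.Quotient.mk x : L ⧸ Z)) ≤ LinearMap.ker g :=
    (Submodule.span_singleton_le_iff_mem _ _).mpr hxK
  set u : L ⧸ Z := Submodule.Quotient.mk x with hu
  have hker_le : finrank F (LinearMap.ker g) ≤ 1 := by
    by_contra hcon
    push_neg at hcon
    have hlt : (F ∙ u) < LinearMap.ker g := by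
      refine lt_of_le_of_ne hspan_le ?_
      intro he
      rw [← he, finrank_span_singleton hxne] at hcon
      omega
    obtain ⟨w, hwK, hwns⟩ := SetLike.exists_of_lt hlt
    set K' : Submodule F (L ⧸ Z) := Submodule.span F {u, w} with hK'
    have hK'rank : finrank F K' = 2 := by
      have h1 : (F ∙ u) < K' := by
        refine lt_of_le_of_ne (Submodule.span_mono (by simp)) ?_
        intro he
        exact hwns (he ▸ Submodule.subset_span (by simp))
      have h2 : 2 ≤ finrank F K' := by
        have hlt2 := Submodule.finrank_lt_finrank_of_lt h1
        rw [finrank_span_singleton hxne] at hlt2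
        omega
      have h3 : finrank F K' ≤ 2 := by
        have hsets : ({u, w} : Set (L ⧸ Z)) = (({u, w} : Finset (L ⧸ Z)) : Set (L ⧸ Z)) := by
          simp
        rw [hK', hsets]
        refine (finrank_span_finset_le_card _).trans ?_
        exact (Finset.card_insert_le _ _).trans (by simp)
      omega
    obtain ⟨W, hW⟩ := Submodule.exists_isCompl K'
    have hWrank : finrank F W = 1 := by
      have hsum := Submodule.finrank_add_eq_of_isCompl hW
      rw [hK'rank, hV] at hsum
      omega
    obtain ⟨t, htW⟩ : ∃ t, W = Submodule.span F {t} := by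
      have hp : Submodule.IsPrincipal W :=
        (Submodule.finrank_le_one_iff_isPrincipal W).mp (le_of_eq hWrank)
      obtain ⟨t, ht⟩ := hp
      exact ⟨t, ht⟩
    set S : Submodule F L := Submodule.span F {β u t, β w t} with hS
    have hβuw : β u w = 0 := by
      have := hwK
      rw [LinearMap.mem_ker] at this
      exact this
    have hmap : Submodule.map₂ β ⊤ ⊤ ≤ S := by
      have htop : (⊤ : Submodule F (L ⧸ Z)) = K' ⊔ W := hW.sup_eq_top.symm
      rw [htop, Submodule.map₂_sup_left, Submodule.map₂_sup_right,
        Submodule.map₂_sup_right, hK', htW, Submodule.map₂_span_span,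
        Submodule.map₂_span_span, Submodule.map₂_span_span, Submodule.map₂_span_span]
      have hmem : ∀ a ∈ ({u, w} : Set (L ⧸ Z)), ∀ b ∈ ({u, w} : Set (L ⧸ Z)),
          β a b ∈ S := by
        rintro a (rfl | ha) b (rfl | hb)
        · rw [halt]; exact S.zero_mem
        · rw [Set.mem_singleton_iff] at hb; subst hb
          rw [hβuw]; exact S.zero_mem
        · rw [Set.mem_singleton_iff] at ha; subst ha
          rw [hskew, hβuw, neg_zero]; exact S.zero_mem
        · rw [Set.mem_singleton_iff] at ha hb; subst ha; subst hb
          rw [halt]; exact S.zero_mem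
      refine sup_le (sup_le ?_ ?_) (sup_le ?_ ?_) <;>
        rw [Submodule.span_le] <;> rintro z ⟨a, ha, b, hb, rfl⟩ <;> show β a b ∈ S
      · exact hmem a ha b hb
      · rw [Set.mem_singleton_iff] at hb; subst hb
        rcases ha with rfl | ha
        · exact Submodule.subset_span (by simp)
        · rw [Set.mem_singleton_iff] at ha; subst ha
          exact Submodule.subset_span (by simp)
      · rw [Set.mem_singleton_iff] at ha; subst ha
        rw [hskew]
        rcases hb with rfl | hb
        · exact S.neg_mem (Submodule.subset_span (by simp))
        · rw [Set.mem_singleton_iff] at hb; subst hb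
          exact S.neg_mem (Submodule.subset_span (by simp))
      · rw [Set.mem_singleton_iff] at ha hb; subst ha; subst hb
        rw [halt]; exact S.zero_mem
    have hder_le : (LieAlgebra.derivedSeries F L 1).toSubmodule ≤ S := by
      have h1 : (LieAlgebra.derivedSeries F L 1 : LieIdeal F L) = ⁅(⊤ : LieIdeal F L), ⊤⁆ := by
        rw [LieAlgebra.derivedSeries_def, LieAlgebra.derivedSeriesOfIdeal_succ,
          LieAlgebra.derivedSeriesOfIdeal_zero]
      rw [h1, LieSubmodule.lieIdeal_oper_eq_linear_span', Submodule.span_le]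
      rintro z ⟨a, -, b, -, rfl⟩
      refine hmap ?_
      rw [← hβ a b]
      exact Submodule.apply_mem_map₂ β Submodule.mem_top Submodule.mem_top
    have hcontra : (3 : ℕ) ≤ 2 := by
      have e1 : finrank F (LieAlgebra.derivedSeries F L 1).toSubmodule = 3 := hder
      calc (3 : ℕ) = finrank F (LieAlgebra.derivedSeries F L 1).toSubmodule := e1.symm
        _ ≤ finrank F S := Submodule.finrank_mono hder_le
        _ ≤ 2 := by
            have hsets : ({β u t, β w t} : Set L)
                = (({β u t, β w t} : Finset L) : Set L) := by simp
            rw [hS, hsets]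
            refine (finrank_span_finset_le_card _).trans ?_
            exact (Finset.card_insert_le _ _).trans (by simp)
    omega
  have hker_ge : 1 ≤ finrank F (LinearMap.ker g) := by
    have h1 : finrank F (F ∙ u) ≤ finrank F (LinearMap.ker g) :=
      Submodule.finrank_mono hspan_le
    rw [finrank_span_singleton hxne] at h1
    exact h1
  rw [hrange]
  omega

end Aux

/-- A finite-dimensional Lie algebra over the finite field `F_q` (`q ≥ 2`)
with `dim L/Z(L) = 3` and `dim L² = 3` has commutativity degree `(q³ + q² - 1)/q⁵`. -/
theorem stmt10 (q : ℕ) (hq : 2 ≤ q) (F : Type*) [Field F] [Fintype F]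
    (hF : Fintype.card F = q) (L : Type*) [LieRing L] [LieAlgebra F L] [Fintype L]
    (hZ : Module.finrank F (L ⧸ LieAlgebra.center F L) = 3)
    (hder : Module.finrank F (LieAlgebra.derivedSeries F L 1) = 3) :
    commDeg L = ((q : ℚ) ^ 3 + (q : ℚ) ^ 2 - 1) / (q : ℚ) ^ 5 := by
  classical
  set Z : Submodule F L := (LieAlgebra.center F L).toSubmodule with hZdef
  set m : ℕ := finrank F Z with hm
  have hZ' : finrank F (L ⧸ Z) = 3 := hZ
  have hn : finrank F L = m + 3 := by
    have hqf := Submodule.finrank_quotient_add_finrank Z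
    rw [hZ'] at hqf
    omega
  have hcardL : Nat.card L = q ^ (m + 3) := by
    rw [Nat.card_eq_fintype_card, card_eq_pow_finrank (K := F) (V := L), hF, hn]
  have hcent : ∀ x : L, Nat.card {y : L // ⁅x, y⁆ = 0}
      = q ^ (finrank F (LinearMap.ker (LieAlgebra.ad F L x : L →ₗ[F] L))) := by
    intro x
    have e : {y : L // ⁅x, y⁆ = 0} ≃ LinearMap.ker (LieAlgebra.ad F L x : L →ₗ[F] L) :=
      Equiv.subtypeEquivRight (by intro y; simp [LinearMap.mem_ker, LieAlgebra.ad_apply])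
    have : Fintype (LinearMap.ker (LieAlgebra.ad F L x : L →ₗ[F] L)) := Fintype.ofFinite _
    rw [Nat.card_congr e, Nat.card_eq_fintype_card, card_eq_pow_finrank (K := F), hF]
  have hker_central : ∀ x ∈ LieAlgebra.center F L,
      finrank F (LinearMap.ker (LieAlgebra.ad F L x : L →ₗ[F] L)) = m + 3 := by
    intro x hx
    have hk : LinearMap.ker (LieAlgebra.ad F L x : L →ₗ[F] L) = ⊤ := by
      ext y
      simp only [LinearMap.mem_ker, LieAlgebra.ad_apply, Submodule.mem_top, iff_true]
      have h0 : ⁅y, x⁆ = 0 := (LieModule.mem_maxTrivSubmodule F L L x).mp hx y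
      rw [← lie_skew, h0, neg_zero]
    rw [hk, finrank_top, hn]
  have hker_noncentral : ∀ x : L, x ∉ LieAlgebra.center F L →
      finrank F (LinearMap.ker (LieAlgebra.ad F L x : L →ₗ[F] L)) = m + 1 := by
    intro x hx
    have h2 := aux_rank_ad hZ hder hx
    have h3 := LinearMap.finrank_range_add_finrank_ker (LieAlgebra.ad F L x : L →ₗ[F] L)
    rw [h2, hn] at h3
    omega
  have hNcard : Nat.card {p : L × L // ⁅p.1, p.2⁆ = 0}
      = ∑ x : L, Nat.card {y : L // ⁅x, y⁆ = 0} := by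
    rw [Nat.card_congr (Equiv.subtypeProdEquivSigmaSubtype (fun (a b : L) => ⁅a, b⁆ = 0)),
      Nat.card_eq_fintype_card, Fintype.card_sigma]
    exact Finset.sum_congr rfl (fun x _ => (Nat.card_eq_fintype_card).symm)
  have hcardZsub : (Finset.univ.filter (fun x : L => x ∈ LieAlgebra.center F L)).card
      = q ^ m := by
    have e : {x : L // x ∈ LieAlgebra.center F L} ≃ Z :=
      Equiv.subtypeEquivRight (by intro y; exact (LieSubmodule.mem_toSubmodule _).symm)
    have hNcardZ : Nat.card {x : L // x ∈ LieAlgebra.center F L} = q ^ m := by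
      rw [Nat.card_congr e, Nat.card_eq_fintype_card, card_eq_pow_finrank (K := F), hF, ← hm]
    rw [← Fintype.card_subtype, ← Nat.card_eq_fintype_card]
    exact hNcardZ
  have hsum : ∑ x : L, Nat.card {y : L // ⁅x, y⁆ = 0}
      = q ^ m * q ^ (m + 3) + (q ^ (m + 3) - q ^ m) * q ^ (m + 1) := by
    have hterm : ∀ x : L, Nat.card {y : L // ⁅x, y⁆ = 0}
        = if x ∈ LieAlgebra.center F L then q ^ (m + 3) else q ^ (m + 1) := by
      intro x
      by_cases hx : x ∈ LieAlgebra.center F L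
      · rw [hcent, hker_central x hx, if_pos hx]
      · rw [hcent, hker_noncentral x hx, if_neg hx]
    rw [Finset.sum_congr rfl (fun x _ => hterm x), Finset.sum_ite, Finset.sum_const,
      Finset.sum_const, smul_eq_mul, smul_eq_mul, hcardZsub]
    have hfil := Finset.card_filter_add_card_filter_not
      (s := (Finset.univ : Finset L)) (p := fun x : L => x ∈ LieAlgebra.center F L)
    have hcardL' : (Finset.univ : Finset L).card = q ^ (m + 3) := by
      rw [Finset.card_univ, ← Nat.card_eq_fintype_card]
      exact hcardL
    rw [hcardZsub, hcardL'] at hfil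
    rw [show (Finset.univ.filter (fun x : L => ¬ x ∈ LieAlgebra.center F L)).card
      = q ^ (m + 3) - q ^ m by omega]
  have hq0 : (q : ℚ) ≠ 0 := by
    have : 0 < q := by omega
    exact_mod_cast this.ne'
  have hle : q ^ m ≤ q ^ (m + 3) := Nat.pow_le_pow_right (by omega) (by omega)
  rw [commDeg, hNcard, hsum, hcardL]
  push_cast [hle]
  rw [div_eq_div_iff (by positivity) (by positivity)]
  ring
end

section
/- Let L be a finite-dimensional Lie algebra over the two-element field F_2 such that dim L/Z(L) = 3. Then d(L) equals 7/16 or 11/32. -/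
theorem keyCount (V : Type*) [AddCommGroup V] [Fintype V] [DecidableEq V]
    (hcard : Fintype.card V = 8)
    (h2 : ∀ x : V, x + x = 0)
    (R : V → V → Prop) [DecidableRel R]
    (hrefl : ∀ v, R v v)
    (hzero : ∀ u, R u 0)
    (hsymm : ∀ u v, R u v → R v u)
    (hadd : ∀ u v w, R u v → R u w → R u (v + w))
    (hproper : ∀ u, (∀ v, R u v) → u = 0) :
    Nat.card {q : V × V // R q.1 q.2} = 22 ∨ Nat.card {q : V × V // R q.1 q.2} = 28 := by
  have hneg : ∀ v : V, -v = v := fun v => neg_eq_of_add_eq_zero_left (h2 v)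
  let K : V → AddSubgroup V := fun u =>
    { carrier := {v | R u v}
      zero_mem' := hzero u
      add_mem' := fun hv hw => hadd u _ _ hv hw
      neg_mem' := fun {v} hv => by rw [hneg]; exact hv }
  haveI : ∀ u : V, DecidablePred (· ∈ K u) := fun u v => decidable_of_iff (R u v) Iff.rfl
  have hmemK : ∀ u v, v ∈ K u ↔ R u v := fun u v => Iff.rfl
  let Kf : V → Finset V := fun u => Finset.univ.filter (R u)
  have hcardK : ∀ u, Nat.card (K u) = (Kf u).card := by
    intro u
    rw [show Nat.card (K u) = Nat.card {v : V // R u v} from rfl,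
      Nat.card_eq_fintype_card, Fintype.card_subtype]
  have hKdvd : ∀ u, Nat.card (K u) ∣ 8 := by
    intro u
    rw [← hcard, ← Nat.card_eq_fintype_card]
    exact AddSubgroup.card_addSubgroup_dvd_card (K u)
  have hKne : ∀ u, u ≠ 0 → Nat.card (K u) ≠ 8 := by
    intro u hu h8
    have htop : K u = ⊤ :=
      AddSubgroup.eq_top_of_card_eq _ (by rw [h8, Nat.card_eq_fintype_card, hcard])
    refine hu (hproper u (fun v => ?_))
    have hv : v ∈ K u := by rw [htop]; trivial
    exact hv
  have hKtwo : ∀ u, u ≠ 0 → 2 ≤ Nat.card (K u) := by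
    intro u hu
    have : Nontrivial (K u) := ⟨⟨0, hzero u⟩, ⟨u, hrefl u⟩, by simp [Subtype.ext_iff, Ne.symm hu]⟩
    exact Finite.one_lt_card_iff_nontrivial.mpr this
  have hK24 : ∀ u, u ≠ 0 → Nat.card (K u) = 2 ∨ Nat.card (K u) = 4 := by
    intro u hu
    have h1 := hKdvd u
    have h2' := hKne u hu
    have h3 := hKtwo u hu
    set n := Nat.card (K u) with hn
    clear_value n
    have h4 : n ≤ 8 := Nat.le_of_dvd (by norm_num) h1
    interval_cases n <;> omega
  have memKf : ∀ a b : V, b ∈ Kf a ↔ R a b := by intro a b; simp [Kf]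
  -- Lemma A
  have lemA : ∀ u v : V, u ≠ 0 → v ≠ 0 → Nat.card (K u) = 4 → R u v →
      Kf v = Kf u ∧ Nat.card (K v) = 4 := by
    intro u v hu hv h4 huv
    by_cases hvu : v = u
    · subst hvu; exact ⟨rfl, h4⟩
    · have d1 : (0:V) ≠ u := Ne.symm hu
      have d2 : (0:V) ≠ v := Ne.symm hv
      have d3 : (0:V) ≠ u + v := by
        intro h
        have h1 := neg_eq_of_add_eq_zero_left h.symm
        rw [hneg] at h1
        exact hvu h1
      have d4 : u ≠ v := fun h => hvu h.symm
      have d5 : u ≠ u + v := by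
        intro h
        exact hv (by have := h.symm; nth_rewrite 2 [← add_zero u] at this; exact add_left_cancel this)
      have d6 : v ≠ u + v := by
        intro h
        apply hu
        have : 0 + v = u + v := by rw [zero_add]; exact h
        exact add_right_cancel this.symm
      have hScard : (({0, u, v, u + v} : Finset V)).card = 4 := by
        rw [Finset.card_insert_of_notMem (by simp [d1, d2, d3]),
            Finset.card_insert_of_notMem (by simp [d4, d5]),
            Finset.card_insert_of_notMem (by simp [d6]),
            Finset.card_singleton]
      have hSKu : ({0, u, v, u + v} : Finset V) ⊆ Kf u := by
        intro w hw
        rw [memKf]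
        rcases Finset.mem_insert.1 hw with h | hw
        · rw [h]; exact hzero u
        rcases Finset.mem_insert.1 hw with h | hw
        · rw [h]; exact hrefl u
        rcases Finset.mem_insert.1 hw with h | hw
        · rw [h]; exact huv
        · rw [Finset.mem_singleton.1 hw]; exact hadd u u v (hrefl u) huv
      have hSKv : ({0, u, v, u + v} : Finset V) ⊆ Kf v := by
        intro w hw
        rw [memKf]
        rcases Finset.mem_insert.1 hw with h | hw
        · rw [h]; exact hzero v
        rcases Finset.mem_insert.1 hw with h | hw
        · rw [h]; exact hsymm u v huv
        rcases Finset.mem_insert.1 hw with h | hw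
        · rw [h]; exact hrefl v
        · rw [Finset.mem_singleton.1 hw]; exact hadd v u v (hsymm u v huv) (hrefl v)
      have hKfu : Kf u = {0, u, v, u + v} := by
        refine (Finset.eq_of_subset_of_card_le hSKu ?_).symm
        rw [hScard, ← hcardK u, h4]
      have hc4 : Nat.card (K v) = 4 := by
        have hge : 4 ≤ (Kf v).card := by
          rw [← hScard]; exact Finset.card_le_card hSKv
        rcases hK24 v hv with h | h
        · rw [hcardK v] at h; omega
        · exact h
      have hKfv : Kf v = {0, u, v, u + v} := by
        refine (Finset.eq_of_subset_of_card_le hSKv ?_).symm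
        rw [hScard, ← hcardK v, hc4]
      exact ⟨by rw [hKfv, hKfu], hc4⟩
  -- Lemma B
  have lemB : ∀ u u' : V, u ≠ 0 → u' ≠ 0 → Nat.card (K u) = 4 → Nat.card (K u') = 4 →
      Kf u = Kf u' := by
    intro u u' hu hu' h4 h4'
    have hexists : ∃ w : V, w ≠ 0 ∧ R u w ∧ R u' w := by
      by_contra hno
      push_neg at hno
      have hinj : Function.Injective (fun p : K u × K u' => (p.1 : V) + (p.2 : V)) := by
        rintro ⟨⟨a, ha⟩, ⟨b, hb⟩⟩ ⟨⟨a', ha'⟩, ⟨b', hb'⟩⟩ h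
        simp only at h
        have hw : a + a' = b + b' := by
          have := congrArg (fun t => t + (a' + b)) h
          calc a + a' = a + b + (a' + b) := by
                rw [show a + b + (a' + b) = a + a' + (b + b) by abel, h2, add_zero]
            _ = a' + b' + (a' + b) := this
            _ = b + b' := by rw [show a' + b' + (a' + b) = b + b' + (a' + a') by abel, h2, add_zero]
        have hw0 : a + a' = 0 := by
          by_contra hne
          exact hno (a + a') hne (hadd u a a' ha ha')
            (by rw [hw]; exact hadd u' b b' hb hb')
        have ha'' : a = a' := by
          have h1 := neg_eq_of_add_eq_zero_left hw0
          rw [hneg] at h1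
          exact h1.symm
        have hb0 : b + b' = 0 := by rw [← hw, hw0]
        have hb'' : b = b' := by
          have h1 := neg_eq_of_add_eq_zero_left hb0
          rw [hneg] at h1
          exact h1.symm
        subst ha''; subst hb''; rfl
      have hle : Nat.card (K u × K u') ≤ Nat.card V :=
        Nat.card_le_card_of_injective _ hinj
      rw [Nat.card_prod, h4, h4', Nat.card_eq_fintype_card, hcard] at hle
      omega
    obtain ⟨w, hw0, hw1, hw2⟩ := hexists
    rw [← (lemA u w hu hw0 h4 hw1).1, ← (lemA u' w hu' hw0 h4' hw2).1]
  -- the total count as a sum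
  have hNcard : Nat.card {q : V × V // R q.1 q.2} = ∑ u : V, (Kf u).card := by
    rw [Nat.card_eq_fintype_card,
      Fintype.card_congr (Equiv.subtypeProdEquivSigmaSubtype R), Fintype.card_sigma]
    exact Finset.sum_congr rfl (fun u _ => Fintype.card_subtype _)
  have hKf0 : (Kf 0).card = 8 := by
    have : Kf 0 = Finset.univ := by
      ext v
      simp only [Finset.mem_univ, iff_true, memKf]
      exact hsymm v 0 (hzero v)
    rw [this, Finset.card_univ, hcard]
  rw [hNcard]
  by_cases hB : ∃ u : V, u ≠ 0 ∧ Nat.card (K u) = 4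
  · right
    obtain ⟨u0, hu0, h40⟩ := hB
    have hPcard : (Kf u0).card = 4 := by rw [← hcardK u0]; exact h40
    have h0P : (0:V) ∈ Kf u0 := (memKf u0 0).2 (hzero u0)
    have claim1 : ∀ u : V, u ≠ 0 → u ∈ Kf u0 → Kf u = Kf u0 := by
      intro u hu hP
      exact (lemA u0 u hu0 hu h40 ((memKf u0 u).1 hP)).1
    have claim2 : ∀ u : V, u ∉ Kf u0 → (Kf u).card = 2 := by
      intro u hP
      have hu : u ≠ 0 := fun h => hP (h ▸ h0P)
      rcases hK24 u hu with h | h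
      · rw [← hcardK u]; exact h
      · exfalso
        have := lemB u u0 hu hu0 h h40
        exact hP (this ▸ (memKf u u).2 (hrefl u))
    rw [← Finset.sum_add_sum_compl (Kf u0) (fun u => (Kf u).card)]
    have hsum1 : ∑ u ∈ Kf u0, (Kf u).card = 20 := by
      rw [← Finset.add_sum_erase (Kf u0) _ h0P, hKf0]
      have : ∑ u ∈ (Kf u0).erase 0, (Kf u).card = ∑ _u ∈ (Kf u0).erase 0, 4 := by
        refine Finset.sum_congr rfl (fun u hu => ?_)
        rw [claim1 u (Finset.ne_of_mem_erase hu) (Finset.mem_of_mem_erase hu), hPcard]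
      rw [this, Finset.sum_const, Finset.card_erase_of_mem h0P, hPcard]
      decide
    have hsum2 : ∑ u ∈ (Kf u0)ᶜ, (Kf u).card = 8 := by
      have : ∑ u ∈ (Kf u0)ᶜ, (Kf u).card = ∑ _u ∈ (Kf u0)ᶜ, 2 := by
        refine Finset.sum_congr rfl (fun u hu => ?_)
        exact claim2 u (Finset.mem_compl.1 hu)
      rw [this, Finset.sum_const, Finset.card_compl, hPcard, hcard]
      decide
    rw [hsum1, hsum2]
  · left
    push_neg at hB
    have hall : ∀ u : V, u ≠ 0 → (Kf u).card = 2 := by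
      intro u hu
      rcases hK24 u hu with h | h
      · rw [← hcardK u]; exact h
      · exact absurd h (hB u hu)
    rw [← Finset.add_sum_erase Finset.univ _ (Finset.mem_univ (0:V)), hKf0]
    have : ∑ u ∈ Finset.univ.erase (0:V), (Kf u).card = ∑ _u ∈ Finset.univ.erase (0:V), 2 := by
      refine Finset.sum_congr rfl (fun u hu => ?_)
      exact hall u (Finset.ne_of_mem_erase hu)
    rw [this, Finset.sum_const, Finset.card_erase_of_mem (Finset.mem_univ 0),
      Finset.card_univ, hcard]
    decide


/-- A finite-dimensional Lie algebra over the two-element field `F_2`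
with `dim L/Z(L) = 3` has commutativity degree `7/16` or `11/32`. -/
theorem stmt11 (F : Type*) [Field F] [Fintype F] (hF : Fintype.card F = 2)
    (L : Type*) [LieRing L] [LieAlgebra F L] [Fintype L]
    (hZ : Module.finrank F (L ⧸ LieAlgebra.center F L) = 3) :
    commDeg L = 7 / 16 ∨ commDeg L = 11 / 32 := by
  classical
  set Z := LieAlgebra.center F L with hZdef
  let V := L ⧸ Z
  let π : L →ₗ[F] V := (Z : LieSubmodule F L L).toSubmodule.mkQ
  have hπs : Function.Surjective π := Submodule.mkQ_surjective _
  haveI : Finite V := Finite.of_surjective π hπs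
  haveI : Fintype V := Fintype.ofFinite V
  obtain ⟨s, hs⟩ := π.exists_rightInverse_of_surjective (LinearMap.range_eq_top.2 hπs)
  have hsv : ∀ v : V, π (s v) = v := fun v => congrFun (congrArg (·.toFun) hs) v
  have hcardV : Fintype.card V = 8 := by
    have := Module.card_eq_pow_finrank (K := F) (V := V)
    rw [hF, hZ] at this
    simpa using this
  -- characteristic 2
  have h2F : (1 : F) + 1 = 0 := by
    by_contra h
    have h01 : (0 : F) ≠ 1 := zero_ne_one
    have h11 : (1 : F) + 1 ≠ 1 := fun hc => h01 (add_left_cancel (hc.trans (add_zero 1).symm)).symm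
    have hcard3 : ({0, 1, (1:F) + 1} : Finset F).card = 3 := by
      rw [Finset.card_insert_of_notMem (by simp [h01, Ne.symm h]),
        Finset.card_insert_of_notMem (by simp [h11.symm]), Finset.card_singleton]
    have hle : 3 ≤ Fintype.card F := by
      rw [← hcard3, ← Finset.card_univ]
      exact Finset.card_le_univ _
    omega
  have h2 : ∀ x : V, x + x = 0 := by
    intro x
    have : x + x = ((1 : F) + 1) • x := by rw [add_smul, one_smul]
    rw [this, h2F, zero_smul]
  -- membership in the center
  have hmemZ : ∀ c : L, c ∈ Z → ∀ y : L, ⁅c, y⁆ = 0 := by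
    intro c hc y
    have := (LieModule.mem_maxTrivSubmodule F L L c).1 hc y
    rw [← lie_skew, this, neg_zero]
  have hmemZ' : ∀ c : L, (∀ y : L, ⁅c, y⁆ = 0) → c ∈ Z := by
    intro c hc
    exact (LieModule.mem_maxTrivSubmodule F L L c).2 fun x => by
      rw [← lie_skew, hc x, neg_zero]
  have hker : ∀ x : L, π x = 0 → x ∈ Z := by
    intro x hx
    have : x ∈ (Z : LieSubmodule F L L).toSubmodule := by
      rwa [← Submodule.Quotient.mk_eq_zero]
    exact this
  have hmemsub : ∀ x : L, x - s (π x) ∈ Z := by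
    intro x
    apply hker
    rw [map_sub, hsv, sub_self]
  -- the bracket only depends on the images in V
  have central : ∀ x y : L, ⁅x, y⁆ = ⁅s (π x), s (π y)⁆ := by
    intro x y
    have h1 : ⁅x, y⁆ = ⁅s (π x), y⁆ := by
      conv_lhs => rw [show x = (x - s (π x)) + s (π x) by abel]
      rw [add_lie, hmemZ _ (hmemsub x) y, zero_add]
    have h2 : ⁅s (π x), y⁆ = ⁅s (π x), s (π y)⁆ := by
      conv_lhs => rw [show y = (y - s (π y)) + s (π y) by abel]
      rw [lie_add, ← lie_skew (s (π x)) (y - s (π y)), hmemZ _ (hmemsub y) (s (π x)),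
        neg_zero, zero_add]
    rw [h1, h2]
  -- the commuting relation on V
  set R : V → V → Prop := fun u v => ⁅s u, s v⁆ = 0 with hRdef
  have hrefl : ∀ v, R v v := fun v => lie_self _
  have hzero : ∀ u, R u 0 := fun u => by simp [hRdef]
  have hsymm : ∀ u v, R u v → R v u := fun u v h => by
    simp only [hRdef] at *
    rw [← lie_skew, h, neg_zero]
  have hadd : ∀ u v w, R u v → R u w → R u (v + w) := fun u v w h1 h2 => by
    simp only [hRdef, map_add, lie_add] at *
    rw [h1, h2, add_zero]
  have hproper : ∀ u, (∀ v, R u v) → u = 0 := by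
    intro u hu
    have hc : s u ∈ Z := hmemZ' _ fun y => by
      rw [central (s u) y, hsv]
      exact hu (π y)
    have : π (s u) = 0 := (Submodule.Quotient.mk_eq_zero _).2 hc
    rwa [hsv] at this
  -- the equivalence decomposing L
  have hπz : ∀ z : Z, π (z : L) = 0 := fun z => (Submodule.Quotient.mk_eq_zero _).2 z.2
  have hZmem : ∀ (z : Z) (v : V), π ((z : L) + s v) = v := by
    intro z v
    rw [map_add, hsv, hπz, zero_add]
  let e : L ≃ Z × V :=
    { toFun := fun x => (⟨x - s (π x), hmemsub x⟩, π x)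
      invFun := fun p => (p.1 : L) + s p.2
      left_inv := fun x => by simp
      right_inv := fun p => by
        refine Prod.ext (Subtype.ext ?_) (hZmem p.1 p.2)
        simp only
        rw [hZmem p.1 p.2]
        abel }
  -- the equivalence on commuting pairs
  let E : {p : L × L // ⁅p.1, p.2⁆ = 0} ≃ (Z × Z) × {q : V × V // R q.1 q.2} :=
    { toFun := fun p =>
        ((⟨p.1.1 - s (π p.1.1), hmemsub _⟩, ⟨p.1.2 - s (π p.1.2), hmemsub _⟩),
          ⟨(π p.1.1, π p.1.2), by
            have := p.2
            rwa [central] at this⟩)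
      invFun := fun q =>
        ⟨((q.1.1 : L) + s q.2.1.1, (q.1.2 : L) + s q.2.1.2), by
          rw [central, hZmem, hZmem]
          exact q.2.2⟩
      left_inv := fun p => by
        refine Subtype.ext (Prod.ext ?_ ?_) <;> simp
      right_inv := fun q => by
        refine Prod.ext (Prod.ext (Subtype.ext ?_) (Subtype.ext ?_))
          (Subtype.ext (Prod.ext ?_ ?_)) <;>
          simp only [hZmem] <;> abel }
  -- counting
  have hcount : Nat.card {p : L × L // ⁅p.1, p.2⁆ = 0}
      = Nat.card Z * Nat.card Z * Nat.card {q : V × V // R q.1 q.2} := by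
    rw [Nat.card_congr E, Nat.card_prod, Nat.card_prod]
  have hcardL : Nat.card L = Nat.card Z * 8 := by
    rw [Nat.card_congr e, Nat.card_prod, Nat.card_eq_fintype_card (α := V), hcardV]
  have hN := keyCount V hcardV h2 R hrefl hzero hsymm hadd hproper
  have hZpos : 0 < Nat.card Z := Nat.card_pos
  rw [commDeg, hcount, hcardL]
  rcases hN with hN | hN <;> rw [hN] <;> [right; left] <;>
    · push_cast
      rw [div_eq_div_iff (by positivity) (by norm_num)]
      ring
end

section
/- The 4-dimensional Lie algebra L_{4,3} over the finite field F_q (q ≥ 2), with basis {a_1, a_2, a_3, z} and only nonzero brackets [a_1,a_2] = a_3 and [a_1,a_3] = z, satisfies d(L_{4,3}) = (2q²-1)/q⁴. -/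
/-! ### The Lie algebra `L_{4,3}` -/

/-- The 4-dimensional Lie algebra `L_{4,3}` with basis `a₁, a₂, a₃, z` and only nonzero
brackets `⁅a₁, a₂⁆ = a₃`, `⁅a₁, a₃⁆ = z`; coordinates are with respect to this basis. -/
def L43 (F : Type*) : Type _ := F × F × F × F

namespace L43
variable {F : Type*} [Field F]

instance : AddCommGroup (L43 F) := inferInstanceAs (AddCommGroup (F × F × F × F))
instance : Module F (L43 F) := inferInstanceAs (Module F (F × F × F × F))

/-- The bracket of `L_{4,3}`. -/
def br (a b : L43 F) : L43 F :=
  (0, 0, a.1 * b.2.1 - b.1 * a.2.1, a.1 * b.2.2.1 - b.1 * a.2.2.1)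

instance : LieRing (L43 F) where
  bracket := br
  add_lie x y z := by
    show (((0 : F), (0 : F), (x.1 + y.1) * z.2.1 - z.1 * (x.2.1 + y.2.1),
        (x.1 + y.1) * z.2.2.1 - z.1 * (x.2.2.1 + y.2.2.1)) : F × F × F × F) =
      ((0 : F) + 0, (0 : F) + 0, (x.1 * z.2.1 - z.1 * x.2.1) + (y.1 * z.2.1 - z.1 * y.2.1),
        (x.1 * z.2.2.1 - z.1 * x.2.2.1) + (y.1 * z.2.2.1 - z.1 * y.2.2.1))
    exact Prod.ext (by simp) (Prod.ext (by simp) (Prod.ext (by ring) (by ring)))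
  lie_add x y z := by
    show (((0 : F), (0 : F), x.1 * (y.2.1 + z.2.1) - (y.1 + z.1) * x.2.1,
        x.1 * (y.2.2.1 + z.2.2.1) - (y.1 + z.1) * x.2.2.1) : F × F × F × F) =
      ((0 : F) + 0, (0 : F) + 0, (x.1 * y.2.1 - y.1 * x.2.1) + (x.1 * z.2.1 - z.1 * x.2.1),
        (x.1 * y.2.2.1 - y.1 * x.2.2.1) + (x.1 * z.2.2.1 - z.1 * x.2.2.1))
    exact Prod.ext (by simp) (Prod.ext (by simp) (Prod.ext (by ring) (by ring)))
  lie_self x := by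
    show (((0 : F), (0 : F), x.1 * x.2.1 - x.1 * x.2.1, x.1 * x.2.2.1 - x.1 * x.2.2.1) :
        F × F × F × F) = ((0 : F), (0 : F), (0 : F), (0 : F))
    exact Prod.ext rfl (Prod.ext rfl (Prod.ext (by ring) (by ring)))
  leibniz_lie x y z := by
    show (((0 : F), (0 : F), x.1 * (0 : F) - (0 : F) * x.2.1,
        x.1 * (y.1 * z.2.1 - z.1 * y.2.1) - (0 : F) * x.2.2.1) : F × F × F × F) =
      ((0 : F) + 0, (0 : F) + 0,
        ((0 : F) * z.2.1 - z.1 * (0 : F)) + (y.1 * (0 : F) - (0 : F) * y.2.1),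
        ((0 : F) * z.2.2.1 - z.1 * (x.1 * y.2.1 - y.1 * x.2.1)) +
          (y.1 * (x.1 * z.2.1 - z.1 * x.2.1) - (0 : F) * y.2.2.1))
    exact Prod.ext (by simp) (Prod.ext (by simp) (Prod.ext (by ring) (by ring)))

instance : LieAlgebra F (L43 F) :=
  { (inferInstance : Module F (L43 F)) with
    lie_smul := fun t x y => by
      show (((0 : F), (0 : F), x.1 * (t * y.2.1) - t * y.1 * x.2.1,
          x.1 * (t * y.2.2.1) - t * y.1 * x.2.2.1) : F × F × F × F) =
        (t * 0, t * 0, t * (x.1 * y.2.1 - y.1 * x.2.1), t * (x.1 * y.2.2.1 - y.1 * x.2.2.1))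
      exact Prod.ext (by simp) (Prod.ext (by simp) (Prod.ext (by ring) (by ring))) }

instance [Fintype F] : Fintype (L43 F) := inferInstanceAs (Fintype (F × F × F × F))

end L43

section CommDegProof

open Finset

variable {F : Type*} [Field F] [Fintype F]

instance [DecidableEq F] : DecidableEq (L43 F) := inferInstanceAs (DecidableEq (F × F × F × F))

omit [Fintype F] in
lemma L43.bracket_eq_zero_iff (x y : L43 F) :
    ⁅x, y⁆ = 0 ↔ x.1 * y.2.1 - y.1 * x.2.1 = 0 ∧ x.1 * y.2.2.1 - y.1 * x.2.2.1 = 0 := by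
  show L43.br x y = 0 ↔ _
  unfold L43.br
  constructor
  · intro h
    exact ⟨congrArg (fun t : F × F × F × F => t.2.2.1) h,
      congrArg (fun t : F × F × F × F => t.2.2.2) h⟩
  · rintro ⟨h1, h2⟩
    show ((0 : F), (0 : F), _, _) = ((0 : F), (0 : F), (0 : F), (0 : F))
    rw [h1, h2]

lemma L43.inner_card [DecidableEq F] (x : L43 F) :
    (Finset.univ.filter fun y : L43 F => ⁅x, y⁆ = 0).card
      = if x.1 ≠ 0 then Fintype.card F ^ 2
        else if x.2.1 = 0 ∧ x.2.2.1 = 0 then Fintype.card F ^ 4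
        else Fintype.card F ^ 3 := by
  split_ifs with h1 h2
  · -- x.1 ≠ 0 : solutions parametrized by (y₁, y₄)
    rw [show Fintype.card F ^ 2 = (Finset.univ : Finset (F × F)).card by
      simp [Finset.card_univ]; ring]
    refine Finset.card_nbij' (fun y : L43 F => (y.1, y.2.2.2))
      (fun p : F × F => (p.1, p.1 * x.2.1 / x.1, p.1 * x.2.2.1 / x.1, p.2))
      (fun a _ => Finset.mem_univ _) ?_ ?_ ?_
    · intro p _
      refine Finset.mem_coe.mpr ?_
      refine Finset.mem_filter.mpr ⟨Finset.mem_univ _, (L43.bracket_eq_zero_iff _ _).mpr ?_⟩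
      simp only [Finset.mem_coe, Finset.mem_filter, Finset.mem_univ, true_and, L43.bracket_eq_zero_iff]
      constructor <;> field_simp <;> ring
    · intro y hy
      simp only [Finset.mem_coe, Finset.mem_filter, Finset.mem_univ, true_and,
        L43.bracket_eq_zero_iff] at hy
      obtain ⟨e1, e2⟩ := hy
      have h21 : y.2.1 = y.1 * x.2.1 / x.1 := by
        field_simp; linear_combination e1
      have h221 : y.2.2.1 = y.1 * x.2.2.1 / x.1 := by
        field_simp; linear_combination e2
      exact Prod.ext rfl (Prod.ext h21.symm (Prod.ext h221.symm rfl))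
    · intro p _; rfl
  · -- x = (0,0,0,*) : everything commutes
    push_neg at h1
    have hall : (Finset.univ.filter fun y : L43 F => ⁅x, y⁆ = 0) = Finset.univ := by
      refine Finset.filter_true_of_mem fun y _ => ?_
      rw [L43.bracket_eq_zero_iff, h1, h2.1, h2.2]
      constructor <;> ring
    rw [hall, Finset.card_univ]
    show Fintype.card (F × F × F × F) = _
    simp [Fintype.card_prod]; ring
  · -- x.1 = 0, (x₂, x₃) ≠ (0,0) : solutions are y₁ = 0
    push_neg at h1
    rw [show Fintype.card F ^ 3 = (Finset.univ : Finset (F × F × F)).card by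
      simp [Finset.card_univ]; ring]
    refine Finset.card_nbij' (fun y : L43 F => y.2)
      (fun p : F × F × F => ((0 : F), p))
      (fun a _ => Finset.mem_univ _) ?_ ?_ ?_
    · intro p _
      refine Finset.mem_coe.mpr ?_
      refine Finset.mem_filter.mpr ⟨Finset.mem_univ _, (L43.bracket_eq_zero_iff _ _).mpr ?_⟩
      simp only [Finset.mem_coe, Finset.mem_filter, Finset.mem_univ, true_and,
        L43.bracket_eq_zero_iff, h1]
      constructor <;> ring
    · intro y hy
      simp only [Finset.mem_coe, Finset.mem_filter, Finset.mem_univ, true_and,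
        L43.bracket_eq_zero_iff, h1] at hy
      obtain ⟨e1, e2⟩ := hy
      have hy1 : y.1 = 0 := by
        rcases not_and_or.mp h2 with h | h
        · have hh : y.1 * x.2.1 = 0 := by linear_combination -e1
          rcases mul_eq_zero.mp hh with h' | h'
          · exact h'
          · exact absurd h' h
        · have hh : y.1 * x.2.2.1 = 0 := by linear_combination -e2
          rcases mul_eq_zero.mp hh with h' | h'
          · exact h'
          · exact absurd h' h
      exact Prod.ext hy1.symm rfl
    · intro p _; rfl

end CommDegProof

/-- The Lie algebra `L_{4,3}` over the finite field `F_q` (`q ≥ 2`) has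
commutativity degree `(2q² - 1)/q⁴`. -/
theorem stmt13 (q : ℕ) (hq : 2 ≤ q) (F : Type*) [Field F] [Fintype F]
    (hF : Fintype.card F = q) :
    commDeg (L43 F) = (2 * (q : ℚ) ^ 2 - 1) / (q : ℚ) ^ 4 := by
  letI : DecidableEq F := Classical.decEq F
  have hq2 : (2 : ℕ) ≤ q := hq
  have hqQ : (0 : ℚ) < (q : ℚ) := by exact_mod_cast Nat.lt_of_lt_of_le Nat.zero_lt_two hq
  have hq0 : (q : ℚ) ≠ 0 := ne_of_gt hqQ
  have hF4 : Fintype.card (L43 F) = q ^ 4 := by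
    show Fintype.card (F × F × F × F) = q ^ 4
    simp [hF]; ring
  -- the finsets
  set A : Finset (L43 F) := Finset.univ.filter (fun x : L43 F => x.1 ≠ 0) with hA
  set B0 : Finset (L43 F) := Finset.univ.filter (fun x : L43 F => ¬ x.1 ≠ 0) with hB0def
  set C : Finset (L43 F) := B0.filter (fun x : L43 F => x.2.1 = 0 ∧ x.2.2.1 = 0) with hCdef
  set B : Finset (L43 F) := B0.filter (fun x : L43 F => ¬ (x.2.1 = 0 ∧ x.2.2.1 = 0)) with hBdef
  have hB0 : B0.card = q ^ 3 := by
    rw [show q ^ 3 = (Finset.univ : Finset (F × F × F)).card by simp [hF]; ring]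
    refine Finset.card_nbij' (fun x : L43 F => x.2) (fun p : F × F × F => ((0 : F), p))
      (fun a _ => Finset.mem_univ _) ?_ ?_ ?_
    · intro p _; refine Finset.mem_coe.mpr ?_
      refine Finset.mem_filter.mpr ⟨Finset.mem_univ _, ?_⟩; simp [hB0def, Finset.mem_coe]
    · intro x hx
      simp only [hB0def, Finset.mem_coe, Finset.mem_filter, Finset.mem_univ, true_and, not_not] at hx
      exact Prod.ext hx.symm rfl
    · intro p _; rfl
  have hC : C.card = q := by
    rw [← hF]
    refine Finset.card_nbij' (fun x : L43 F => x.2.2.2)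
      (fun d : F => ((0 : F), (0 : F), (0 : F), d))
      (fun a _ => Finset.mem_univ _) ?_ ?_ ?_
    · intro d _; refine Finset.mem_coe.mpr ?_
      refine Finset.mem_filter.mpr ⟨Finset.mem_filter.mpr ⟨Finset.mem_univ _, ?_⟩, ?_⟩ <;>
        simp [hCdef, hB0def, Finset.mem_coe]
    · intro x hx
      simp only [hCdef, hB0def, Finset.mem_coe, Finset.mem_filter, Finset.mem_univ, true_and, not_not] at hx
      obtain ⟨h1, h2, h3⟩ := hx
      exact Prod.ext h1.symm (Prod.ext h2.symm (Prod.ext h3.symm rfl))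
    · intro d _; rfl
  have hAq : (A.card : ℚ) = (q : ℚ) ^ 4 - (q : ℚ) ^ 3 := by
    have h := Finset.card_filter_add_card_filter_not
      (s := (Finset.univ : Finset (L43 F))) (p := fun x : L43 F => x.1 ≠ 0)
    rw [← hA, ← hB0def, hB0, Finset.card_univ, hF4] at h
    have := congrArg (fun n : ℕ => (n : ℚ)) h
    push_cast at this
    linarith
  have hBq : (B.card : ℚ) = (q : ℚ) ^ 3 - (q : ℚ) := by
    have h := Finset.card_filter_add_card_filter_not
      (s := B0) (p := fun x : L43 F => x.2.1 = 0 ∧ x.2.2.1 = 0)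
    rw [← hCdef, ← hBdef, hC, hB0] at h
    have := congrArg (fun n : ℕ => (n : ℚ)) h
    push_cast at this
    linarith
  -- counting the commuting pairs
  have hsum : (Finset.univ.filter fun p : L43 F × L43 F => ⁅p.1, p.2⁆ = 0).card
      = ∑ x : L43 F, (Finset.univ.filter fun y : L43 F => ⁅x, y⁆ = 0).card := by
    rw [Finset.card_filter, Fintype.sum_prod_type]
    exact Finset.sum_congr rfl fun x _ => (Finset.card_filter _ _).symm
  have hsum2 : ∑ x : L43 F, (Finset.univ.filter fun y : L43 F => ⁅x, y⁆ = 0).card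
      = ∑ x : L43 F, (if x.1 ≠ 0 then q ^ 2 else
          if x.2.1 = 0 ∧ x.2.2.1 = 0 then q ^ 4 else q ^ 3) := by
    refine Finset.sum_congr rfl fun x _ => ?_
    rw [L43.inner_card x, hF]
  have hsplit : ∑ x : L43 F, (if x.1 ≠ 0 then q ^ 2 else
          if x.2.1 = 0 ∧ x.2.2.1 = 0 then q ^ 4 else q ^ 3)
      = A.card * q ^ 2 + (C.card * q ^ 4 + B.card * q ^ 3) := by
    rw [← Finset.sum_filter_add_sum_filter_not Finset.univ (fun x : L43 F => x.1 ≠ 0)]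
    congr 1
    · rw [← hA]
      rw [Finset.sum_congr rfl (fun x hx => ?_eq), Finset.sum_const, smul_eq_mul]
      case _eq =>
        simp only [hA, Finset.mem_filter] at hx
        rw [if_pos hx.2]
    · rw [← hB0def,
        ← Finset.sum_filter_add_sum_filter_not B0 (fun x : L43 F => x.2.1 = 0 ∧ x.2.2.1 = 0)]
      congr 1
      · rw [← hCdef]
        rw [Finset.sum_congr rfl (fun x hx => ?_eq2), Finset.sum_const, smul_eq_mul]
        case _eq2 =>
          simp only [hCdef, hB0def, Finset.mem_filter, Finset.mem_univ, true_and] at hx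
          rw [if_neg hx.1, if_pos hx.2]
      · rw [← hBdef]
        rw [Finset.sum_congr rfl (fun x hx => ?_eq3), Finset.sum_const, smul_eq_mul]
        case _eq3 =>
          simp only [hBdef, hB0def, Finset.mem_filter, Finset.mem_univ, true_and] at hx
          rw [if_neg hx.1, if_neg hx.2]
  have hcount : (Nat.card {p : L43 F × L43 F // ⁅p.1, p.2⁆ = 0} : ℚ)
      = ((q : ℚ) ^ 4 - q ^ 3) * q ^ 2 + ((q : ℚ) * q ^ 4 + ((q : ℚ) ^ 3 - q) * q ^ 3) := by
    rw [Nat.card_eq_fintype_card, Fintype.card_subtype, hsum, hsum2, hsplit]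
    push_cast [hAq, hBq, hC]
    ring
  rw [commDeg, hcount, Nat.card_eq_fintype_card, hF4]
  push_cast
  field_simp
  ring
end
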